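/- arXiv:2504.00288 — 9 statements merged into one kernel-verified Lean document; each statement's English description precedes it below -/
import Mathlib

section
/- If G and H are connected graphs with |V(G)| ≥ 2 and |V(H)| ≥ 2, and c is an exact r-coloring of G □ H with r ≥ 3 that contains no rainbow 3-term arithmetic progression, then there is a color that appears in every copy of G (i.e., a color appearing in the fiber G × {w} for every vertex w of H). -/
open SimpleGraph

section Infra
variable {α β : Type*}

private lemma walk_dist_getVert_le {G : SimpleGraph α} (hG : G.Connected) {u v : α}
    (w : G.Walk u v) : ∀ i j : ℕ, i ≤ j → j ≤ w.length →
    G.dist (w.getVert i) (w.getVert j) ≤ j - i := by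
  intro i j
  induction j with
  | zero => intro hij _; interval_cases i; simp
  | succ j ih =>
    intro hij hj
    rcases Nat.eq_or_lt_of_le hij with rfl | hlt
    · simp
    · have h1 : G.dist (w.getVert i) (w.getVert j) ≤ j - i := ih (by omega) (by omega)
      have h2 : G.dist (w.getVert j) (w.getVert (j+1)) = 1 :=
        dist_eq_one_iff_adj.mpr (w.adj_getVert_succ (by omega))
      have h3 := hG.dist_triangle (u := w.getVert i) (v := w.getVert j) (w := w.getVert (j+1))
      omega

private lemma exists_chain {G : SimpleGraph α} (hG : G.Connected) (u p : α) :
    ∃ t : ℕ → α, t 0 = u ∧ t (G.dist u p) = p ∧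
      ∀ i j, i ≤ j → j ≤ G.dist u p → G.dist (t i) (t j) = j - i := by
  obtain ⟨w, hw⟩ := hG.exists_walk_length_eq_dist u p
  refine ⟨w.getVert, w.getVert_zero, by rw [← hw]; exact w.getVert_length, ?_⟩
  intro i j hij hj
  have hle : G.dist (w.getVert i) (w.getVert j) ≤ j - i :=
    walk_dist_getVert_le hG w i j hij (by omega)
  have h0i : G.dist u (w.getVert i) ≤ i := by
    have := walk_dist_getVert_le hG w 0 i (by omega) (by omega)
    rwa [w.getVert_zero] at this
  have hjp : G.dist (w.getVert j) p ≤ w.length - j := by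
    have := walk_dist_getVert_le hG w j w.length (by omega) le_rfl
    rwa [w.getVert_length] at this
  have t1 := hG.dist_triangle (u := u) (v := w.getVert i) (w := w.getVert j)
  have t2 := hG.dist_triangle (u := u) (v := w.getVert j) (w := p)
  omega

private lemma exists_boundary {H : SimpleGraph β} (S : Set β) :
    ∀ {a b : β}, H.Walk a b → a ∈ S → b ∉ S → ∃ x y, H.Adj x y ∧ x ∈ S ∧ y ∉ S := by
  intro a b w
  induction w with
  | nil => intro ha hb; exact absurd ha hb
  | @cons a v b h p ih =>
    intro ha hb
    by_cases hv : v ∈ S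
    · exact ih hv hb
    · exact ⟨a, v, h, ha, hv⟩

private lemma exists_adj {G : SimpleGraph α} [Fintype α] (hG : G.Connected)
    (hα : 2 ≤ Fintype.card α) (u : α) : ∃ m, G.Adj u m := by
  obtain ⟨v, hv⟩ := Fintype.exists_ne_of_one_lt_card (by omega) u
  have hd : 0 < G.dist u v := hG.pos_dist_of_ne (Ne.symm hv)
  obtain ⟨w, hw⟩ := hG.exists_walk_length_eq_dist u v
  cases w with
  | nil => simp at hd
  | cons h p => exact ⟨_, h⟩

private lemma boxProd_dist_eq {G : SimpleGraph α} {H : SimpleGraph β}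
    (hG : G.Connected) (hH : H.Connected) (x y : α × β) :
    (G □ H).dist x y = G.dist x.1 y.1 + H.dist x.2 y.2 := by
  obtain ⟨x1, x2⟩ := x
  obtain ⟨y1, y2⟩ := y
  apply le_antisymm
  · obtain ⟨p, hp⟩ := hG.exists_walk_length_eq_dist x1 y1
    obtain ⟨q, hq⟩ := hH.exists_walk_length_eq_dist x2 y2
    have hd := dist_le ((p.boxProdLeft H x2).append (q.boxProdRight G y1))
    have hlen : ((p.boxProdLeft H x2).append (q.boxProdRight G y1)).length
        = G.dist x1 y1 + H.dist x2 y2 := by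
      have e1 : (p.boxProdLeft H x2).length = p.length := Walk.length_map ..
      have e2 : (q.boxProdRight G y1).length = q.length := Walk.length_map ..
      rw [Walk.length_append, e1, e2, hp, hq]
    rw [hlen] at hd
    exact hd
  · obtain ⟨w, hw⟩ := ((hG.boxProd hH).exists_walk_length_eq_dist (x1, x2) (y1, y2))
    rw [← hw]
    clear hw
    generalize (x1, x2) = x at w ⊢
    generalize (y1, y2) = y at w ⊢
    induction w with
    | nil => simp
    | @cons x m y h p ih =>
      rcases boxProd_adj.mp h with ⟨ha, h2⟩ | ⟨hb, h1⟩
      · have e1 : G.dist x.1 m.1 = 1 := dist_eq_one_iff_adj.mpr ha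
        have t1 := hG.dist_triangle (u := x.1) (v := m.1) (w := y.1)
        have e2 : H.dist x.2 y.2 = H.dist m.2 y.2 := by rw [h2]
        simp only [Walk.length_cons]
        omega
      · have e1 : H.dist x.2 m.2 = 1 := dist_eq_one_iff_adj.mpr hb
        have t1 := hH.dist_triangle (u := x.2) (v := m.2) (w := y.2)
        have e2 : G.dist x.1 y.1 = G.dist m.1 y.1 := by rw [h1]
        simp only [Walk.length_cons]
        omega

end Infra

/-- If `G` and `H` are connected graphs on at least two vertices each and `c` is a surjective
`r`-coloring (`r ≥ 3`) of `G □ H` with no rainbow 3-term arithmetic progression, then some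
color appears in every copy `G × {w}` of `G`. -/
theorem exists_color_in_every_copy {α β : Type*} [Fintype α] [Fintype β]
    (G : SimpleGraph α) (H : SimpleGraph β) (hG : G.Connected) (hH : H.Connected)
    (hα : 2 ≤ Fintype.card α) (hβ : 2 ≤ Fintype.card β)
    (r : ℕ) (hr : 3 ≤ r) (c : α × β → Fin r) (hc : Function.Surjective c)
    (hrb : ¬ ∃ x y z : α × β, (G □ H).dist x y = (G □ H).dist y z ∧
        c x ≠ c y ∧ c y ≠ c z ∧ c x ≠ c z) :
    ∃ k : Fin r, ∀ w : β, ∃ u : α, c (u, w) = k := by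
  by_contra hcon
  push_neg at hcon
  -- the basic "no rainbow" principle, in coordinates
  have ND : ∀ (x1 : α) (x2 : β) (y1 : α) (y2 : β) (z1 : α) (z2 : β),
      G.dist x1 y1 + H.dist x2 y2 = G.dist y1 z1 + H.dist y2 z2 →
      c (x1, x2) ≠ c (y1, y2) → c (y1, y2) ≠ c (z1, z2) → c (x1, x2) ≠ c (z1, z2) → False := by
    intro x1 x2 y1 y2 z1 z2 hdist h1 h2 h3
    exact hrb ⟨(x1, x2), (y1, y2), (z1, z2), by
      rw [boxProd_dist_eq hG hH, boxProd_dist_eq hG hH]; exact hdist, h1, h2, h3⟩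
  -- KEY: for every colour χ there is a χ-vertex H-adjacent to a monochromatic row missing χ
  have key : ∀ χ : Fin r, ∃ (u : α) (w w' : β), H.Adj w w' ∧ c (u, w) = χ ∧
      (∀ a, c (a, w') = c (u, w')) ∧ c (u, w') ≠ χ := by
    intro χ
    obtain ⟨⟨a1, q1⟩, hv⟩ := hc χ
    obtain ⟨q0, hq0⟩ := hcon χ
    obtain ⟨wk⟩ := hH.preconnected q1 q0
    obtain ⟨w, w', hadj, hwS, hw'S⟩ :=
      exists_boundary {q : β | ∃ a, c (a, q) = χ} wk ⟨a1, hv⟩ (by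
        intro hmem; obtain ⟨a, ha⟩ := hmem; exact hq0 a ha)
    obtain ⟨u, hu⟩ := hwS
    have hw' : ∀ a, c (a, w') ≠ χ := fun a ha => hw'S ⟨a, ha⟩
    refine ⟨u, w, w', hadj, hu, ?_, hw' u⟩
    by_contra hnm
    push_neg at hnm
    obtain ⟨a₀, ha₀⟩ := hnm
    -- notation
    have hbχ : c (u, w') ≠ χ := hw' u
    have hww' : H.dist w w' = 1 := dist_eq_one_iff_adj.mpr hadj
    have hw'w : H.dist w' w = 1 := by rw [SimpleGraph.dist_comm]; exact hww'
    -- choose p : nearest non-b vertex of the row w'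
    obtain ⟨p, hpmem, hpmin⟩ := Finset.exists_min_image
      (Finset.univ.filter fun s => c (s, w') ≠ c (u, w')) (fun s => G.dist u s)
      ⟨a₀, by simp [ha₀]⟩
    simp only [Finset.mem_filter, Finset.mem_univ, true_and] at hpmem
    have hbelow : ∀ s : α, G.dist u s < G.dist u p → c (s, w') = c (u, w') := by
      intro s hs
      by_contra hcs
      have := hpmin s (by simp [hcs])
      omega
    obtain ⟨t, ht0, htg, htd⟩ := exists_chain hG u p
    set g := G.dist u p with hgdef
    have hγχ : c (p, w') ≠ χ := hw' p
    have hg1 : 1 ≤ g := by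
      by_contra hg
      have : u = p := (hG.dist_eq_zero_iff).mp (by omega)
      rw [← this] at hpmem
      exact hpmem rfl
    have hgu : G.dist p u = g := by rw [SimpleGraph.dist_comm]
    by_cases hg2 : 2 ≤ g
    · -- main case : g ≥ 2
      have htu : ∀ j, j ≤ g → G.dist u (t j) = j := by
        intro j hj
        have := htd 0 j (by omega) hj
        rw [ht0] at this
        simpa using this
      have htp : ∀ j, j ≤ g → G.dist (t j) p = g - j := by
        intro j hj
        have := htd j g hj le_rfl
        rwa [htg] at this
      -- choose z : nearest vertex with colour outside {χ, b}
      obtain ⟨⟨z1, z2⟩, hzmem, hzmin⟩ := Finset.exists_min_image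
        (Finset.univ.filter fun v : α × β => c v ≠ χ ∧ c v ≠ c (u, w'))
        (fun v => G.dist u v.1 + H.dist w v.2) ⟨(p, w'), by simp [hγχ, hpmem]⟩
      simp only [Finset.mem_filter, Finset.mem_univ, true_and] at hzmem
      obtain ⟨hz1, hz2⟩ := hzmem
      set D := G.dist u z1 + H.dist w z2 with hDdef
      have hball : ∀ v1 v2, G.dist u v1 + H.dist w v2 < D → c (v1, v2) = χ ∨ c (v1, v2) = c (u, w') := by
        intro v1 v2 hv
        by_contra hcv
        push_neg at hcv
        have := hzmin (v1, v2) (by simp [hcv.1, hcv.2])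
        simp only at this
        omega
      have hDle : D ≤ g + 1 := by
        have := hzmin (p, w') (by simp [hγχ, hpmem])
        simp only at this
        omega
      have hzu : G.dist z1 u = G.dist u z1 := SimpleGraph.dist_comm ..
      have hzw : H.dist z2 w = H.dist w z2 := SimpleGraph.dist_comm ..
      have hD2 : 2 ≤ D := by
        by_contra hD
        push_neg at hD
        rcases (by omega : D = 0 ∨ D = 1) with h0 | h1
        · have hz1u : G.dist u z1 = 0 := by omega
          have hz2w : H.dist w z2 = 0 := by omega
          have e1 : z1 = u := (hG.dist_eq_zero_iff).mp hz1u |>.symm ▸ rfl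
          have e1 : u = z1 := (hG.dist_eq_zero_iff).mp hz1u
          have e2 : w = z2 := (hH.dist_eq_zero_iff).mp hz2w
          rw [← e1, ← e2, hu] at hz1
          exact hz1 rfl
        · refine ND z1 z2 u w u w' ?_ ?_ ?_ hz2
          · have : G.dist u u = 0 := by simp
            omega
          · rw [hu]; exact hz1
          · rw [hu]; exact fun h => hbχ h.symm
      -- D = g + 1
      have hgD : D = g + 1 := by
        have hle' : g ≤ D - 1 := by
          have hDg : D - 1 ≤ g := by omega
          have hsd : G.dist u (t (D-1)) = D - 1 := htu (D-1) hDg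
          have hsphere : c (t (D-1), w') = c (z1, z2) := by
            by_contra hcs
            refine ND (t (D-1)) w' u w z1 z2 ?_ ?_ ?_ hcs
            · have e1 : G.dist (t (D-1)) u = D - 1 := by rw [SimpleGraph.dist_comm]; exact hsd
              omega
            · rw [hu]; exact hw' (t (D-1))
            · rw [hu]; exact fun h => hz1 h.symm
          have : c (t (D-1), w') ≠ c (u, w') := by rw [hsphere]; exact hz2
          have := hpmin (t (D-1)) (by simp [this])
          omega
        omega
      have hγz : c (p, w') = c (z1, z2) := by
        by_contra hcs
        refine ND p w' u w z1 z2 ?_ ?_ ?_ hcs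
        · omega
        · rw [hu]; exact hγχ
        · rw [hu]; exact fun h => hz1 h.symm
      -- row w entries along the geodesic are coloured b
      have hrowW : ∀ j, 1 ≤ j → j ≤ g → c (t j, w) = c (u, w') := by
        intro j hj1 hjg
        have hin : c (t j, w) = χ ∨ c (t j, w) = c (u, w') := by
          apply hball
          have e1 : G.dist u (t j) = j := htu j hjg
          have e2 : H.dist w w = 0 := by simp
          omega
        rcases hin with hχ | hb
        · exfalso
          refine ND (t j) w p w' (t (j-1)) w' ?_ ?_ ?_ ?_
          · have e1 : G.dist (t j) p = g - j := htp j hjg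
            have e2 : G.dist p (t (j-1)) = g - (j-1) := by
              rw [SimpleGraph.dist_comm]; exact htp (j-1) (by omega)
            have e3 : H.dist w' w' = 0 := by simp
            omega
          · rw [hχ]; exact fun h => hγχ h.symm
          · rw [hbelow (t (j-1)) (by rw [htu (j-1) (by omega)]; omega)]
            exact hpmem
          · rw [hχ, hbelow (t (j-1)) (by rw [htu (j-1) (by omega)]; omega)]
            exact fun h => hbχ h.symm
        · exact hb
      -- a row with no b at all
      obtain ⟨qb, hqb⟩ := hcon (c (u, w'))
      have hτt1 : H.dist w qb ≤ H.dist w w' + H.dist w' qb := hH.dist_triangle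
      have hτt2 : H.dist w' qb ≤ H.dist w' w + H.dist w qb := hH.dist_triangle
      have hcq1 : H.dist qb w = H.dist w qb := SimpleGraph.dist_comm ..
      have hcq2 : H.dist qb w' = H.dist w' qb := SimpleGraph.dist_comm ..
      -- colour of (t (g-1), qb) is γ = c(p,w')
      have hcol : c (t (g-1), qb) = c (p, w') := by
        have hmem : c (t (g-1), qb) = c (u, w') ∨ c (t (g-1), qb) = c (p, w') := by
          by_contra hcs
          push_neg at hcs
          refine ND (t (g-2)) w' (t (g-1)) qb p w' ?_ ?_ ?_ ?_
          · have e1 : G.dist (t (g-2)) (t (g-1)) = 1 := by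
              have := htd (g-2) (g-1) (by omega) (by omega); omega
            have e2 : G.dist (t (g-1)) p = 1 := by
              have := htp (g-1) (by omega); omega
            omega
          · rw [hbelow (t (g-2)) (by rw [htu (g-2) (by omega)]; omega)]
            exact fun h => hcs.1 h.symm
          · exact hcs.2
          · rw [hbelow (t (g-2)) (by rw [htu (g-2) (by omega)]; omega)]
            exact Ne.symm hpmem
        rcases hmem with hb | hγ
        · exact absurd hb (hqb _)
        · exact hγ
      -- two-step propagation along the geodesic inside row qb
      have chain2 : ∀ j, j + 2 ≤ g → c (t j, qb) = c (t (j+2), qb) := by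
        intro j hj
        by_contra hne
        refine ND (t j) qb (t (j+1)) w' (t (j+2)) qb ?_ ?_ ?_ hne
        · have e1 : G.dist (t j) (t (j+1)) = 1 := by
            have := htd j (j+1) (by omega) (by omega); omega
          have e2 : G.dist (t (j+1)) (t (j+2)) = 1 := by
            have := htd (j+1) (j+2) (by omega) (by omega); omega
          omega
        · rw [hbelow (t (j+1)) (by rw [htu (j+1) (by omega)]; omega)]
          exact hqb _
        · rw [hbelow (t (j+1)) (by rw [htu (j+1) (by omega)]; omega)]
          exact fun h => (hqb _) h.symm
      have hdown : ∀ m j, j + 2*m + 1 = g → c (t j, qb) = c (p, w') := by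
        intro m
        induction m with
        | zero =>
          intro j hj
          have : j = g - 1 := by omega
          rw [this]
          exact hcol
        | succ m ih =>
          intro j hj
          rw [chain2 j (by omega)]
          exact ih (j+2) (by omega)
      -- final rainbows
      rcases Nat.even_or_odd g with he | ho
      · -- g even : centre (t 1, qb), endpoints x and (t 2, w)
        obtain ⟨k, hk⟩ := he
        have hγ1 : c (t 1, qb) = c (p, w') := hdown (k-1) 1 (by omega)
        refine ND u w (t 1) qb (t 2) w ?_ ?_ ?_ ?_
        · have e1 : G.dist u (t 1) = 1 := htu 1 (by omega)
          have e2 : G.dist (t 1) (t 2) = 1 := by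
            have := htd 1 2 (by omega) (by omega); omega
          omega
        · rw [hu, hγ1]; exact fun h => hγχ h.symm
        · rw [hγ1, hrowW 2 (by omega) (by omega)]
          exact hpmem
        · rw [hu, hrowW 2 (by omega) (by omega)]
          exact fun h => hbχ h.symm
      · -- g odd (hence ≥ 3)
        obtain ⟨k, hk⟩ := ho
        have hk1 : 1 ≤ k := by omega
        have hγ0 : c (t 0, qb) = c (p, w') := hdown k 0 (by omega)
        have hγ2 : c (t 2, qb) = c (p, w') := hdown (k-1) 2 (by omega)
        have htri : H.dist w qb = H.dist w' qb ∨ H.dist w qb = H.dist w' qb + 1 ∨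
            H.dist w' qb = H.dist w qb + 1 := by omega
        rcases htri with h1 | h2 | h3
        · refine ND u w u qb u w' ?_ ?_ ?_ (by rw [hu]; exact fun h => hbχ h.symm)
          · have e0 : G.dist u u = 0 := by simp
            rw [ht0] at hγ0
            omega
          · rw [hu, ht0] at *
            rw [hγ0]; exact fun h => hγχ h.symm
          · rw [ht0] at hγ0
            rw [hγ0]; exact hpmem
        · refine ND u w u qb (t 1) w' ?_ ?_ ?_ ?_
          · have e0 : G.dist u u = 0 := by simp
            have e1 : G.dist u (t 1) = 1 := htu 1 (by omega)
            omega
          · rw [ht0] at hγ0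
            rw [hu, hγ0]; exact fun h => hγχ h.symm
          · rw [ht0] at hγ0
            rw [hγ0, hbelow (t 1) (by rw [htu 1 (by omega)]; omega)]
            exact hpmem
          · rw [hu, hbelow (t 1) (by rw [htu 1 (by omega)]; omega)]
            exact fun h => hbχ h.symm
        · refine ND u w (t 2) qb (t 1) w' ?_ ?_ ?_ ?_
          · have e1 : G.dist u (t 2) = 2 := htu 2 (by omega)
            have e2 : G.dist (t 2) (t 1) = 1 := by
              rw [SimpleGraph.dist_comm]
              have := htd 1 2 (by omega) (by omega); omega
            omega
          · rw [hu, hγ2]; exact fun h => hγχ h.symm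
          · rw [hγ2, hbelow (t 1) (by rw [htu 1 (by omega)]; omega)]
            exact hpmem
          · rw [hu, hbelow (t 1) (by rw [htu 1 (by omega)]; omega)]
            exact fun h => hbχ h.symm
    · -- g = 1
      have hg : g = 1 := by omega
      refine ND p w' u w' u w ?_ hpmem ?_ ?_
      · have e1 : H.dist w' w' = 0 := by simp
        have e2 : G.dist u u = 0 := by simp
        omega
      · rw [hu]; exact hbχ
      · rw [hu]; exact hγχ
  -- ASSEMBLY ------------------------------------------------------------
  choose uf wf w'f hadjf huf hmonof hbf using key
  set bf : Fin r → Fin r := fun χ => c (uf χ, w'f χ) with hbfdef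
  have hbne : ∀ χ, bf χ ≠ χ := hbf
  -- two distinct values of bf
  have h2 : ∃ χ₁ χ₂, bf χ₁ ≠ bf χ₂ := by
    by_contra h
    push_neg at h
    exact hbne (bf ⟨0, by omega⟩) (h _ _)
  obtain ⟨χ₁, χ₂, hA⟩ := h2
  -- a colour ψ different from both bf χ₁ and bf χ₂
  have hψex : ∃ ψ : Fin r, ψ ≠ bf χ₁ ∧ ψ ≠ bf χ₂ := by
    by_contra h
    push_neg at h
    have hsub : (Finset.univ : Finset (Fin r)) ⊆ {bf χ₁, bf χ₂} := by
      intro ψ _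
      rcases eq_or_ne ψ (bf χ₁) with h1 | h1
      · simp [h1]
      · simp [h ψ h1]
    have hcard := Finset.card_le_card hsub
    have : ({bf χ₁, bf χ₂} : Finset (Fin r)).card ≤ 2 :=
      (Finset.card_insert_le _ _).trans (by simp)
    simp only [Finset.card_univ, Fintype.card_fin] at hcard
    omega
  obtain ⟨ψ, hψ1, hψ2⟩ := hψex
  -- the final rainbow, given a second monochromatic row
  have final : ∀ φ : Fin r, bf φ ≠ bf ψ → bf φ ≠ ψ → False := by
    intro φ hBA hBψ
    have hab : w'f ψ ≠ w'f φ := by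
      intro h
      apply hBA
      rw [hbfdef]
      simp only
      rw [← hmonof φ (uf ψ), ← h, hmonof ψ (uf ψ)]
    have hq : c (uf ψ, wf ψ) = ψ := huf ψ
    have hqa : H.dist (wf ψ) (w'f ψ) = 1 := dist_eq_one_iff_adj.mpr (hadjf ψ)
    have hτ1 : 1 ≤ H.dist (w'f ψ) (w'f φ) := hH.pos_dist_of_ne hab
    have htr1 := hH.dist_triangle (u := wf ψ) (v := w'f ψ) (w := w'f φ)
    have htr2 := hH.dist_triangle (u := w'f ψ) (v := wf ψ) (w := w'f φ)
    have hcm1 : H.dist (w'f ψ) (wf ψ) = 1 := by rw [SimpleGraph.dist_comm]; exact hqa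
    obtain ⟨s, hs⟩ := exists_adj hG hα (uf ψ)
    have hds : G.dist (uf ψ) s = 1 := dist_eq_one_iff_adj.mpr hs
    have hmA : ∀ a, c (a, w'f ψ) = bf ψ := fun a => hmonof ψ a
    have hmB : ∀ a, c (a, w'f φ) = bf φ := fun a => hmonof φ a
    have hcψA : ∀ a b : α, c (uf ψ, wf ψ) ≠ c (a, w'f φ) ∧ c (a, w'f φ) ≠ c (b, w'f ψ) ∧
        c (uf ψ, wf ψ) ≠ c (b, w'f ψ) := by
      intro a b
      rw [hq, hmA b, hmB a]
      exact ⟨fun h => hBψ h.symm, hBA, Ne.symm (hbne ψ)⟩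
    have htri : H.dist (wf ψ) (w'f φ) = H.dist (w'f ψ) (w'f φ) ∨
        H.dist (wf ψ) (w'f φ) = H.dist (w'f ψ) (w'f φ) + 1 ∨
        H.dist (w'f ψ) (w'f φ) = H.dist (wf ψ) (w'f φ) + 1 := by omega
    have hBA' : H.dist (w'f φ) (w'f ψ) = H.dist (w'f ψ) (w'f φ) := SimpleGraph.dist_comm ..
    rcases htri with h1 | h2 | h3
    · obtain ⟨hx1, hx2, hx3⟩ := hcψA (uf ψ) (uf ψ)
      refine ND (uf ψ) (wf ψ) (uf ψ) (w'f φ) (uf ψ) (w'f ψ) ?_ hx1 hx2 hx3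
      · have e0 : G.dist (uf ψ) (uf ψ) = 0 := by simp
        omega
    · obtain ⟨hx1, hx2, hx3⟩ := hcψA (uf ψ) s
      refine ND (uf ψ) (wf ψ) (uf ψ) (w'f φ) s (w'f ψ) ?_ hx1 hx2 hx3
      · have e0 : G.dist (uf ψ) (uf ψ) = 0 := by simp
        omega
    · obtain ⟨hx1, hx2, hx3⟩ := hcψA s s
      refine ND (uf ψ) (wf ψ) s (w'f φ) s (w'f ψ) ?_ hx1 hx2 hx3
      · have e0 : G.dist s s = 0 := by simp
        omega
  -- choose φ appropriately
  by_cases hAA : bf ψ = bf χ₁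
  · exact final χ₂ (by rw [← hAA] at hA; exact fun h => hA h.symm) (fun h => hψ2 h.symm)
  · exact final χ₁ (fun h => hAA h.symm) (fun h => hψ1 h.symm)
end

section
/- If G is a connected graph on at least three vertices with an exact r-coloring c where r ≥ 3, then G contains a subgraph G' receiving at least three colors where G' is either an isometric path or a triangle C₃. -/
open SimpleGraph

section Aux

variable {V : Type*} {G : SimpleGraph V}

private lemma walk_dist_getVert_le_s4 (hG : G.Connected) {u v : V} (p : G.Walk u v)
    (i k : ℕ) : G.dist (p.getVert i) (p.getVert (i + k)) ≤ k := by
  induction k with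
  | zero => simp
  | succ k ih =>
      have h1 : G.dist (p.getVert (i + k)) (p.getVert (i + k + 1)) ≤ 1 := by
        by_cases h : i + k < p.length
        · exact le_of_eq (dist_eq_one_iff_adj.mpr (p.adj_getVert_succ h))
        · have h2 : p.getVert (i + k) = v := p.getVert_of_length_le (by omega)
          have h3 : p.getVert (i + k + 1) = v := p.getVert_of_length_le (by omega)
          rw [h2, h3]
          simp [SimpleGraph.dist_self]
      calc G.dist (p.getVert i) (p.getVert (i + (k + 1)))
          ≤ G.dist (p.getVert i) (p.getVert (i + k)) +
            G.dist (p.getVert (i + k)) (p.getVert (i + k + 1)) := by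
              have := hG.dist_triangle (u := p.getVert i) (v := p.getVert (i + k))
                (w := p.getVert (i + k + 1))
              simpa [← add_assoc] using this
        _ ≤ k + 1 := by omega

private lemma walk_dist_getVert_le' (hG : G.Connected) {u v : V} (p : G.Walk u v)
    {i j : ℕ} (hij : i ≤ j) : G.dist (p.getVert i) (p.getVert j) ≤ j - i := by
  have := walk_dist_getVert_le_s4 hG p i (j - i)
  rwa [Nat.add_sub_cancel' hij] at this

/-- On a geodesic walk, the distance between the `i`-th and `j`-th vertices is `j - i`. -/
private lemma geodesic_getVert_dist (hG : G.Connected) {u v : V} (p : G.Walk u v)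
    (hp : p.length = G.dist u v) {i j : ℕ} (hij : i ≤ j) (hj : j ≤ p.length) :
    G.dist (p.getVert i) (p.getVert j) = j - i := by
  have hle : G.dist (p.getVert i) (p.getVert j) ≤ j - i := walk_dist_getVert_le' hG p hij
  have h0 : G.dist u (p.getVert i) ≤ i := by
    have := walk_dist_getVert_le' hG p (Nat.zero_le i)
    simpa using this
  have h1 : G.dist (p.getVert j) v ≤ p.length - j := by
    have := walk_dist_getVert_le' hG p hj
    simpa [p.getVert_length] using this
  have h2 : G.dist u v ≤ G.dist u (p.getVert i) + G.dist (p.getVert i) (p.getVert j) +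
      G.dist (p.getVert j) v := by
    have t1 := hG.dist_triangle (u := u) (v := p.getVert i) (w := p.getVert j)
    have t2 := hG.dist_triangle (u := u) (v := p.getVert j) (w := v)
    omega
  omega

private lemma exists_bichromatic_edge {α : Type*} (c : V → α) :
    ∀ {u v : V} (p : G.Walk u v), c u ≠ c v → ∃ a b, G.Adj a b ∧ c a ≠ c b := by
  intro u v p
  induction p with
  | nil => intro h; exact absurd rfl h
  | @cons u x v h q ih =>
      intro hne
      by_cases hcc : c u = c x
      · exact ih (fun he => hne (hcc.trans he))
      · exact ⟨u, x, h, hcc⟩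

end Aux

/-- If `G` is a connected graph on at least three vertices with a surjective `r`-coloring,
`r ≥ 3`, then `G` contains either a triangle receiving three distinct colors or an isometric
path (a sequence of vertices whose pairwise graph distances equal index distances) receiving
at least three distinct colors. -/
theorem isometric_path_or_triangle {V : Type*} [Fintype V]
    (G : SimpleGraph V) (hG : G.Connected) (h3 : 3 ≤ Fintype.card V)
    (r : ℕ) (hr : 3 ≤ r) (c : V → Fin r) (hc : Function.Surjective c) :
    (∃ x y z : V, G.Adj x y ∧ G.Adj y z ∧ G.Adj x z ∧
        c x ≠ c y ∧ c y ≠ c z ∧ c x ≠ c z) ∨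
    (∃ (n : ℕ) (f : Fin (n + 1) → V),
        (∀ i j : Fin (n + 1), G.dist (f i) (f j) = ((i : ℤ) - (j : ℤ)).natAbs) ∧
        ∃ i j k : Fin (n + 1), c (f i) ≠ c (f j) ∧ c (f j) ≠ c (f k) ∧ c (f i) ≠ c (f k)) := by
  by_contra hcon
  push_neg at hcon
  obtain ⟨hL, hR⟩ := hcon
  -- Fact A: on any geodesic walk, no three vertices have pairwise distinct colors.
  have factA : ∀ (u v : V) (p : G.Walk u v), p.length = G.dist u v →
      ∀ i j k : ℕ, i ≤ p.length → j ≤ p.length → k ≤ p.length →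
      c (p.getVert i) ≠ c (p.getVert j) → c (p.getVert j) ≠ c (p.getVert k) →
      c (p.getVert i) = c (p.getVert k) := by
    intro u v p hp i j k hi hj hk hij hjk
    set n := p.length with hn
    have hdist : ∀ a b : Fin (n + 1),
        G.dist (p.getVert a) (p.getVert b) = ((a : ℤ) - (b : ℤ)).natAbs := by
      intro a b
      have ha : (a : ℕ) ≤ n := Nat.lt_succ_iff.mp a.isLt
      have hb : (b : ℕ) ≤ n := Nat.lt_succ_iff.mp b.isLt
      rcases le_total (a : ℕ) (b : ℕ) with h | h
      · have := geodesic_getVert_dist hG p hp h (by omega)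
        rw [this]; omega
      · have := geodesic_getVert_dist hG p hp h (by omega)
        rw [dist_comm, this]; omega
    have := hR n (fun a => p.getVert a) hdist ⟨i, by omega⟩ ⟨j, by omega⟩ ⟨k, by omega⟩
    simpa using this hij hjk
  -- Fact B: a vertex whose color differs from both endpoint colors of a bichromatic
  -- edge is equidistant from the endpoints.
  have factB : ∀ a b z : V, G.Adj a b → c a ≠ c b → c z ≠ c a → c z ≠ c b →
      G.dist z a = G.dist z b := by
    have key : ∀ a b z : V, G.Adj a b → c a ≠ c b → c z ≠ c a → c z ≠ c b →
        G.dist z b ≠ G.dist z a + 1 := by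
      intro a b z hab hcab hza hzb heq
      have hne : G.dist z a ≠ 0 := by
        intro h0
        have := hG.dist_eq_zero_iff.mp h0
        subst this; exact hza rfl
      obtain ⟨p, hp⟩ := hG.exists_walk_length_eq_dist z a
      set q : G.Walk z b := p.append hab.toWalk with hq
      have hqlen : q.length = p.length + 1 := by
        simp [hq, SimpleGraph.Walk.length_append]
      have hqgeo : q.length = G.dist z b := by rw [hqlen, hp, heq]
      have hq0 : q.getVert 0 = z := q.getVert_zero
      have hqm : q.getVert p.length = a := by
        rw [hq, SimpleGraph.Walk.getVert_append]
        by_cases h : p.length < p.length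
        · omega
        · simp [h, p.getVert_length]
      have hqe : q.getVert q.length = b := q.getVert_length
      have := factA z b q hqgeo 0 p.length q.length (by omega) (by omega) (le_refl _)
      rw [hq0, hqm, hqe] at this
      exact hzb (this hza hcab)
    intro a b z hab hcab hza hzb
    have h1 : G.dist z b ≤ G.dist z a + 1 := by
      have := hG.dist_triangle (u := z) (v := a) (w := b)
      have hd : G.dist a b = 1 := dist_eq_one_iff_adj.mpr hab
      omega
    have h2 : G.dist z a ≤ G.dist z b + 1 := by
      have := hG.dist_triangle (u := z) (v := b) (w := a)
      have hd : G.dist b a = 1 := dist_eq_one_iff_adj.mpr hab.symm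
      omega
    have h3 := key a b z hab hcab hza hzb
    have h4 := key b a z hab.symm (Ne.symm hcab) hzb hza
    omega
  -- There exists a bichromatic edge.
  have hbi : ∃ a b : V, G.Adj a b ∧ c a ≠ c b := by
    obtain ⟨v0, hv0⟩ := hc ⟨0, by omega⟩
    obtain ⟨v1, hv1⟩ := hc ⟨1, by omega⟩
    have hne : c v0 ≠ c v1 := by
      rw [hv0, hv1]; intro h; exact absurd (Fin.mk.injEq .. ▸ h) (by simp)
    obtain ⟨p⟩ := hG v0 v1
    exact exists_bichromatic_edge c p hne
  obtain ⟨a, b, hab, hcab⟩ := hbi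
  -- There is a third color.
  have hthird : ∃ w : V, c w ≠ c a ∧ c w ≠ c b := by
    have : ∃ γ : Fin r, γ ≠ c a ∧ γ ≠ c b := by
      by_contra h
      push_neg at h
      have hsub : (Finset.univ : Finset (Fin r)) ⊆ {c a, c b} := by
        intro γ _
        rcases ne_or_eq γ (c a) with h1 | h1
        · simp [h γ h1]
        · simp [h1]
      have := Finset.card_le_card hsub
      have h2 : ({c a, c b} : Finset (Fin r)).card ≤ 2 :=
        le_trans (Finset.card_insert_le _ _) (by simp)
      simp [Finset.card_univ] at this
      omega
    obtain ⟨γ, h1, h2⟩ := this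
    obtain ⟨w, hw⟩ := hc γ
    exact ⟨w, hw ▸ h1, hw ▸ h2⟩
  -- Choose such a vertex minimizing distance to a.
  have hSne : (Finset.univ.filter (fun w => c w ≠ c a ∧ c w ≠ c b)).Nonempty := by
    obtain ⟨w, hw⟩ := hthird
    exact ⟨w, by simp [hw.1, hw.2]⟩
  obtain ⟨w, hwmem, hwmin⟩ := Finset.exists_min_image _ (fun w => G.dist w a) hSne
  simp only [Finset.mem_filter, Finset.mem_univ, true_and] at hwmem
  obtain ⟨hwa, hwb⟩ := hwmem
  have hmin : ∀ z : V, c z ≠ c a → c z ≠ c b → G.dist w a ≤ G.dist z a := by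
    intro z h1 h2
    exact hwmin z (by simp [h1, h2])
  set d := G.dist w a with hd
  have hdpos : 1 ≤ d := by
    have : d ≠ 0 := by
      intro h0
      rw [hd] at h0
      have := hG.dist_eq_zero_iff.mp h0
      subst this; exact hwa rfl
    omega
  have hdb : G.dist w b = d := (factB a b w hab hcab hwa hwb).symm
  -- geodesic from w to a
  obtain ⟨p, hp⟩ := hG.exists_walk_length_eq_dist w a
  have hplen : p.length = d := by rw [hp]
  have hx1adj : G.Adj w (p.getVert 1) := by
    have := p.adj_getVert_succ (i := 0) (by omega)
    simpa [p.getVert_zero] using this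
  set x1 := p.getVert 1 with hx1
  have hx1a : c x1 = c a := by
    by_contra hne
    have hx1w : c x1 = c w := by
      by_contra hne2
      have := factA w a p hp 0 1 p.length (by omega) (by omega) (le_refl _)
      rw [p.getVert_zero, p.getVert_length] at this
      exact hwa (this (Ne.symm hne2) hne)
    have hx1S1 : c x1 ≠ c a := hx1w ▸ hwa
    have hx1S2 : c x1 ≠ c b := hx1w ▸ hwb
    have hdx1 : G.dist x1 a = d - 1 := by
      have := geodesic_getVert_dist hG p hp (i := 1) (j := p.length) (by omega) (le_refl _)
      rw [p.getVert_length] at this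
      rw [hx1, this, hplen]
    have := hmin x1 hx1S1 hx1S2
    omega
  -- geodesic from w to b
  obtain ⟨q, hq⟩ := hG.exists_walk_length_eq_dist w b
  have hqlen : q.length = d := by rw [hq, hdb]
  have hy1adj : G.Adj w (q.getVert 1) := by
    have := q.adj_getVert_succ (i := 0) (by omega)
    simpa [q.getVert_zero] using this
  set y1 := q.getVert 1 with hy1
  have hy1b : c y1 = c b := by
    by_contra hne
    have hy1w : c y1 = c w := by
      by_contra hne2
      have := factA w b q hq 0 1 q.length (by omega) (by omega) (le_refl _)
      rw [q.getVert_zero, q.getVert_length] at this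
      exact hwb (this (Ne.symm hne2) hne)
    have hy1S1 : c y1 ≠ c a := hy1w ▸ hwa
    have hy1S2 : c y1 ≠ c b := hy1w ▸ hwb
    have hdy1b : G.dist y1 b = d - 1 := by
      have := geodesic_getVert_dist hG q hq (i := 1) (j := q.length) (by omega) (le_refl _)
      rw [q.getVert_length] at this
      rw [hy1, this, hqlen]
    have hdy1a : G.dist y1 a = d - 1 := by
      rw [factB a b y1 hab hcab hy1S1 hy1S2, hdy1b]
    have := hmin y1 hy1S1 hy1S2
    omega
  -- x1 and y1 are adjacent
  have hcwy1 : c w ≠ c y1 := hy1b ▸ hwb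
  have hcx1w : c x1 ≠ c w := hx1a ▸ fun h => hwa h.symm
  have hcx1y1 : c x1 ≠ c y1 := by rw [hx1a, hy1b]; exact hcab
  have hxy : G.dist x1 w = G.dist x1 y1 := factB w y1 x1 hy1adj hcwy1 hcx1w hcx1y1
  have hx1w1 : G.dist x1 w = 1 := dist_eq_one_iff_adj.mpr hx1adj.symm
  have hadjx1y1 : G.Adj x1 y1 := dist_eq_one_iff_adj.mp (hxy ▸ hx1w1)
  -- rainbow triangle x1, w, y1 contradicts hL
  have := hL x1 w y1 hx1adj.symm hy1adj hadjx1y1 hcx1w hcwy1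
  exact hcx1y1 this
end

section
/- Let T be a non-3-peripheral tree and let u_i, u_j ∈ V(T) with d(u_i,u_j) = diam(T). If there exist u_x, u_y ∈ V(T) with d(u_x,u_j) = diam(T) and d(u_i,u_y) = diam(T), then d(u_x,u_y) = diam(T). -/
open SimpleGraph

set_option linter.unusedSectionVars false

namespace TreeAuxNP

variable {V : Type*} [DecidableEq V] {T : SimpleGraph V}

/-- In a tree, any path's length equals the distance between its endpoints. -/
lemma length_eq_dist (hT : T.IsTree) {a b : V} (p : T.Walk a b) (hp : p.IsPath) :
    p.length = T.dist a b := by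
  refine le_antisymm ?_ (SimpleGraph.dist_le p)
  obtain ⟨w, hw⟩ := (hT.isConnected a b).exists_walk_length_eq_dist
  have huniq := (isAcyclic_iff_path_unique.mp hT.IsAcyclic)
    (⟨p, hp⟩ : T.Path a b) ⟨w.bypass, w.bypass_isPath⟩
  have hpe : p = w.bypass := congrArg Subtype.val huniq
  calc p.length = w.bypass.length := by rw [hpe]
    _ ≤ w.length := w.length_bypass_le
    _ = T.dist a b := hw

/-- Appending two paths that share only the common endpoint is a path. -/
lemma isPath_append {u v w : V} {p : T.Walk u v} {q : T.Walk v w}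
    (hp : p.IsPath) (hq : q.IsPath)
    (h : ∀ a, a ∈ p.support → a ∈ q.support → a = v) : (p.append q).IsPath := by
  rw [SimpleGraph.Walk.isPath_def, SimpleGraph.Walk.support_append]
  have hq' := hq.support_nodup
  rw [q.support_eq_cons] at hq'
  refine List.Nodup.append hp.support_nodup hq'.of_cons (List.disjoint_left.mpr ?_)
  intro a hap hat
  have haq : a ∈ q.support := q.support_eq_cons ▸ List.mem_cons_of_mem _ hat
  have hav : a = v := h a hap haq
  subst hav
  exact (List.nodup_cons.mp hq').1 hat

/-- Any vertex on a path splits the distance between the endpoints. -/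
lemma dist_add_dist_of_mem_support (hT : T.IsTree) {a b : V} {p : T.Walk a b}
    (hp : p.IsPath) {w : V} (hw : w ∈ p.support) :
    T.dist a w + T.dist w b = T.dist a b := by
  have h1 := length_eq_dist hT _ (hp.takeUntil hw)
  have h2 := length_eq_dist hT _ (hp.dropUntil hw)
  have h3 := length_eq_dist hT p hp
  have h4 : (p.takeUntil w hw).length + (p.dropUntil w hw).length = p.length := by
    rw [← SimpleGraph.Walk.length_append, p.take_spec hw]
  omega

/-- Finding the first vertex of a walk lying in a set `S` containing the endpoint. -/
lemma exists_prefix {S : Set V} {x j : V} (q : T.Walk x j) (hj : j ∈ S) :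
    ∃ (m : V) (q1 : T.Walk x m) (q2 : T.Walk m j), m ∈ S ∧
      (∀ v ∈ q1.support, v ∈ S → v = m) ∧ q1.append q2 = q := by
  induction q with
  | nil => exact ⟨_, SimpleGraph.Walk.nil, SimpleGraph.Walk.nil, hj, by simp, rfl⟩
  | @cons a c b h q' ih =>
    by_cases ha : a ∈ S
    · exact ⟨a, SimpleGraph.Walk.nil, SimpleGraph.Walk.cons h q', ha, by simp, rfl⟩
    · obtain ⟨m, q1, q2, hm, hprop, happ⟩ := ih hj
      refine ⟨m, SimpleGraph.Walk.cons h q1, q2, hm, ?_, by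
        rw [SimpleGraph.Walk.cons_append, happ]⟩
      intro v hv hvS
      rw [SimpleGraph.Walk.support_cons] at hv
      rcases List.mem_cons.mp hv with hv | hv
      · exact absurd (hv ▸ hvS) ha
      · exact hprop v hv hvS

/-- The gate lemma: for a path `p` and a vertex `x` in a tree, there is a vertex `m` on `p`
through which all geodesics from `x` to vertices of `p` pass. -/
lemma gate (hT : T.IsTree) {i j : V} (p : T.Walk i j) (hp : p.IsPath) (x : V) :
    ∃ (m : V), m ∈ p.support ∧
      ∃ q1 : T.Walk x m, q1.IsPath ∧ (∀ v ∈ q1.support, v ∈ p.support → v = m) ∧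
        (∀ w ∈ p.support, T.dist x w = T.dist x m + T.dist m w) := by
  obtain ⟨q, hq, -⟩ := hT.isConnected.exists_path_of_dist x j
  obtain ⟨m, q1, q2, hm, hsep, happ⟩ :=
    exists_prefix (S := {v | v ∈ p.support}) q p.end_mem_support
  have hq1 : q1.IsPath := SimpleGraph.Walk.IsPath.of_append_left (happ ▸ hq)
  refine ⟨m, hm, q1, hq1, hsep, ?_⟩
  intro w hw
  obtain ⟨r, hr, hrsub⟩ : ∃ r : T.Walk m w, r.IsPath ∧ ∀ v ∈ r.support, v ∈ p.support := by
    have hw' : w ∈ (p.takeUntil m hm).support ∨ w ∈ (p.dropUntil m hm).support := by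
      rw [← SimpleGraph.Walk.mem_support_append_iff, p.take_spec hm]; exact hw
    rcases hw' with hw' | hw'
    · refine ⟨((p.takeUntil m hm).dropUntil w hw').reverse,
        ((hp.takeUntil hm).dropUntil hw').reverse, ?_⟩
      intro v hv
      rw [SimpleGraph.Walk.support_reverse, List.mem_reverse] at hv
      exact p.support_takeUntil_subset hm
        ((SimpleGraph.Walk.support_dropUntil_subset _ hw') hv)
    · refine ⟨(p.dropUntil m hm).takeUntil w hw', (hp.dropUntil hm).takeUntil hw', ?_⟩
      intro v hv
      exact p.support_dropUntil_subset hm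
        ((SimpleGraph.Walk.support_takeUntil_subset _ hw') hv)
  have hpath : (q1.append r).IsPath :=
    isPath_append hq1 hr (fun a ha1 ha2 => hsep a ha1 (hrsub a ha2))
  have h1 := length_eq_dist hT _ hpath
  rw [SimpleGraph.Walk.length_append, length_eq_dist hT q1 hq1, length_eq_dist hT r hr] at h1
  omega

/-- Betweenness on a path: two vertices on a path are comparable from the start. -/
lemma between (hT : T.IsTree) {i j : V} (p : T.Walk i j) :
    p.IsPath → ∀ u ∈ p.support, ∀ v ∈ p.support,
      T.dist i u + T.dist u v = T.dist i v ∨ T.dist i v + T.dist v u = T.dist i u := by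
  induction p with
  | nil =>
    intro _ u hu v hv
    simp only [SimpleGraph.Walk.support_nil, List.mem_singleton] at hu hv
    subst hu; subst hv
    simp
  | @cons a c b h q' ih =>
    intro hp u hu v hv
    rw [SimpleGraph.Walk.support_cons] at hu hv
    have key : ∀ w ∈ q'.support, T.dist a w = 1 + T.dist c w := by
      intro w hw
      have hpath : (SimpleGraph.Walk.cons h (q'.takeUntil w hw)).IsPath := by
        rw [SimpleGraph.Walk.cons_isPath_iff]
        refine ⟨(hp.of_cons).takeUntil hw, fun hmem =>
          ((SimpleGraph.Walk.cons_isPath_iff h q').mp hp).2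
            ((SimpleGraph.Walk.support_takeUntil_subset _ hw) hmem)⟩
      have h1 := length_eq_dist hT _ hpath
      rw [SimpleGraph.Walk.length_cons,
        length_eq_dist hT _ ((hp.of_cons).takeUntil hw)] at h1
      omega
    rcases List.mem_cons.mp hu with rfl | hu
    · left; simp
    rcases List.mem_cons.mp hv with rfl | hv
    · right; simp
    have hau := key u hu
    have hav := key v hv
    rcases ih hp.of_cons u hu v hv with h' | h'
    · left; omega
    · right; omega

end TreeAuxNP

/-- A graph is 3-peripheral if it has three vertices pairwise at diameter distance. -/
def ThreePeripheral {V : Type*} (G : SimpleGraph V) : Prop :=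
  ∃ a b c : V, a ≠ b ∧ a ≠ c ∧ b ≠ c ∧
    G.dist a b = G.diam ∧ G.dist a c = G.diam ∧ G.dist b c = G.diam

/-- In a non-3-peripheral tree, if `uᵢ, uⱼ` realize the diameter, `uₓ` is at diameter
distance from `uⱼ` and `u_y` is at diameter distance from `uᵢ`, then `uₓ` and `u_y` are at
diameter distance from each other. -/
theorem dist_diam_of_non_three_peripheral {V : Type*} [Fintype V]
    (T : SimpleGraph V) (hT : T.IsTree) (hnp : ¬ ThreePeripheral T)
    (ui uj ux uy : V)
    (hij : T.dist ui uj = T.diam)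
    (hxj : T.dist ux uj = T.diam)
    (hiy : T.dist ui uy = T.diam) :
    T.dist ux uy = T.diam := by
  classical
  open TreeAuxNP in
  by_cases hD0 : T.diam = 0
  · have h1 : ui = uj := (hT.isConnected.dist_eq_zero_iff).mp (by rw [hij, hD0])
    have h2 : ux = uj := (hT.isConnected.dist_eq_zero_iff).mp (by rw [hxj, hD0])
    have h3 : ui = uy := (hT.isConnected.dist_eq_zero_iff).mp (by rw [hiy, hD0])
    rw [h2, ← h3, h1, SimpleGraph.dist_self, hD0]
  · have hnt : T.ediam ≠ ⊤ := SimpleGraph.ediam_ne_top_of_diam_ne_zero hD0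
    have hle : ∀ a b : V, T.dist a b ≤ T.diam := fun a b => SimpleGraph.dist_le_diam hnt
    by_cases hxi : ux = ui
    · rw [hxi]; exact hiy
    by_cases hyj : uy = uj
    · rw [hyj]; exact hxj
    have hDpos : 0 < T.diam := Nat.pos_of_ne_zero hD0
    have hij' : ui ≠ uj := fun e => by rw [e, SimpleGraph.dist_self] at hij; omega
    have hxj' : ux ≠ uj := fun e => by rw [e, SimpleGraph.dist_self] at hxj; omega
    have hiy' : ui ≠ uy := fun e => by rw [e, SimpleGraph.dist_self] at hiy; omega
    have hA : T.dist ux ui < T.diam :=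
      lt_of_le_of_ne (hle _ _) (fun e => hnp ⟨ux, ui, uj, hxi, hxj', hij', e, hxj, hij⟩)
    have hB : T.dist uy uj < T.diam :=
      lt_of_le_of_ne (hle _ _) (fun e => hnp ⟨ui, uy, uj, hiy', hij', hyj, hiy, hij, e⟩)
    obtain ⟨p, hp, -⟩ := hT.isConnected.exists_path_of_dist ui uj
    obtain ⟨m, hm, q1, hq1, hsep, Hx⟩ := TreeAuxNP.gate hT p hp ux
    obtain ⟨n, hn, r1, hr1, hsepn, Hy⟩ := TreeAuxNP.gate hT p hp uy
    have hmij := TreeAuxNP.dist_add_dist_of_mem_support hT hp hm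
    have hnij := TreeAuxNP.dist_add_dist_of_mem_support hT hp hn
    have Hxi := Hx ui p.start_mem_support
    have Hxj := Hx uj p.end_mem_support
    have Hyi := Hy ui p.start_mem_support
    have Hyj := Hy uj p.end_mem_support
    have Hym := Hy m hm
    -- communtativity normalizations
    have c1 : T.dist m ui = T.dist ui m := SimpleGraph.dist_comm ..
    have c2 : T.dist n ui = T.dist ui n := SimpleGraph.dist_comm ..
    have c3 : T.dist uy ui = T.dist ui uy := SimpleGraph.dist_comm ..
    have c4 : T.dist n m = T.dist m n := SimpleGraph.dist_comm ..
    -- s = dist ux m, t = dist uy n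
    have hs2 : T.dist ux ui = 2 * T.dist ux m := by omega
    have hseq : T.dist ux m = T.dist ui m := by omega
    have hnuj : T.dist n uj = T.dist uy n := by omega
    have ht2 : T.dist uy uj = 2 * T.dist uy n := by omega
    have hmn : T.dist ui m + T.dist m n = T.dist ui n := by
      rcases TreeAuxNP.between hT p hp m hm n hn with h' | h'
      · exact h'
      · omega
    -- the path from ux to uj through m
    have hP' : (q1.append (p.dropUntil m hm)).IsPath :=
      TreeAuxNP.isPath_append hq1 (hp.dropUntil hm)
        (fun a h1 h2 => hsep a h1 (SimpleGraph.Walk.support_dropUntil_subset p hm h2))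
    obtain ⟨n', hn', r', hr', hsep', H'⟩ := TreeAuxNP.gate hT _ hP' uy
    have e1 : T.dist ux n' + T.dist n' uj = T.dist ux uj :=
      TreeAuxNP.dist_add_dist_of_mem_support hT hP' hn'
    have e2 := H' uj (q1.append (p.dropUntil m hm)).end_mem_support
    have e3 := H' ux (q1.append (p.dropUntil m hm)).start_mem_support
    have e4 := H' m ((SimpleGraph.Walk.mem_support_append_iff _ _).mpr (Or.inl q1.end_mem_support))
    have c5 : T.dist n' ux = T.dist ux n' := SimpleGraph.dist_comm ..
    have c6 : T.dist uy ux = T.dist ux uy := SimpleGraph.dist_comm ..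
    rcases (SimpleGraph.Walk.mem_support_append_iff _ _).mp hn' with hn' | hn'
    · -- n' on the q1 part: contradiction
      exfalso
      have f1 : T.dist ux n' + T.dist n' m = T.dist ux m :=
        TreeAuxNP.dist_add_dist_of_mem_support hT hq1 hn'
      omega
    · -- n' on p: compute
      have hn'p : n' ∈ p.support := SimpleGraph.Walk.support_dropUntil_subset p hm hn'
      have f2 := Hy n' hn'p
      have hub := hle ux uy
      omega
end

section
/- If T is a 3-peripheral tree, then diam(T) is even. Moreover, for any three vertices of T that are pairwise at distance diam(T), there exists a vertex of T equidistant from all three. -/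
open SimpleGraph

section Aux
variable {V : Type*} {G : SimpleGraph V}

/-- In a tree, any path realizes the distance. -/
lemma tree_path_length_eq_dist (hT : G.IsTree) {a b : V} (p : G.Walk a b) (hp : p.IsPath) :
    p.length = G.dist a b := by
  obtain ⟨q, hq⟩ := hT.isConnected.exists_walk_length_eq_dist a b
  have hqp : q.IsPath := q.isPath_of_length_eq_dist hq
  have : (⟨p, hp⟩ : G.Path a b) = ⟨q, hqp⟩ := hT.IsAcyclic.path_unique _ _
  rw [show p = q from congrArg Subtype.val this, hq]

/-- Splitting distances at a vertex of a path in a tree. -/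
lemma tree_dist_split (hT : G.IsTree) {a b x : V} (p : G.Walk a b) (hp : p.IsPath)
    (hx : x ∈ p.support) : G.dist a x + G.dist x b = G.dist a b := by
  haveI := Classical.decEq V
  have h1 := tree_path_length_eq_dist hT _ (hp.takeUntil hx)
  have h2 := tree_path_length_eq_dist hT _ (hp.dropUntil hx)
  have h3 := tree_path_length_eq_dist hT p hp
  have := congrArg Walk.length (p.take_spec hx)
  rw [Walk.length_append] at this
  omega

/-- Distance changes by exactly ±1 along edges of a tree. -/
lemma tree_adj_dist (hT : G.IsTree) {a a' : V} (h : G.Adj a a') (c : V) :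
    G.dist a' c = G.dist a c + 1 ∨ G.dist a c = G.dist a' c + 1 := by
  obtain ⟨p, hp⟩ := hT.isConnected.exists_walk_length_eq_dist a' c
  have hpp : p.IsPath := p.isPath_of_length_eq_dist hp
  by_cases hm : a ∈ p.support
  · left
    have := tree_dist_split hT p hpp hm
    have h1 : G.dist a' a = 1 := by
      rw [dist_eq_one_iff_adj]; exact h.symm
    omega
  · right
    have hc : (Walk.cons h p).IsPath := hpp.cons hm
    have := tree_path_length_eq_dist hT _ hc
    simp only [Walk.length_cons] at this
    omega

/-- Median existence in a tree. -/
lemma tree_median (hT : G.IsTree) :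
    ∀ n (a b c : V), G.dist a b = n →
      ∃ m : V, G.dist a m + G.dist m b = G.dist a b ∧
        G.dist a m + G.dist m c = G.dist a c ∧
        G.dist b m + G.dist m c = G.dist b c := by
  intro n
  induction n with
  | zero =>
    intro a b c hab
    have : a = b := (hT.isConnected.dist_eq_zero_iff).mp hab
    subst this
    exact ⟨a, by simp [SimpleGraph.dist_self]⟩
  | succ n ih =>
    intro a b c hab
    obtain ⟨p, hp⟩ := hT.isConnected.exists_walk_length_eq_dist a b
    have hpp : p.IsPath := p.isPath_of_length_eq_dist hp
    cases p with
    | nil => exact absurd hab (by simp)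
    | @cons _ a' _ adj q =>
      simp only [Walk.length_cons] at hp
      have hqpath : q.IsPath := hpp.of_cons
      have hq1 : G.dist a' b ≤ q.length := dist_le q
      have haa' : G.dist a a' = 1 := dist_eq_one_iff_adj.mpr adj
      have htri : G.dist a b ≤ G.dist a a' + G.dist a' b := hT.isConnected.dist_triangle
      have ha'b : G.dist a' b = n := by omega
      rcases tree_adj_dist hT adj c with hcase | hcase
      · -- dist a' c = dist a c + 1 : claim median of (a',b,c) is a', then a works
        obtain ⟨m, e1, e2, e3⟩ := ih a' b c ha'b
        -- build the path from a' to c through a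
        obtain ⟨r, hr⟩ := hT.isConnected.exists_walk_length_eq_dist a c
        have hrp : r.IsPath := r.isPath_of_length_eq_dist hr
        have hcons_len : (Walk.cons adj.symm r).length = G.dist a' c := by
          simp [Walk.length_cons]; omega
        have hcons_path : (Walk.cons adj.symm r).IsPath :=
          (Walk.cons adj.symm r).isPath_of_length_eq_dist hcons_len
        -- build walk a' → m → c realizing dist, it is a path containing m
        obtain ⟨s, hs⟩ := hT.isConnected.exists_walk_length_eq_dist a' m
        obtain ⟨t, ht⟩ := hT.isConnected.exists_walk_length_eq_dist m c
        have hst_len : (s.append t).length = G.dist a' c := by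
          rw [Walk.length_append]; rw [ha'b] at e1; omega
        have hst_path : (s.append t).IsPath := (s.append t).isPath_of_length_eq_dist hst_len
        have heq : (⟨s.append t, hst_path⟩ : G.Path a' c) = ⟨Walk.cons adj.symm r, hcons_path⟩ :=
          hT.IsAcyclic.path_unique _ _
        have hmem : m ∈ (Walk.cons adj.symm r).support := by
          rw [← show (s.append t) = Walk.cons adj.symm r from congrArg Subtype.val heq]
          exact (Walk.mem_support_append_iff _ _).mpr (Or.inl s.end_mem_support)
        rw [Walk.support_cons] at hmem
        have hma' : m = a' := by
          rcases List.mem_cons.mp hmem with h' | h'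
          · exact h'
          · exfalso
            have hsplit := tree_dist_split hT r hrp h'
            -- also dist a m ≥ dist a' m + 1 from e1
            have : G.dist a b ≤ G.dist a m + G.dist m b := hT.isConnected.dist_triangle
            have h5 : G.dist a' m ≤ G.dist a' a + G.dist a m := hT.isConnected.dist_triangle
            have h6 : G.dist a' a = 1 := by rw [SimpleGraph.dist_comm]; omega
            omega
        subst hma'
        refine ⟨a, ?_, ?_, ?_⟩
        · simp [SimpleGraph.dist_self]
        · simp [SimpleGraph.dist_self]
        · have c1 : G.dist b m = G.dist m b := SimpleGraph.dist_comm
          have c2 : G.dist b a = G.dist a b := SimpleGraph.dist_comm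
          omega
      · -- dist a c = dist a' c + 1 : recurse
        obtain ⟨m, e1, e2, e3⟩ := ih a' b c ha'b
        have t1 : G.dist a m ≤ G.dist a a' + G.dist a' m := hT.isConnected.dist_triangle
        have t2 : G.dist a b ≤ G.dist a m + G.dist m b := hT.isConnected.dist_triangle
        exact ⟨m, by omega, by omega, by omega⟩

end Aux
/-- A 3-peripheral tree has even diameter, and any three vertices pairwise at diameter
distance admit a vertex equidistant from all three. -/
theorem three_peripheral_even_diam {V : Type*} [Fintype V]
    (T : SimpleGraph V) (hT : T.IsTree) (h3 : ThreePeripheral T) :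
    Even T.diam ∧
      ∀ a b c : V, a ≠ b → a ≠ c → b ≠ c →
        T.dist a b = T.diam → T.dist a c = T.diam → T.dist b c = T.diam →
        ∃ w : V, T.dist w a = T.dist w b ∧ T.dist w b = T.dist w c := by
  constructor
  · obtain ⟨a, b, c, -, -, -, hab, hac, hbc⟩ := h3
    obtain ⟨m, e1, e2, e3⟩ := tree_median hT (T.dist a b) a b c rfl
    rw [hab] at e1; rw [hac] at e2; rw [hbc] at e3
    have c1 : T.dist b m = T.dist m b := SimpleGraph.dist_comm
    exact ⟨T.dist m b, by omega⟩
  · intro a b c _ _ _ hab hac hbc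
    obtain ⟨m, e1, e2, e3⟩ := tree_median hT (T.dist a b) a b c rfl
    rw [hab] at e1; rw [hac] at e2; rw [hbc] at e3
    have c1 : T.dist b m = T.dist m b := SimpleGraph.dist_comm
    have c2 : T.dist m a = T.dist a m := SimpleGraph.dist_comm
    have c3 : T.dist m b = T.dist b m := SimpleGraph.dist_comm
    have c4 : T.dist m c = T.dist c m := SimpleGraph.dist_comm
    exact ⟨m, by omega, by omega⟩
end

section
/- For any peripheral vertex v of a tree T (with diam(T) ≥ 1), the subtree T_{v⁻} obtained by deleting from T all vertices at distance diam(T) from v satisfies diam(T_{v⁻}) = diam(T) − 1. -/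
open SimpleGraph

namespace TreeAux

variable {V : Type*} [DecidableEq V] {T : SimpleGraph V}

lemma length_eq_dist (hT : T.IsTree) {x y : V} {p : T.Walk x y} (hp : p.IsPath) :
    p.length = T.dist x y := by
  refine le_antisymm ?_ (T.dist_le p)
  obtain ⟨q, hq, hlen⟩ := hT.isConnected.exists_path_of_dist x y
  rw [(hT.existsUnique_path x y).unique hp hq, hlen]

lemma dist_split (hT : T.IsTree) {x y w : V} {p : T.Walk x y} (hp : p.IsPath)
    (hw : w ∈ p.support) : T.dist x y = T.dist x w + T.dist w y := by
  have h1 := length_eq_dist hT hp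
  have h2 := length_eq_dist hT (hp.takeUntil hw)
  have h3 := length_eq_dist hT (hp.dropUntil hw)
  have h4 := congrArg Walk.length (p.take_spec hw)
  rw [Walk.length_append] at h4
  omega

lemma adj_dist_ne (hT : T.IsTree) (v : V) {a b : V} (h : T.Adj a b) :
    T.dist v a ≠ T.dist v b := by
  intro he
  obtain ⟨P, hP, hPlen⟩ := hT.isConnected.exists_path_of_dist v a
  have hbP : b ∉ P.support := by
    intro hb
    have h2 := length_eq_dist hT (hP.takeUntil hb)
    have h3 := length_eq_dist hT (hP.dropUntil hb)
    have h4 := congrArg Walk.length (P.take_spec hb)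
    rw [Walk.length_append] at h4
    have h5 : 1 ≤ T.dist b a := by
      rw [Nat.one_le_iff_ne_zero, dist_ne_zero_iff_ne_and_reachable]
      exact ⟨h.symm.ne, ⟨h.symm.toWalk⟩⟩
    omega
  obtain ⟨Q, hQ, hQlen⟩ := hT.isConnected.exists_path_of_dist v b
  have hW : (Walk.cons h.symm P.reverse).IsPath := by
    rw [Walk.cons_isPath_iff]
    refine ⟨hP.reverse, ?_⟩
    rw [Walk.support_reverse, List.mem_reverse]
    exact hbP
  have heq := (hT.existsUnique_path b v).unique hW hQ.reverse
  have hl := congrArg Walk.length heq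
  simp only [Walk.length_cons, Walk.length_reverse] at hl
  omega

lemma no_local_max (hT : T.IsTree) (v : V) {a b c : V} (hab : T.Adj a b) (hbc : T.Adj b c)
    (hac : a ≠ c) (h1 : T.dist v a < T.dist v b) : T.dist v b ≤ T.dist v c := by
  by_contra h2
  push_neg at h2
  obtain ⟨P, hP, hPlen⟩ := hT.isConnected.exists_path_of_dist v a
  obtain ⟨R, hR, hRlen⟩ := hT.isConnected.exists_path_of_dist v c
  have hbP : b ∉ P.support := by
    intro hb
    have hh1 := T.dist_le (P.takeUntil b hb)
    have hh2 := Walk.length_takeUntil_le P hb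
    omega
  have hbR : b ∉ R.support := by
    intro hb
    have hh1 := T.dist_le (R.takeUntil b hb)
    have hh2 := Walk.length_takeUntil_le R hb
    omega
  have hWpath := Walk.bypass_isPath (P.reverse.append R)
  have hbW : b ∉ (P.reverse.append R).bypass.support := by
    intro hbb
    have hmem := Walk.support_bypass_subset _ hbb
    rw [Walk.mem_support_append_iff, Walk.support_reverse, List.mem_reverse] at hmem
    tauto
  have hpath2 : (Walk.cons hab hbc.toWalk).IsPath := by
    simp [Walk.cons_isPath_iff, Walk.isPath_def, hab.ne, hbc.ne, hac]
  have heq := (hT.existsUnique_path a c).unique hWpath hpath2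
  rw [heq] at hbW
  simp [Walk.support_cons, Walk.support_nil, Adj.toWalk] at hbW

lemma ray (hT : T.IsTree) (v : V) : ∀ {x y : V} (p : T.Walk x y), p.IsPath → ∀ a, T.Adj a x →
    a ∉ p.support → T.dist v a < T.dist v x → T.dist v y = T.dist v x + p.length := by
  intro x y p
  induction p with
  | nil => intro _ _ _ _ _; simp
  | @cons x x' y h q ih =>
    intro hp a ha hans hlt
    obtain ⟨hq, hxq⟩ := (Walk.cons_isPath_iff h q).mp hp
    have hax' : a ≠ x' := by
      intro hax; apply hans
      rw [Walk.support_cons]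
      exact List.mem_cons_of_mem _ (hax ▸ q.start_mem_support)
    have s1 : T.dist v x ≤ T.dist v x' := no_local_max hT v ha h hax' hlt
    have s2 : T.dist v x ≠ T.dist v x' := adj_dist_ne hT v h
    have s3 : T.dist v x' ≤ T.dist v x + 1 := by
      have := hT.isConnected.dist_triangle (u := v) (v := x) (w := x')
      rwa [dist_eq_one_iff_adj.mpr h] at this
    have s4 := ih hq x h hxq (by omega)
    simp only [Walk.length_cons]
    omega

lemma median (hT : T.IsTree) (v : V) : ∀ {x y : V} (p : T.Walk x y), p.IsPath →
    ∃ m ∈ p.support, T.dist v x = T.dist v m + T.dist m x ∧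
      T.dist v y = T.dist v m + T.dist m y := by
  intro x y p
  induction p with
  | nil => exact fun _ => ⟨_, Walk.start_mem_support _, by simp, by simp⟩
  | @cons x x' y h q ih =>
    intro hp
    obtain ⟨hq, hxq⟩ := (Walk.cons_isPath_iff h q).mp hp
    have hne : T.dist v x ≠ T.dist v x' := adj_dist_ne hT v h
    have ht1 : T.dist v x' ≤ T.dist v x + 1 := by
      have := hT.isConnected.dist_triangle (u := v) (v := x) (w := x')
      rwa [dist_eq_one_iff_adj.mpr h] at this
    have ht2 : T.dist v x ≤ T.dist v x' + 1 := by
      have := hT.isConnected.dist_triangle (u := v) (v := x') (w := x)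
      rwa [dist_eq_one_iff_adj.mpr h.symm] at this
    rcases lt_or_gt_of_ne hne with hlt | hgt
    · refine ⟨x, by simp, by simp, ?_⟩
      have s4 := ray hT v q hq x h hxq hlt
      have s5 : T.dist x y = q.length + 1 := by
        have := length_eq_dist hT hp
        simp only [Walk.length_cons] at this
        omega
      omega
    · obtain ⟨m, hm, e1, e2⟩ := ih hq
      refine ⟨m, by rw [Walk.support_cons]; exact List.mem_cons_of_mem _ hm, ?_, e2⟩
      have hxm : T.dist x m = T.dist x' m + 1 := by
        have hpath : (Walk.cons h (q.takeUntil m hm)).IsPath := by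
          rw [Walk.cons_isPath_iff]
          exact ⟨hq.takeUntil hm, fun hx => hxq (q.support_takeUntil_subset hm hx)⟩
        have l1 := length_eq_dist hT hpath
        have l2 := length_eq_dist hT (hq.takeUntil hm)
        simp only [Walk.length_cons] at l1
        omega
      have c1 : T.dist m x = T.dist x m := T.dist_comm
      have c2 : T.dist m x' = T.dist x' m := T.dist_comm
      omega

lemma support_dist_le (hT : T.IsTree) (v : V) : ∀ {x y : V} (p : T.Walk x y), p.IsPath →
    ∀ w ∈ p.support, T.dist v w ≤ max (T.dist v x) (T.dist v y) := by
  intro x y p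
  induction p with
  | nil => intro _ w hw; simp at hw; subst hw; simp
  | @cons x x' y h q ih =>
    intro hp w hw
    obtain ⟨hq, hxq⟩ := (Walk.cons_isPath_iff h q).mp hp
    rw [Walk.support_cons, List.mem_cons] at hw
    rcases hw with rfl | hw
    · exact le_max_left _ _
    have hih := ih hq w hw
    have hne : T.dist v x ≠ T.dist v x' := adj_dist_ne hT v h
    rw [le_max_iff] at hih ⊢
    rcases lt_or_gt_of_ne hne with hlt | hgt
    · have s4 := ray hT v q hq x h hxq hlt
      omega
    · omega

lemma dist_on_path (hT : T.IsTree) {x y : V} {p : T.Walk x y} (hp : p.IsPath) {t m : V}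
    (ht : t ∈ p.support) (hm : m ∈ p.support) :
    T.dist t m = (T.dist x m - T.dist x t) + (T.dist x t - T.dist x m) := by
  have hsm := dist_split hT hp hm
  have hst := dist_split hT hp ht
  have hcomm : T.dist m t = T.dist t m := T.dist_comm
  rw [← p.take_spec hm] at ht
  rcases (Walk.mem_support_append_iff _ _).mp ht with h1 | h1
  · have := dist_split hT (hp.takeUntil hm) h1
    omega
  · have := dist_split hT (hp.dropUntil hm) h1
    omega

lemma walk_in_induce {S : Set V} : ∀ {x y : V} (p : T.Walk x y)
    (_ : ∀ w ∈ p.support, w ∈ S) (hx : x ∈ S) (hy : y ∈ S),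
    ∃ q : (T.induce S).Walk ⟨x, hx⟩ ⟨y, hy⟩, q.length = p.length := by
  intro x y p
  induction p with
  | nil => exact fun _ _ _ => ⟨.nil, rfl⟩
  | @cons x x' y h q ih =>
    intro hS hx hy
    have hx' : x' ∈ S := hS x' (by rw [Walk.support_cons]; exact List.mem_cons_of_mem _ q.start_mem_support)
    obtain ⟨q', hq'⟩ := ih (fun w hw => hS w (by rw [Walk.support_cons]; exact List.mem_cons_of_mem _ hw)) hx' hy
    exact ⟨Walk.cons (by exact h) q', congrArg (· + 1) hq'⟩

def inclHom (S : Set V) : T.induce S →g T :=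
  ⟨Subtype.val, fun h => h⟩

lemma edist_induce_le {S : Set V} (a b : S) :
    T.edist a.1 b.1 ≤ (T.induce S).edist a b := by
  rw [edist_eq_sInf (G := T.induce S)]
  refine le_sInf ?_
  rintro _ ⟨q, rfl⟩
  have h := T.edist_le (q.map (inclHom S))
  rw [Walk.length_map] at h
  exact h
end TreeAux

/-- The eccentricity of a vertex: the maximum distance to any other vertex. -/
noncomputable def ecc {V : Type*} [Fintype V] (G : SimpleGraph V) (v : V) : ℕ :=
  Finset.univ.sup (G.dist v)

/-- For a peripheral vertex `v` of a tree `T` with `diam(T) ≥ 1`, deleting all vertices at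
distance `diam(T)` from `v` yields a tree of diameter `diam(T) - 1`. -/
theorem diam_of_Tminus {V : Type*} [Fintype V]
    (T : SimpleGraph V) (hT : T.IsTree)
    (v : V) (hv : ecc T v = T.diam) (hd : 1 ≤ T.diam) :
    (T.induce {x : V | T.dist v x < T.diam}).diam = T.diam - 1 := by
  classical
  have hconn := hT.isConnected
  haveI : Nonempty V := hconn.nonempty
  set d := T.diam with hdd
  have hdne : T.ediam ≠ ⊤ := ediam_ne_top_of_diam_ne_zero (by omega)
  have hdistle : ∀ a b : V, T.dist a b ≤ d := fun a b => dist_le_diam hdne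
  obtain ⟨u, -, hsup⟩ := Finset.exists_mem_eq_sup Finset.univ Finset.univ_nonempty (T.dist v)
  have hu : T.dist v u = d := by rw [← hsup]; exact hv
  have key : ∀ x y : V, T.dist v x < d → T.dist v y < d → T.dist x y ≤ d - 1 := by
    intro x y hx hy
    by_contra hcon
    have hxy : T.dist x y = d := by have := hdistle x y; omega
    obtain ⟨p, hp, hplen⟩ := hconn.exists_path_of_dist x y
    obtain ⟨m, hm, hm1, hm2⟩ := TreeAux.median hT v p hp
    obtain ⟨t, htp, ht1, ht2⟩ := TreeAux.median hT u p hp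
    have hsm := TreeAux.dist_split hT hp hm
    have hst := TreeAux.dist_split hT hp htp
    have htm := TreeAux.dist_on_path hT hp htp hm
    have tri1 : T.dist v u ≤ T.dist v m + T.dist m u := hconn.dist_triangle
    have tri2 : T.dist m u ≤ T.dist m t + T.dist t u := hconn.dist_triangle
    have c1 : T.dist m x = T.dist x m := T.dist_comm
    have c2 : T.dist t x = T.dist x t := T.dist_comm
    have c3 : T.dist m t = T.dist t m := T.dist_comm
    have c4 : T.dist t u = T.dist u t := T.dist_comm
    have b1 := hdistle u x
    have b2 := hdistle u y
    omega
  have hvS : T.dist v v < d := by rw [dist_self]; omega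
  have pathS : ∀ (x y : V) (hx : T.dist v x < d) (hy : T.dist v y < d),
      ∃ q : (T.induce {x : V | T.dist v x < d}).Walk ⟨x, hx⟩ ⟨y, hy⟩,
        q.length = T.dist x y := by
    intro x y hx hy
    obtain ⟨p, hp, hplen⟩ := hconn.exists_path_of_dist x y
    have hS : ∀ w ∈ p.support, w ∈ {x : V | T.dist v x < d} := by
      intro w hw
      have := TreeAux.support_dist_le hT v p hp w hw
      simp only [Set.mem_setOf_eq]
      rw [le_max_iff] at this
      omega
    obtain ⟨q, hq⟩ := TreeAux.walk_in_induce p hS hx hy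
    exact ⟨q, by rw [hq, hplen]⟩
  obtain ⟨q0, hq0, hq0len⟩ := hconn.exists_path_of_dist u v
  cases q0 with
  | nil =>
    rw [dist_self] at hu
    omega
  | @cons _ b _ h01 r =>
    have hr : r.IsPath := hq0.of_cons
    have hrlen := TreeAux.length_eq_dist hT hr
    have hq0len' : r.length + 1 = T.dist u v := by
      simpa [Walk.length_cons] using hq0len
    have hduv : T.dist u v = d := by rw [dist_comm]; exact hu
    have hvb : T.dist v b = d - 1 := by rw [dist_comm]; omega
    have hbS : T.dist v b < d := by omega
    have hreach : T.Reachable v b := ⟨r.reverse⟩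
    have hedvb : T.edist v b = ((d - 1 : ℕ) : ℕ∞) := by
      have hne : T.edist v b ≠ ⊤ := edist_ne_top_iff_reachable.mpr hreach
      rw [← ENat.coe_toNat hne]
      norm_cast
    set H := T.induce {x : V | T.dist v x < d} with hH
    have hub : H.ediam = ((d - 1 : ℕ) : ℕ∞) := by
      apply le_antisymm
      · refine ediam_le_of_edist_le ?_
        rintro ⟨a, ha⟩ ⟨c, hc⟩
        obtain ⟨q, hq⟩ := pathS a c ha hc
        calc H.edist ⟨a, ha⟩ ⟨c, hc⟩ ≤ (q.length : ℕ∞) := edist_le q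
          _ ≤ ((d - 1 : ℕ) : ℕ∞) := by
              rw [hq]; exact_mod_cast key a c ha hc
      · calc ((d - 1 : ℕ) : ℕ∞) = T.edist v b := hedvb.symm
          _ ≤ H.edist ⟨v, hvS⟩ ⟨b, hbS⟩ := TreeAux.edist_induce_le _ _
          _ ≤ H.ediam := edist_le_ediam
    rw [diam, hub, ENat.toNat_coe]
end

section
/- Let T be a weakly non-3-peripheral tree with even diameter, and let u ∈ V(T) be a vertex such that T_{u⁺} (T with an extra leaf attached to u) is 3-peripheral. Then for every peripheral vertex v of T, d(u,v) = diam(T) − 1. -/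
open SimpleGraph

/-- The tree `T` with an extra leaf (the vertex `none`) attached to `u`. -/
def addLeaf {V : Type*} (T : SimpleGraph V) (u : V) : SimpleGraph (Option V) where
  Adj x y :=
    match x, y with
    | some a, some b => T.Adj a b
    | some a, none => a = u
    | none, some b => b = u
    | none, none => False
  symm := by
    constructor
    intro x y h
    cases x <;> cases y <;> simp_all <;> exact h.symm
  loopless := by
    constructor
    intro x
    cases x <;> simp

section AuxTree
variable {V : Type*} {G : SimpleGraph V}



private lemma tree_path_len (hT : G.IsTree) {x y : V}
    {w : G.Walk x y} (hw : w.IsPath) : w.length = G.dist x y := by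
  obtain ⟨p, hp⟩ := hT.isConnected.exists_walk_length_eq_dist x y
  have hpp : p.IsPath := p.isPath_of_length_eq_dist hp
  have h2 := hT.IsAcyclic.path_unique ⟨w, hw⟩ ⟨p, hpp⟩
  rw [show w = p from congrArg Subtype.val h2, hp]

private lemma tree_dist_add (hT : G.IsTree) {x y m : V} {w : G.Walk x y}
    (hw : w.IsPath) (hm : m ∈ w.support) :
    G.dist x m + G.dist m y = G.dist x y := by
  classical
  rw [← tree_path_len hT (hw.takeUntil hm), ← tree_path_len hT (hw.dropUntil hm),
      ← SimpleGraph.Walk.length_append, w.take_spec hm, tree_path_len hT hw]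

private lemma tree_factC (hT : G.IsTree) {x y m n : V} {w : G.Walk x y}
    (hw : w.IsPath) (hm : m ∈ w.support) (hn : n ∈ w.support) :
    G.dist x m + G.dist m n = G.dist x n ∨ G.dist x n + G.dist n m = G.dist x m := by
  classical
  have hm' := hm
  rw [← w.take_spec hn] at hm'
  rcases (SimpleGraph.Walk.mem_support_append_iff _ _).mp hm' with h | h
  · exact Or.inl (tree_dist_add hT (hw.takeUntil hn) h)
  · have e1 := tree_dist_add hT (hw.dropUntil hn) h
    have e2 := tree_dist_add hT hw hn
    have e3 := tree_dist_add hT hw hm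
    omega


private lemma isPath_append' {a b c : V} {p : G.Walk a b} {q : G.Walk b c}
    (hp : p.IsPath) (hq : q.IsPath) (h : ∀ x, x ∈ p.support → x ∈ q.support → x = b) :
    (p.append q).IsPath := by
  apply SimpleGraph.Walk.IsPath.mk'
  rw [SimpleGraph.Walk.support_append]
  refine List.Nodup.append hp.support_nodup (hq.support_nodup.tail) ?_
  intro x hx1 hx2
  have hxq : x ∈ q.support := List.mem_of_mem_tail hx2
  have hxb : x = b := h x hx1 hxq
  subst hxb
  have : q.support = x :: q.support.tail := q.support_eq_cons
  have hnd := hq.support_nodup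
  rw [this] at hnd
  exact (List.nodup_cons.mp hnd).1 hx2

private lemma walk_prefix (S : Set V) :
    ∀ {a b : V} (w : G.Walk a b), b ∈ S →
    ∃ (m : V) (w1 : G.Walk a m) (w2 : G.Walk m b), m ∈ S ∧ w = w1.append w2 ∧
      ∀ x ∈ w1.support, x ∈ S → x = m := by
  classical
  intro a b w
  induction w with
  | @nil a =>
    intro hb
    exact ⟨a, SimpleGraph.Walk.nil, SimpleGraph.Walk.nil, hb, rfl,
      fun x hx _ => by simpa using hx⟩
  | @cons a a' b h p ih =>
    intro hb
    by_cases ha : a ∈ S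
    · exact ⟨a, SimpleGraph.Walk.nil, SimpleGraph.Walk.cons h p, ha, rfl,
        fun x hx _ => by simpa using hx⟩
    · obtain ⟨m, w1, w2, hm, heq, hmin⟩ := ih hb
      refine ⟨m, SimpleGraph.Walk.cons h w1, w2, hm, by rw [SimpleGraph.Walk.cons_append, ← heq],
        ?_⟩
      intro x hx hxS
      rw [SimpleGraph.Walk.support_cons] at hx
      rcases List.mem_cons.mp hx with rfl | hx'
      · exact absurd hxS ha
      · exact hmin x hx' hxS

private lemma tree_proj (hT : G.IsTree) {b c : V} {p : G.Walk b c} (hp : p.IsPath) (v : V) :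
    ∃ m ∈ p.support, G.dist v b = G.dist v m + G.dist m b ∧
      G.dist v c = G.dist v m + G.dist m c := by
  classical
  obtain ⟨q, hq⟩ := hT.isConnected.exists_walk_length_eq_dist v b
  have hqp : q.IsPath := q.isPath_of_length_eq_dist hq
  obtain ⟨m, w1, w2, hmS, heq, hmin⟩ :=
    walk_prefix {x | x ∈ p.support} q p.start_mem_support
  have hq2 : (w1.append w2).IsPath := heq ▸ hqp
  have h1 : w1.IsPath := hq2.of_append_left
  have h2 : w2.IsPath := hq2.of_append_right
  have hlen : q.length = w1.length + w2.length := by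
    rw [heq, SimpleGraph.Walk.length_append]
  have e1 : G.dist v m = w1.length := (tree_path_len hT h1).symm
  have e2 : G.dist m b = w2.length := (tree_path_len hT h2).symm
  have hr : (p.dropUntil m hmS).IsPath := hp.dropUntil hmS
  have hcomb : (w1.append (p.dropUntil m hmS)).IsPath := by
    refine isPath_append' h1 hr ?_
    intro x hx1 hx2
    exact hmin x hx1 (SimpleGraph.Walk.support_dropUntil_subset p hmS hx2)
  have e3 : G.dist v c = w1.length + (p.dropUntil m hmS).length := by
    rw [← tree_path_len hT hcomb, SimpleGraph.Walk.length_append]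
  have e4 : G.dist m c = (p.dropUntil m hmS).length := (tree_path_len hT hr).symm
  exact ⟨m, hmS, by omega, by omega⟩

private lemma tree_parity (hT : G.IsTree) (x y z : V) :
    Even (G.dist x y + G.dist x z + G.dist y z) := by
  obtain ⟨p, hp⟩ := hT.isConnected.exists_walk_length_eq_dist y z
  have hpp : p.IsPath := p.isPath_of_length_eq_dist hp
  obtain ⟨m, hm, e1, e2⟩ := tree_proj hT hpp x
  have e3 := tree_dist_add hT hpp hm
  have c1 : G.dist x m = G.dist m x := SimpleGraph.dist_comm
  have c2 : G.dist x y = G.dist y x := SimpleGraph.dist_comm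
  have c3 : G.dist m y = G.dist y m := SimpleGraph.dist_comm
  exact ⟨G.dist x m + G.dist y z, by omega⟩

private lemma step1 (hT : G.IsTree) {D : ℕ} {b c v w : V}
    (hbc : G.dist b c = D) (hvw : G.dist v w = D)
    (hwb : G.dist w b ≤ D) (hwc : G.dist w c ≤ D)
    (hvb : G.dist v b ≤ D) (hvc : G.dist v c ≤ D) :
    G.dist v b = D ∨ G.dist v c = D := by
  obtain ⟨p, hp⟩ := hT.isConnected.exists_walk_length_eq_dist b c
  have hpp : p.IsPath := p.isPath_of_length_eq_dist hp
  obtain ⟨m, hm, em1, em2⟩ := tree_proj hT hpp v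
  obtain ⟨n, hn, en1, en2⟩ := tree_proj hT hpp w
  have fm := tree_dist_add hT hpp hm
  have fn := tree_dist_add hT hpp hn
  have fc := tree_factC hT hpp hm hn
  have t1 : G.dist v w ≤ G.dist v m + G.dist m w := hT.isConnected.dist_triangle
  have t2 : G.dist m w ≤ G.dist m n + G.dist n w := hT.isConnected.dist_triangle
  have c1 : G.dist m b = G.dist b m := SimpleGraph.dist_comm
  have c2 : G.dist m c = G.dist c m := SimpleGraph.dist_comm
  have c3 : G.dist n b = G.dist b n := SimpleGraph.dist_comm
  have c4 : G.dist n c = G.dist c n := SimpleGraph.dist_comm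
  have c5 : G.dist n w = G.dist w n := SimpleGraph.dist_comm
  have c6 : G.dist n m = G.dist m n := SimpleGraph.dist_comm
  omega

private lemma step2 (hT : G.IsTree) {D : ℕ} {b c u v : V}
    (hD : 1 ≤ D) (hbc : G.dist b c = D)
    (hub : G.dist u b = D - 1) (huc : G.dist u c = D - 1)
    (hvc : G.dist v c = D) (hvb : G.dist v b + 2 ≤ D) :
    D - 1 ≤ G.dist u v := by
  obtain ⟨p, hp⟩ := hT.isConnected.exists_walk_length_eq_dist v c
  have hpp : p.IsPath := p.isPath_of_length_eq_dist hp
  obtain ⟨s, hs, es1, es2⟩ := tree_proj hT hpp u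
  obtain ⟨t, ht, et1, et2⟩ := tree_proj hT hpp b
  have fs := tree_dist_add hT hpp hs
  have ft := tree_dist_add hT hpp ht
  have fc := tree_factC hT hpp hs ht
  have t1 : G.dist u b ≤ G.dist u s + G.dist s b := hT.isConnected.dist_triangle
  have t2 : G.dist s b ≤ G.dist s t + G.dist t b := hT.isConnected.dist_triangle
  have c1 : G.dist s v = G.dist v s := SimpleGraph.dist_comm
  have c2 : G.dist s c = G.dist c s := SimpleGraph.dist_comm
  have c3 : G.dist t v = G.dist v t := SimpleGraph.dist_comm
  have c4 : G.dist t c = G.dist c t := SimpleGraph.dist_comm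
  have c5 : G.dist t b = G.dist b t := SimpleGraph.dist_comm
  have c6 : G.dist t s = G.dist s t := SimpleGraph.dist_comm
  have c7 : G.dist u v = G.dist u s + G.dist s v := es1
  have c8 : G.dist b v = G.dist v b := SimpleGraph.dist_comm
  omega
end AuxTree

section AuxAddLeaf


variable {V : Type*} {T : SimpleGraph V} {u : V}

private def someHom (T : SimpleGraph V) (u : V) : T →g addLeaf T u where
  toFun := some
  map_rel' := fun h => h

@[simp] private lemma someHom_apply (a : V) : someHom T u a = some a := rfl

private lemma addLeaf_down :
    ∀ (n : ℕ) {x y : Option V} (w : (addLeaf T u).Walk x y), w.length ≤ n →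
      ∀ a b : V, x = some a → y = some b → ∃ w' : T.Walk a b, w'.length ≤ w.length := by
  intro n
  induction n with
  | zero =>
    intro x y w hw a b hx hy
    cases w with
    | nil =>
      subst hx
      obtain rfl : a = b := Option.some_injective _ hy
      exact ⟨SimpleGraph.Walk.nil, by simp⟩
    | cons h p => simp at hw
  | succ n ih =>
    intro x y w hw a b hx hy
    cases w with
    | nil =>
      subst hx
      obtain rfl : a = b := Option.some_injective _ hy
      exact ⟨SimpleGraph.Walk.nil, by simp⟩
    | @cons _ z _ h p =>
      subst hx; subst hy
      cases z with
      | some z' =>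
        have hadj : T.Adj a z' := h
        have hlen : p.length ≤ n := by
          simp only [SimpleGraph.Walk.length_cons] at hw; omega
        obtain ⟨w', hw'⟩ := ih p hlen z' b rfl rfl
        exact ⟨SimpleGraph.Walk.cons hadj w', by
          simp only [SimpleGraph.Walk.length_cons]; omega⟩
      | none =>
        have ha : a = u := h
        cases p with
        | @cons _ z2 _ h2 p2 =>
          cases z2 with
          | none => exact absurd h2 (by intro hf; exact hf)
          | some z2' =>
            have haz : z2' = a := (h2 : z2' = u).trans ha.symm
            subst haz
            have hlen : p2.length ≤ n := by
              simp only [SimpleGraph.Walk.length_cons] at hw ⊢; omega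
            obtain ⟨w', hw'⟩ := ih p2 hlen z2' b rfl rfl
            exact ⟨w', by simp only [SimpleGraph.Walk.length_cons]; omega⟩

private lemma addLeaf_dist_some (hc : T.Connected) (x y : V) :
    (addLeaf T u).dist (some x) (some y) = T.dist x y := by
  apply le_antisymm
  · obtain ⟨p, hp⟩ := hc.exists_walk_length_eq_dist x y
    calc (addLeaf T u).dist (some x) (some y) ≤ (p.map (someHom T u)).length :=
          SimpleGraph.dist_le _
      _ = T.dist x y := by rw [SimpleGraph.Walk.length_map, hp]
  · have hr : (addLeaf T u).Reachable (some x) (some y) := (hc x y).map (someHom T u)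
    obtain ⟨q, hq⟩ := hr.exists_walk_length_eq_dist
    obtain ⟨w', hw'⟩ := addLeaf_down q.length q le_rfl x y rfl rfl
    calc T.dist x y ≤ w'.length := SimpleGraph.dist_le _
      _ ≤ q.length := hw'
      _ = _ := hq

private lemma addLeaf_adj_none : (addLeaf T u).Adj none (some u) := rfl

private lemma addLeaf_dist_none (hc : T.Connected) (x : V) :
    (addLeaf T u).dist none (some x) = T.dist u x + 1 := by
  apply le_antisymm
  · obtain ⟨p, hp⟩ := hc.exists_walk_length_eq_dist u x
    calc (addLeaf T u).dist none (some x)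
        ≤ (SimpleGraph.Walk.cons addLeaf_adj_none (p.map (someHom T u))).length :=
          SimpleGraph.dist_le _
      _ = T.dist u x + 1 := by
          exact congrArg (· + 1) ((SimpleGraph.Walk.length_map _ p).trans hp)
  · have hr : (addLeaf T u).Reachable none (some x) :=
      (addLeaf_adj_none.reachable).trans ((hc u x).map (someHom T u))
    obtain ⟨q, hq⟩ := hr.exists_walk_length_eq_dist
    rw [← hq]
    cases q with
    | @cons _ z _ h p =>
      cases z with
      | none => exact absurd h (by intro hf; exact hf)
      | some z' =>
        have hz : z' = u := h
        obtain ⟨w', hw'⟩ := addLeaf_down p.length p le_rfl z' x rfl rfl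
        have h1 : T.dist z' x ≤ p.length := le_trans (SimpleGraph.dist_le w') hw'
        have h2 : T.dist u x = T.dist z' x := by rw [hz]
        simp only [SimpleGraph.Walk.length_cons]
        omega

private lemma addLeaf_connected (hc : T.Connected) : (addLeaf T u).Connected := by
  rw [SimpleGraph.connected_iff]
  refine ⟨?_, ⟨none⟩⟩
  have key : ∀ o : Option V, (addLeaf T u).Reachable o (some u) := by
    intro o
    cases o with
    | none => exact addLeaf_adj_none.reachable
    | some a => exact (hc a u).map (someHom T u)
  intro x y
  exact (key x).trans (key y).symm

private lemma ediam_ne_top' {W : Type*} [Fintype W] [Nonempty W] {G : SimpleGraph W}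
    (hc : G.Connected) : G.ediam ≠ ⊤ := by
  obtain ⟨x, y, hxy⟩ := G.exists_edist_eq_ediam_of_finite
  rw [← hxy]
  obtain ⟨p, hp⟩ := hc.exists_walk_length_eq_edist x y
  rw [← hp]
  simp
end AuxAddLeaf


/-- If `T` is a weakly non-3-peripheral tree with even diameter, witnessed by `u` with
`T_{u⁺}` 3-peripheral, then every peripheral vertex `v` of `T` satisfies
`d(u,v) = diam(T) - 1`. -/
theorem weakly_non_three_peripheral_dist {V : Type*} [Fintype V]
    (T : SimpleGraph V) (hT : T.IsTree)
    (heven : Even T.diam) (hnp : ¬ ThreePeripheral T)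
    (u : V) (hu : ThreePeripheral (addLeaf T u))
    (v : V) (hv : ecc T v = T.diam) :
    T.dist u v = T.diam - 1 := by
  classical
  haveI : Nonempty V := ⟨u⟩
  have hcT := hT.isConnected
  have hcT' : (addLeaf T u).Connected := addLeaf_connected hcT
  have hne : T.ediam ≠ ⊤ := ediam_ne_top' hcT
  have hne' : (addLeaf T u).ediam ≠ ⊤ := ediam_ne_top' hcT'
  obtain ⟨a, b0, c0, hab, hac, hbc0, d1, d2, d3⟩ := hu
  have hDle : T.diam ≤ (addLeaf T u).diam := by
    obtain ⟨x, y, hxy⟩ := T.exists_dist_eq_diam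
    calc T.diam = T.dist x y := hxy.symm
      _ = (addLeaf T u).dist (some x) (some y) := (addLeaf_dist_some hcT x y).symm
      _ ≤ _ := SimpleGraph.dist_le_diam hne'
  have hD'le : (addLeaf T u).diam ≤ T.diam := by
    have hpair : ∃ x y : V, T.dist x y = (addLeaf T u).diam := by
      rcases a with _ | a' <;> rcases b0 with _ | b' <;> rcases c0 with _ | c'
      · exact absurd rfl hab
      · exact absurd rfl hab
      · exact absurd rfl hac
      · exact ⟨b', c', by rw [← addLeaf_dist_some hcT b' c']; exact d3⟩
      · exact absurd rfl hbc0
      · exact ⟨a', c', by rw [← addLeaf_dist_some hcT a' c']; exact d2⟩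
      · exact ⟨a', b', by rw [← addLeaf_dist_some hcT a' b']; exact d1⟩
      · exact ⟨a', b', by rw [← addLeaf_dist_some hcT a' b']; exact d1⟩
    obtain ⟨x, y, hxy⟩ := hpair
    rw [← hxy]
    exact SimpleGraph.dist_le_diam hne
  have hDD : (addLeaf T u).diam = T.diam := le_antisymm hD'le hDle
  have hwit : ∃ b c : V, b ≠ c ∧ T.dist b c = T.diam ∧
      T.dist u b + 1 = T.diam ∧ T.dist u c + 1 = T.diam := by
    rcases a with _ | a' <;> rcases b0 with _ | b' <;> rcases c0 with _ | c'
    · exact absurd rfl hab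
    · exact absurd rfl hab
    · exact absurd rfl hac
    · refine ⟨b', c', fun h => hbc0 (by rw [h]), ?_, ?_, ?_⟩
      · rw [← hDD, ← addLeaf_dist_some hcT b' c']; exact d3
      · rw [← addLeaf_dist_none hcT b', d1, hDD]
      · rw [← addLeaf_dist_none hcT c', d2, hDD]
    · exact absurd rfl hbc0
    · refine ⟨a', c', fun h => hac (by rw [h]), ?_, ?_, ?_⟩
      · rw [← hDD, ← addLeaf_dist_some hcT a' c']; exact d2
      · rw [← addLeaf_dist_none hcT a', SimpleGraph.dist_comm, d1, hDD]
      · rw [← addLeaf_dist_none hcT c', d3, hDD]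
    · refine ⟨a', b', fun h => hab (by rw [h]), ?_, ?_, ?_⟩
      · rw [← hDD, ← addLeaf_dist_some hcT a' b']; exact d1
      · rw [← addLeaf_dist_none hcT a', SimpleGraph.dist_comm, d2, hDD]
      · rw [← addLeaf_dist_none hcT b', SimpleGraph.dist_comm, d3, hDD]
    · refine absurd ⟨a', b', c', fun h => hab (by rw [h]), fun h => hac (by rw [h]),
        fun h => hbc0 (by rw [h]), ?_, ?_, ?_⟩ hnp
      · rw [← hDD, ← addLeaf_dist_some hcT a' b']; exact d1
      · rw [← hDD, ← addLeaf_dist_some hcT a' c']; exact d2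
      · rw [← hDD, ← addLeaf_dist_some hcT b' c']; exact d3
  obtain ⟨b, c, hbcne, hdbc, hdub1, hduc1⟩ := hwit
  have hD1 : 1 ≤ T.diam := by omega
  have hD2 : 2 ≤ T.diam := by obtain ⟨k, hk⟩ := heven; omega
  have hdub : T.dist u b = T.diam - 1 := by omega
  have hduc : T.dist u c = T.diam - 1 := by omega
  have hub_all : ∀ x : V, T.dist u x + 1 ≤ T.diam := by
    intro x
    have h1 : (addLeaf T u).dist none (some x) ≤ (addLeaf T u).diam :=
      SimpleGraph.dist_le_diam hne'
    rw [addLeaf_dist_none hcT, hDD] at h1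
    exact h1
  have hupper : T.dist u v ≤ T.diam - 1 := by have := hub_all v; omega
  have hsup : Finset.univ.sup (T.dist v) = T.diam := hv
  obtain ⟨w, -, hwsup⟩ := Finset.exists_mem_eq_sup (Finset.univ : Finset V)
    Finset.univ_nonempty (T.dist v)
  have hvw : T.dist v w = T.diam := by rw [← hwsup, hsup]
  have hle : ∀ x y : V, T.dist x y ≤ T.diam := fun x y => SimpleGraph.dist_le_diam hne
  by_cases hveqb : v = b
  · rw [hveqb]; exact hdub
  by_cases hveqc : v = c
  · rw [hveqc]; exact hduc
  obtain ⟨k2, hk2⟩ := heven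
  rcases step1 hT hdbc hvw (hle w b) (hle w c) (hle v b) (hle v c) with hcase | hcase
  · -- dist v b = T.diam
    have hvcne : T.dist v c ≠ T.diam := by
      intro h
      exact hnp ⟨b, c, v, hbcne, fun hh => hveqb hh.symm, fun hh => hveqc hh.symm, hdbc,
        by rw [SimpleGraph.dist_comm]; exact hcase, by rw [SimpleGraph.dist_comm]; exact h⟩
    obtain ⟨k1, hk1⟩ := tree_parity hT v b c
    have hvc2 : T.dist v c + 2 ≤ T.diam := by have := hle v c; omega
    have hdcb : T.dist c b = T.diam := by rw [SimpleGraph.dist_comm]; exact hdbc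
    have hlow := step2 hT hD1 hdcb hduc hdub hcase hvc2
    omega
  · -- dist v c = T.diam
    have hvbne : T.dist v b ≠ T.diam := by
      intro h
      exact hnp ⟨b, c, v, hbcne, fun hh => hveqb hh.symm, fun hh => hveqc hh.symm, hdbc,
        by rw [SimpleGraph.dist_comm]; exact h, by rw [SimpleGraph.dist_comm]; exact hcase⟩
    obtain ⟨k1, hk1⟩ := tree_parity hT v b c
    have hvb2 : T.dist v b + 2 ≤ T.diam := by have := hle v b; omega
    have hlow := step2 hT hD1 hdbc hdub hduc hcase hvb2
    omega
end

section
/- If G and H are connected graphs with |V(G)| ≥ 2 and |V(H)| ≥ 3, c is an exact r-coloring (r ≥ 3) of G □ H with no rainbow 3-AP, and w_i w_j is an edge of H, then the union of the two fibers G_i and G_j (copies of G over w_i and w_j) receives at most 2 colors. -/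
open SimpleGraph


private lemma bp_walk_le {α β : Type*} {G : SimpleGraph α} {H : SimpleGraph β}
    (hG : G.Connected) (hH : H.Connected) :
    ∀ {x y : α × β} (w : (G □ H).Walk x y),
      G.dist x.1 y.1 + H.dist x.2 y.2 ≤ w.length := by
  intro x y w
  induction w with
  | nil => simp
  | @cons a b y h p ih =>
    rcases (boxProd_adj.mp h) with ⟨ha, he⟩ | ⟨ha, he⟩
    · have h1 : G.dist a.1 b.1 ≤ 1 := by
        have := SimpleGraph.dist_le (Walk.cons ha Walk.nil)
        simpa using this
      have h2 : G.dist a.1 y.1 ≤ G.dist a.1 b.1 + G.dist b.1 y.1 := hG.dist_triangle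
      have h3 : H.dist a.2 y.2 = H.dist b.2 y.2 := by rw [he]
      simp only [Walk.length_cons]
      omega
    · have h1 : H.dist a.2 b.2 ≤ 1 := by
        have := SimpleGraph.dist_le (Walk.cons ha Walk.nil)
        simpa using this
      have h2 : H.dist a.2 y.2 ≤ H.dist a.2 b.2 + H.dist b.2 y.2 := hH.dist_triangle
      have h3 : G.dist a.1 y.1 = G.dist b.1 y.1 := by rw [he]
      simp only [Walk.length_cons]
      omega

private lemma bpdist {α β : Type*} {G : SimpleGraph α} {H : SimpleGraph β}
    (hG : G.Connected) (hH : H.Connected) (x y : α × β) :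
    (G □ H).dist x y = G.dist x.1 y.1 + H.dist x.2 y.2 := by
  refine le_antisymm ?_ ?_
  · obtain ⟨p, hp⟩ := (hG.preconnected x.1 y.1).exists_walk_length_eq_dist
    obtain ⟨q, hq⟩ := (hH.preconnected x.2 y.2).exists_walk_length_eq_dist
    have := SimpleGraph.dist_le ((p.boxProdLeft H x.2).append (q.boxProdRight G y.1))
    calc (G □ H).dist x y ≤ _ := this
      _ = _ := by
        rw [Walk.length_append]
        unfold Walk.boxProdLeft Walk.boxProdRight
        exact congrArg₂ (· + ·) ((Walk.length_map _ p).trans hp) ((Walk.length_map _ q).trans hq)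
  · obtain ⟨w, hw⟩ := ((hG.boxProd hH).preconnected x y).exists_walk_length_eq_dist
    exact hw ▸ bp_walk_le hG hH w


private lemma dist_getVert_le {α : Type*} {G : SimpleGraph α} (hG : G.Connected) {u z : α}
    (p : G.Walk u z) : ∀ k, G.dist u (p.getVert k) ≤ k := by
  intro k
  induction k with
  | zero => simp [Walk.getVert_zero]
  | succ k ih =>
    by_cases hk : k < p.length
    · have hadj := p.adj_getVert_succ hk
      have h1 : G.dist (p.getVert k) (p.getVert (k + 1)) ≤ 1 := by
        have := SimpleGraph.dist_le (Walk.cons hadj Walk.nil)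
        simpa using this
      have h2 := hG.dist_triangle (u := u) (v := p.getVert k) (w := p.getVert (k + 1))
      omega
    · have h : p.getVert (k + 1) = p.getVert k := by
        rw [p.getVert_of_length_le (by omega), p.getVert_of_length_le (by omega)]
      rw [h]
      omega

private lemma geo {α : Type*} {G : SimpleGraph α} (hG : G.Connected) {u z : α}
    (p : G.Walk u z) (hp : p.length = G.dist u z) {l : ℕ} (hl : l ≤ p.length) :
    G.dist u (p.getVert l) = l ∧ G.dist (p.getVert l) z = p.length - l := by
  have h1 := dist_getVert_le hG p l
  have h2 : G.dist (p.getVert l) z ≤ p.length - l := by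
    have h3 := dist_getVert_le hG p.reverse (p.length - l)
    rw [Walk.getVert_reverse] at h3
    have h4 : p.length - (p.length - l) = l := by omega
    rw [h4] at h3
    rw [SimpleGraph.dist_comm]
    exact h3
  have h5 := hG.dist_triangle (u := u) (v := p.getVert l) (w := z)
  rw [← hp] at h5
  omega

private lemma aux {α β : Type*} {G : SimpleGraph α} {H : SimpleGraph β} {r : ℕ}
    {c : α × β → Fin r}
    (hG : G.Connected)
    {wi wj : β} (hij : H.Adj wi wj)
    (nr : ∀ (u1 u2 u3 : α) (b1 b2 b3 : β),
      G.dist u1 u2 + H.dist b1 b2 = G.dist u2 u3 + H.dist b2 b3 →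
      c (u1, b1) = c (u2, b2) ∨ c (u2, b2) = c (u3, b3) ∨ c (u1, b1) = c (u3, b3))
    (hwk : ∃ wk, wk ≠ wi ∧ wk ≠ wj ∧ (H.Adj wk wi ∨ H.Adj wk wj))
    (hH : H.Connected)
    (u₀ z : α) (hmix : c (u₀, wi) ≠ c (u₀, wj))
    (hzi : c (z, wi) ≠ c (u₀, wi)) (hzj : c (z, wi) ≠ c (u₀, wj))
    (T : ℕ) (hT : G.dist u₀ z = T)
    (hmin : ∀ (u z' : α) (w : β), (w = wi ∨ w = wj) →
      c (u, wi) ≠ c (u, wj) → c (z', w) ≠ c (u, wi) → c (z', w) ≠ c (u, wj) →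
      T ≤ G.dist u z') : False := by
  classical
  have hij1 : H.dist wi wj = 1 := SimpleGraph.dist_eq_one_iff_adj.mpr hij
  have hji1 : H.dist wj wi = 1 := by rw [SimpleGraph.dist_comm]; exact hij1
  have hii : H.dist wi wi = 0 := SimpleGraph.dist_self
  have hjj : H.dist wj wj = 0 := SimpleGraph.dist_self
  obtain hT0 | hT1 | hT2 : T = 0 ∨ T = 1 ∨ 2 ≤ T := by omega
  · subst hT0
    have h : u₀ = z := hG.dist_eq_zero_iff.mp hT
    exact hzi (by rw [h])
  · subst hT1
    have e1 : G.dist z u₀ = 1 := by rw [SimpleGraph.dist_comm]; exact hT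
    have e2 : G.dist u₀ u₀ = 0 := SimpleGraph.dist_self
    rcases nr z u₀ u₀ wi wi wj (by rw [e1, e2, hii, hij1]) with h | h | h
    · exact hzi h
    · exact hmix h
    · exact hzj h
  obtain ⟨pw, hpw⟩ := (hG.preconnected u₀ z).exists_walk_length_eq_dist
  have hlen : pw.length = T := by rw [hpw, hT]
  set v : ℕ → α := fun l => pw.getVert l with hv
  have dU : ∀ l, l ≤ T → G.dist u₀ (v l) = l := by
    intro l hl
    exact (geo hG pw hpw (by omega)).1
  have dZ : ∀ l, l ≤ T → G.dist (v l) z = T - l := by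
    intro l hl
    have h := (geo hG pw hpw (l := l) (by omega)).2
    rw [hlen] at h
    exact h
  have hvalPQ : ∀ l, 1 ≤ l → l ≤ T - 1 → ∀ w', (w' = wi ∨ w' = wj) →
      (c (v l, w') = c (u₀, wi) ∨ c (v l, w') = c (u₀, wj)) := by
    intro l h1 h2 w' hw'
    by_contra hcon
    push_neg at hcon
    have h := hmin u₀ (v l) w' hw' hmix hcon.1 hcon.2
    rw [dU l (by omega)] at h
    omega
  have hconst : ∀ l, 1 ≤ l → l ≤ T - 1 → c (v l, wi) = c (v l, wj) := by
    intro l h1 h2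
    by_contra hcon
    have h3 : c (z, wi) ≠ c (v l, wi) := by
      rcases hvalPQ l h1 h2 wi (Or.inl rfl) with h | h
      · rw [h]; exact hzi
      · rw [h]; exact hzj
    have h4 : c (z, wi) ≠ c (v l, wj) := by
      rcases hvalPQ l h1 h2 wj (Or.inr rfl) with h | h
      · rw [h]; exact hzi
      · rw [h]; exact hzj
    have h := hmin (v l) z wi (Or.inl rfl) hcon h3 h4
    rw [dZ l (by omega)] at h
    omega
  have hmPQ := hvalPQ (T - 1) (by omega) (le_refl _) wi (Or.inl rfl)
  have hsm : c (z, wi) ≠ c (v (T - 1), wi) := by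
    rcases hmPQ with h | h
    · rw [h]; exact hzi
    · rw [h]; exact hzj
  have e1 : G.dist z z = 0 := SimpleGraph.dist_self
  have e2 : G.dist z (v (T - 1)) = 1 := by
    rw [SimpleGraph.dist_comm]
    have h := dZ (T - 1) (by omega)
    omega
  have e3 : G.dist (v (T - 1)) u₀ = T - 1 := by
    rw [SimpleGraph.dist_comm]; exact dU (T - 1) (by omega)
  have hcjT := hconst (T - 1) (by omega) (le_refl _)
  rcases hmPQ with hmp | hmq
  case inr =>
    -- m = q : immediate rainbow
    rcases nr (v (T - 1)) u₀ z wj wi wi (by rw [e3, hT, hji1, hii]; omega) with h | h | h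
    · rw [← hcjT, hmq] at h; exact hmix h.symm
    · exact hzi h.symm
    · rw [← hcjT, hmq] at h; exact hzj h.symm
  case inl =>
  -- m = p
  have hs2 : c (z, wj) = c (z, wi) ∨ c (z, wj) = c (v (T - 1), wi) := by
    rcases nr z z (v (T - 1)) wj wi wi (by rw [e1, e2, hji1, hii]) with h | h | h
    · exact Or.inl h
    · exact absurd h hsm
    · exact Or.inr h
  rcases hs2 with hs2 | hs2
  · -- s₂ = s : rainbow
    rcases nr (v (T - 1)) u₀ z wi wj wj (by rw [e3, hT, hij1, hjj]; omega) with h | h | h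
    · rw [hmp] at h; exact hmix h
    · rw [hs2] at h; exact hzj h.symm
    · rw [hmp, hs2] at h; exact hzi h.symm
  · -- s₂ = m
    by_cases hex : ∃ l, (1 ≤ l ∧ l ≤ T - 1) ∧ c (v l, wi) ≠ c (v (T - 1), wi)
    · obtain ⟨l₀, ⟨hl₀1, hl₀2⟩, hl₀3⟩ := hex
      have hspec := Nat.findGreatest_spec (P := fun l => 1 ≤ l ∧ c (v l, wi) ≠ c (v (T - 1), wi))
        hl₀2 ⟨hl₀1, hl₀3⟩
      obtain ⟨hL1, hL2⟩ := hspec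
      set L := Nat.findGreatest (fun l => 1 ≤ l ∧ c (v l, wi) ≠ c (v (T - 1), wi)) (T - 1) with hL
      have hLle : L ≤ T - 1 := Nat.findGreatest_le _
      have hLne : L ≠ T - 1 := by
        intro h
        rw [h] at hL2
        exact hL2 rfl
      have hnext : c (v (L + 1), wi) = c (v (T - 1), wi) := by
        by_contra hcon
        exact Nat.findGreatest_is_greatest
          (P := fun l => 1 ≤ l ∧ c (v l, wi) ≠ c (v (T - 1), wi)) (n := T - 1) (k := L + 1)
          (by omega) (by omega) ⟨by omega, hcon⟩
      have hnextj : c (v (L + 1), wj) = c (v (T - 1), wi) := by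
        rw [← hconst (L + 1) (by omega) (by omega)]; exact hnext
      have e4 : G.dist (v (L + 1)) z = T - (L + 1) := dZ (L + 1) (by omega)
      have e5 : G.dist z (v L) = T - L := by
        rw [SimpleGraph.dist_comm]; exact dZ L (by omega)
      have hsq : c (z, wi) ≠ c (v L, wi) := by
        rcases hvalPQ L hL1 (by omega) wi (Or.inl rfl) with h | h
        · rw [h]; exact hzi
        · rw [h]; exact hzj
      rcases nr (v (L + 1)) z (v L) wj wi wi (by rw [e4, e5, hji1, hii]; omega) with h | h | h
      · rw [hnextj] at h; exact hsm h.symm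
      · exact hsq h
      · rw [hnextj] at h; exact hL2 h.symm
    · push_neg at hex
      have hall : ∀ l, 1 ≤ l → l ≤ T - 1 → c (v l, wi) = c (v (T - 1), wi) := by
        intro l h1 h2
        exact hex l ⟨h1, h2⟩
      rcases Nat.even_or_odd T with ⟨k, hk⟩ | ⟨k, hk⟩
      · -- T even, T = k + k
        obtain ⟨wk, hk1, hk2, hk3⟩ := hwk
        have hd1pos : 0 < H.dist wk wi := hH.pos_dist_of_ne hk1
        have hd2pos : 0 < H.dist wk wj := hH.pos_dist_of_ne hk2
        have htri1 : H.dist wk wi ≤ H.dist wk wj + 1 := by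
          have h := hH.dist_triangle (u := wk) (v := wj) (w := wi)
          rw [hji1] at h; omega
        have htri2 : H.dist wk wj ≤ H.dist wk wi + 1 := by
          have h := hH.dist_triangle (u := wk) (v := wi) (w := wj)
          rw [hij1] at h; omega
        have hone : H.dist wk wi = 1 ∨ H.dist wk wj = 1 := by
          rcases hk3 with h | h
          · exact Or.inl (SimpleGraph.dist_eq_one_iff_adj.mpr h)
          · exact Or.inr (SimpleGraph.dist_eq_one_iff_adj.mpr h)
        have e0 : G.dist u₀ u₀ = 0 := SimpleGraph.dist_self
        have eZ : G.dist z u₀ = T := by rw [SimpleGraph.dist_comm]; exact hT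
        obtain ⟨h11, h21⟩ | ⟨h11, h22⟩ | ⟨h12, h21⟩ :
            (H.dist wk wi = 1 ∧ H.dist wk wj = 1) ∨
            (H.dist wk wi = 1 ∧ H.dist wk wj = 2) ∨
            (H.dist wk wi = 2 ∧ H.dist wk wj = 1) := by omega
        · -- case (1,1)
          have t1 := nr u₀ z u₀ wk wi wj (by rw [hT, eZ, h11, hij1])
          have t2 := nr u₀ u₀ u₀ wk wi wj (by rw [e0, h11, hij1])
          have hn1 : c (u₀, wk) = c (z, wi) ∨ c (u₀, wk) = c (u₀, wj) := by
            rcases t1 with h | h | h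
            · exact Or.inl h
            · exact absurd h hzj
            · exact Or.inr h
          have hn2 : c (u₀, wk) = c (u₀, wi) ∨ c (u₀, wk) = c (u₀, wj) := by
            rcases t2 with h | h | h
            · exact Or.inl h
            · exact absurd h hmix
            · exact Or.inr h
          have hn0 : c (u₀, wk) = c (u₀, wj) := by
            rcases hn1 with h | h
            · rcases hn2 with h' | h'
              · exact absurd (h.symm.trans h') hzi
              · exact h'
            · exact h
          have e5 : G.dist u₀ (v k) = k := dU k (by omega)
          have e6 : G.dist (v k) z = T - k := dZ k (by omega)
          have hmkj : c (v k, wj) = c (u₀, wi) := by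
            rw [← hconst k (by omega) (by omega), hall k (by omega) (by omega)]
            exact hmp
          rcases nr u₀ (v k) z wk wj wi (by rw [e5, e6, h21, hji1]; omega) with h | h | h
          · rw [hn0, hmkj] at h; exact hmix h.symm
          · rw [hmkj] at h; exact hzi h.symm
          · rw [hn0] at h; exact hzj h.symm
        · -- case (1,2)
          have t1 := nr u₀ z u₀ wk wi wj (by rw [hT, eZ, h11, hij1])
          have t2 := nr u₀ u₀ u₀ wk wi wj (by rw [e0, h11, hij1])
          have hn1 : c (u₀, wk) = c (z, wi) ∨ c (u₀, wk) = c (u₀, wj) := by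
            rcases t1 with h | h | h
            · exact Or.inl h
            · exact absurd h hzj
            · exact Or.inr h
          have hn2 : c (u₀, wk) = c (u₀, wi) ∨ c (u₀, wk) = c (u₀, wj) := by
            rcases t2 with h | h | h
            · exact Or.inl h
            · exact absurd h hmix
            · exact Or.inr h
          have hn0 : c (u₀, wk) = c (u₀, wj) := by
            rcases hn1 with h | h
            · rcases hn2 with h' | h'
              · exact absurd (h.symm.trans h') hzi
              · exact h'
            · exact h
          have h22' : H.dist wj wk = 2 := by rw [SimpleGraph.dist_comm]; exact h22
          have hmj : c (v (T - 1), wj) = c (u₀, wi) := by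
            rw [← hcjT]; exact hmp
          rcases nr (v (T - 1)) u₀ z wj wk wi (by rw [e3, hT, h22', h11]; omega) with h | h | h
          · rw [hmj, hn0] at h; exact hmix h
          · rw [hn0] at h; exact hzj h.symm
          · rw [hmj] at h; exact hzi h.symm
        · -- case (2,1)
          have h21' : H.dist wj wk = 1 := by rw [SimpleGraph.dist_comm]; exact h21
          have tA := nr z z z wk wj wi (by rw [e1, h21, hji1])
          have tB := nr z u₀ z wk wj wi (by rw [eZ, hT, h21, hji1])
          have hA : c (z, wk) = c (z, wj) ∨ c (z, wk) = c (z, wi) := by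
            rcases tA with h | h | h
            · exact Or.inl h
            · rw [hs2] at h; exact absurd h.symm hsm
            · exact Or.inr h
          have hB : c (z, wk) = c (u₀, wj) ∨ c (z, wk) = c (z, wi) := by
            rcases tB with h | h | h
            · exact Or.inl h
            · exact absurd h.symm hzj
            · exact Or.inr h
          have hnt : c (z, wk) = c (z, wi) := by
            rcases hA with h | h
            · rcases hB with h' | h'
              · rw [hs2, hmp] at h
                exact absurd (h.symm.trans h') hmix
              · exact h'
            · exact h
          have e7 : G.dist z (v 1) = T - 1 := by
            rw [SimpleGraph.dist_comm]; exact dZ 1 (by omega)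
          have h1m : c (v 1, wi) = c (u₀, wi) := by
            rw [hall 1 (by omega) (by omega)]; exact hmp
          rcases nr u₀ z (v 1) wj wk wi (by rw [hT, e7, h21', h12]; omega) with h | h | h
          · rw [hnt] at h; exact hzj h.symm
          · rw [hnt, h1m] at h; exact hzi h
          · rw [h1m] at h; exact hmix h.symm
      · -- T odd, T = 2k+1
        have e5 : G.dist u₀ (v k) = k := dU k (by omega)
        have e6 : G.dist (v k) z = T - k := dZ k (by omega)
        have hmk : c (v k, wi) = c (v (T - 1), wi) := hall k (by omega) (by omega)
        rcases nr u₀ (v k) z wj wi wi (by rw [e5, e6, hji1, hii]; omega) with h | h | h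
        · rw [hmk, hmp] at h; exact hmix h.symm
        · rw [hmk, hmp] at h; exact hzi h.symm
        · exact hzj h.symm

private lemma exists_third {β : Type*} [Fintype β] {H : SimpleGraph β} (hH : H.Connected)
    (hβ : 3 ≤ Fintype.card β) (wi wj : β) :
    ∃ wk, wk ≠ wi ∧ wk ≠ wj ∧ (H.Adj wk wi ∨ H.Adj wk wj) := by
  classical
  have hex : ∃ w : β, w ≠ wi ∧ w ≠ wj := by
    by_contra hcon
    push_neg at hcon
    have hsub : (Finset.univ : Finset β) ⊆ {wi, wj} := by
      intro w _
      rcases eq_or_ne w wi with h | h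
      · simp [h]
      · simp [hcon w h]
    have h1 := Finset.card_le_card hsub
    have h2 : ({wi, wj} : Finset β).card ≤ 2 := Finset.card_le_two
    simp only [Finset.card_univ] at h1
    omega
  obtain ⟨w, hw1, hw2⟩ := hex
  obtain ⟨pw⟩ := hH.preconnected w wi
  suffices h : ∀ (x y : β) (_ : H.Walk x y), y = wi → x ≠ wi → x ≠ wj →
      ∃ wk, wk ≠ wi ∧ wk ≠ wj ∧ (H.Adj wk wi ∨ H.Adj wk wj) by
    exact h w wi pw rfl hw1 hw2
  intro x y q
  induction q with
  | nil => intro hy hx _; exact absurd hy hx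
  | @cons a b y hab q ih =>
    intro hy hx1 hx2
    by_cases hb1 : b = wi
    · exact ⟨a, hx1, hx2, Or.inl (hb1 ▸ hab)⟩
    by_cases hb2 : b = wj
    · exact ⟨a, hx1, hx2, Or.inr (hb2 ▸ hab)⟩
    · exact ih hy hb1 hb2

private lemma exists_adj_ne {α γ : Type*} {G : SimpleGraph α} {g : α → γ} :
    ∀ {u v : α} (_ : G.Walk u v) (_ : g u ≠ g v), ∃ a b, G.Adj a b ∧ g a ≠ g b := by
  intro u v w
  induction w with
  | nil => intro h; exact absurd rfl h
  | @cons a b v hab q ih =>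
    intro h
    by_cases hq : g a = g b
    · exact ih (fun he => h (hq.trans he))
    · exact ⟨a, b, hab, hq⟩

/-- If `G` and `H` are connected, `|G| ≥ 2`, `|H| ≥ 3`, `c` is a surjective `r`-coloring
(`r ≥ 3`) of `G □ H` with no rainbow 3-AP, and `wᵢwⱼ` is an edge of `H`, then the union of
the fibers over `wᵢ` and `wⱼ` receives at most two colors. -/
theorem two_fibers_at_most_two_colors {α β : Type*} [Fintype α] [Fintype β]
    (G : SimpleGraph α) (H : SimpleGraph β) (hG : G.Connected) (hH : H.Connected)
    (hα : 2 ≤ Fintype.card α) (hβ : 3 ≤ Fintype.card β)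
    (r : ℕ) (hr : 3 ≤ r) (c : α × β → Fin r) (hc : Function.Surjective c)
    (hrb : ¬ ∃ x y z : α × β, (G □ H).dist x y = (G □ H).dist y z ∧
        c x ≠ c y ∧ c y ≠ c z ∧ c x ≠ c z)
    (wi wj : β) (hij : H.Adj wi wj) :
    ∃ a b : Fin r, ∀ u : α,
      (c (u, wi) = a ∨ c (u, wi) = b) ∧ (c (u, wj) = a ∨ c (u, wj) = b) := by
  classical
  have hdist : ∀ x y : α × β, (G □ H).dist x y = G.dist x.1 y.1 + H.dist x.2 y.2 :=
    bpdist hG hH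
  have nr : ∀ (u1 u2 u3 : α) (b1 b2 b3 : β),
      G.dist u1 u2 + H.dist b1 b2 = G.dist u2 u3 + H.dist b2 b3 →
      c (u1, b1) = c (u2, b2) ∨ c (u2, b2) = c (u3, b3) ∨ c (u1, b1) = c (u3, b3) := by
    intro u1 u2 u3 b1 b2 b3 h
    by_contra hcon
    push_neg at hcon
    exact hrb ⟨(u1, b1), (u2, b2), (u3, b3), by rw [hdist, hdist]; exact h,
      hcon.1, hcon.2.1, hcon.2.2⟩
  by_contra hcon
  push_neg at hcon
  have key : ∀ a b : Fin r, ∃ x w, (w = wi ∨ w = wj) ∧ c (x, w) ≠ a ∧ c (x, w) ≠ b := by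
    intro a b
    obtain ⟨u, hu⟩ := hcon a b
    by_cases h1 : c (u, wi) = a ∨ c (u, wi) = b
    · exact ⟨u, wj, Or.inr rfl, (hu h1).1, (hu h1).2⟩
    · push_neg at h1
      exact ⟨u, wi, Or.inl rfl, h1.1, h1.2⟩
  have hne : Nonempty α := Fintype.card_pos_iff.mp (by omega)
  obtain ⟨u₀'⟩ := hne
  obtain ⟨x1, w1, hw1, h1a, _⟩ := key (c (u₀', wi)) (c (u₀', wi))
  obtain ⟨x2, w2, hw2, h2a, h2b⟩ := key (c (u₀', wi)) (c (x1, w1))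
  by_cases hmixed : ∃ u, c (u, wi) ≠ c (u, wj)
  · -- mixed column exists
    obtain ⟨um, hum⟩ := hmixed
    obtain ⟨zb, wb, hwb, hbp, hbq⟩ := key (c (um, wi)) (c (um, wj))
    have hPex : ∃ n : ℕ, ∃ u z' : α, ∃ w : β, (w = wi ∨ w = wj) ∧ c (u, wi) ≠ c (u, wj) ∧
        c (z', w) ≠ c (u, wi) ∧ c (z', w) ≠ c (u, wj) ∧ G.dist u z' = n :=
      ⟨G.dist um zb, um, zb, wb, hwb, hum, hbp, hbq, rfl⟩
    obtain ⟨u₁, z₁, w₁, hside, hmix₁, hne1, hne2, hdT⟩ := Nat.find_spec hPex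
    have hmin : ∀ (u z' : α) (w : β), (w = wi ∨ w = wj) →
        c (u, wi) ≠ c (u, wj) → c (z', w) ≠ c (u, wi) → c (z', w) ≠ c (u, wj) →
        Nat.find hPex ≤ G.dist u z' := by
      intro u z' w hw hm hn1 hn2
      by_contra hlt
      push_neg at hlt
      exact Nat.find_min hPex hlt ⟨u, z', w, hw, hm, hn1, hn2, rfl⟩
    have hwk := exists_third hH hβ wi wj
    rcases hside with hside | hside
    · rw [hside] at hne1 hne2
      exact aux hG hij nr hwk hH u₁ z₁ hmix₁ hne1 hne2 (Nat.find hPex) hdT hmin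
    · rw [hside] at hne1 hne2
      have hwk' : ∃ wk, wk ≠ wj ∧ wk ≠ wi ∧ (H.Adj wk wj ∨ H.Adj wk wi) := by
        obtain ⟨wk, a1, a2, a3⟩ := hwk
        exact ⟨wk, a2, a1, a3.symm⟩
      have hmin' : ∀ (u z' : α) (w : β), (w = wj ∨ w = wi) →
          c (u, wj) ≠ c (u, wi) → c (z', w) ≠ c (u, wj) → c (z', w) ≠ c (u, wi) →
          Nat.find hPex ≤ G.dist u z' := by
        intro u z' w hw hm hn1 hn2
        exact hmin u z' w hw.symm hm.symm hn2 hn1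
      exact aux hG hij.symm nr hwk' hH u₁ z₁ hmix₁.symm hne2 hne1 (Nat.find hPex) hdT hmin'
  · -- all columns constant
    push_neg at hmixed
    have hb1 : c (x1, w1) = c (x1, wi) := by
      rcases hw1 with h | h
      · rw [h]
      · rw [h, ← hmixed x1]
    have hb2 : c (x2, w2) = c (x2, wi) := by
      rcases hw2 with h | h
      · rw [h]
      · rw [h, ← hmixed x2]
    have hne01 : c (u₀', wi) ≠ c (x1, wi) := fun he => h1a (hb1.trans he.symm)
    obtain ⟨pw⟩ := hG.preconnected u₀' x1
    obtain ⟨a, b, hab, hgab0⟩ := exists_adj_ne (g := fun x => c (x, wi)) pw hne01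
    have hgab : c (a, wi) ≠ c (b, wi) := hgab0
    have hz : ∃ zc : α, c (zc, wi) ≠ c (a, wi) ∧ c (zc, wi) ≠ c (b, wi) := by
      by_contra hno
      push_neg at hno
      have m0 : c (u₀', wi) = c (a, wi) ∨ c (u₀', wi) = c (b, wi) := by
        by_cases h : c (u₀', wi) = c (a, wi)
        · exact Or.inl h
        · exact Or.inr (hno u₀' h)
      have m1 : c (x1, wi) = c (a, wi) ∨ c (x1, wi) = c (b, wi) := by
        by_cases h : c (x1, wi) = c (a, wi)
        · exact Or.inl h
        · exact Or.inr (hno x1 h)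
      have m2 : c (x2, wi) = c (a, wi) ∨ c (x2, wi) = c (b, wi) := by
        by_cases h : c (x2, wi) = c (a, wi)
        · exact Or.inl h
        · exact Or.inr (hno x2 h)
      have d02 : c (u₀', wi) ≠ c (x2, wi) := fun he => h2a (hb2.trans he.symm)
      have d12 : c (x1, wi) ≠ c (x2, wi) := fun he => h2b (hb2.trans (he.symm.trans hb1.symm))
      rcases m0 with h0 | h0 <;> rcases m1 with h1 | h1 <;> rcases m2 with h2 | h2 <;>
        first
          | exact hne01 (h0.trans h1.symm)
          | exact d02 (h0.trans h2.symm)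
          | exact d12 (h1.trans h2.symm)
    obtain ⟨zc, hz1, hz2⟩ := hz
    have hdab : G.dist a b = 1 := SimpleGraph.dist_eq_one_iff_adj.mpr hab
    have hdba : G.dist b a = 1 := by rw [SimpleGraph.dist_comm]; exact hdab
    have htri1 := hG.dist_triangle (u := zc) (v := b) (w := a)
    have htri2 := hG.dist_triangle (u := zc) (v := a) (w := b)
    have hij1 : H.dist wi wj = 1 := SimpleGraph.dist_eq_one_iff_adj.mpr hij
    have hji1 : H.dist wj wi = 1 := by rw [SimpleGraph.dist_comm]; exact hij1
    have hii : H.dist wi wi = 0 := SimpleGraph.dist_self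
    have e1 : G.dist a zc = G.dist zc a := SimpleGraph.dist_comm
    obtain h | h | h : G.dist zc a = G.dist zc b ∨ G.dist zc a = G.dist zc b + 1 ∨
        G.dist zc b = G.dist zc a + 1 := by omega
    · rcases nr a zc b wi wi wi (by rw [e1, hii, h]) with h' | h' | h'
      · exact hz1 h'.symm
      · exact hz2 h'
      · exact hgab h'
    · rcases nr a zc b wi wi wj (by rw [e1, hii, hij1, h]) with h' | h' | h'
      · exact hz1 h'.symm
      · rw [← hmixed b] at h'; exact hz2 h'
      · rw [← hmixed b] at h'; exact hgab h'
    · rcases nr a zc b wj wi wi (by rw [e1, hii, hji1, h]) with h' | h' | h'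
      · rw [← hmixed a] at h'; exact hz1 h'.symm
      · exact hz2 h'
      · rw [← hmixed a] at h'; exact hgab h'
end

section
/- If T is a tree with odd diameter, then aw(P₂ □ T, 3) = 3; that is, every exact 3-coloring of P₂ □ T contains a rainbow 3-term arithmetic progression, and there exists an exact 2-coloring with no rainbow 3-AP. -/
open SimpleGraph Walk

namespace AwAux

variable {V : Type*}

/-- Layer distance on `Fin 2`. -/
def L (i j : Fin 2) : ℕ := if i = j then 0 else 1

/-- Flip a layer. -/
def fl (i : Fin 2) : Fin 2 := i + 1

lemma fl_fl (i : Fin 2) : fl (fl i) = i := by fin_cases i <;> decide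
lemma fl_ne (i : Fin 2) : fl i ≠ i := by fin_cases i <;> decide
lemma L_self (i : Fin 2) : L i i = 0 := by simp [L]
lemma L_fl (i : Fin 2) : L i (fl i) = 1 := by fin_cases i <;> decide
lemma L_fl' (i : Fin 2) : L (fl i) i = 1 := by fin_cases i <;> decide
lemma L_comm (i j : Fin 2) : L i j = L j i := by fin_cases i <;> fin_cases j <;> decide
lemma fin2_cases (k i : Fin 2) : k = i ∨ k = fl i := by fin_cases k <;> fin_cases i <;> simp [fl] <;> decide
lemma eq_fl_of_ne {i j : Fin 2} (h : i ≠ j) : j = fl i := by fin_cases i <;> fin_cases j <;> simp_all [fl] <;> decide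

section General

variable {G : SimpleGraph V} {u v : V}

lemma dist_getVert_le (hc : G.Connected) (p : G.Walk u v) (i k : ℕ) :
    G.dist (p.getVert i) (p.getVert (i + k)) ≤ k := by
  induction k with
  | zero => simp
  | succ k ih =>
    have hrw : i + (k+1) = (i + k) + 1 := by omega
    rw [hrw]
    rcases lt_or_ge (i + k) p.length with h | h
    · have h1 : G.dist (p.getVert (i+k)) (p.getVert (i+k+1)) = 1 :=
        dist_eq_one_iff_adj.mpr (p.adj_getVert_succ h)
      have h2 := hc.dist_triangle (u := p.getVert i) (v := p.getVert (i+k)) (w := p.getVert (i+k+1))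
      omega
    · have e1 : p.getVert (i+k) = v := p.getVert_of_length_le h
      have e2 : p.getVert (i+k+1) = v := p.getVert_of_length_le (by omega)
      calc G.dist (p.getVert i) (p.getVert (i+k+1)) = G.dist (p.getVert i) (p.getVert (i+k)) := by rw [e1, e2]
        _ ≤ k := ih
        _ ≤ k + 1 := by omega

/-- On a geodesic walk, distances between intermediate vertices are exact. -/
lemma geodesic_getVert (hc : G.Connected) (p : G.Walk u v) (hp : p.length = G.dist u v)
    {i j : ℕ} (hij : i ≤ j) (hj : j ≤ p.length) :
    G.dist (p.getVert i) (p.getVert j) = j - i := by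
  have h1 : G.dist u (p.getVert i) ≤ i := by
    have := dist_getVert_le hc p 0 i; simpa using this
  have h2 : G.dist (p.getVert i) (p.getVert j) ≤ j - i := by
    have := dist_getVert_le hc p i (j - i)
    rwa [Nat.add_sub_cancel' hij] at this
  have h3 : G.dist (p.getVert j) v ≤ p.length - j := by
    have := dist_getVert_le hc p j (p.length - j)
    rwa [Nat.add_sub_cancel' hj, p.getVert_length] at this
  have t1 := hc.dist_triangle (u := u) (v := p.getVert i) (w := v)
  have t2 := hc.dist_triangle (u := p.getVert i) (v := p.getVert j) (w := v)
  omega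

end General


section BoxDist

variable {T : SimpleGraph V}

noncomputable def dd (T : SimpleGraph V) (x y : Fin 2 × V) : ℕ := L x.1 y.1 + T.dist x.2 y.2

lemma dd_mk {i j : Fin 2} {u v : V} : dd T (i,u) (j,v) = L i j + T.dist u v := rfl

lemma dd_comm (x y : Fin 2 × V) : dd T x y = dd T y x := by
  simp [dd, L_comm, SimpleGraph.dist_comm]

lemma boxConnected (hc : T.Connected) : (pathGraph 2 □ T).Connected :=
  Connected.boxProd (pathGraph_connected 1) hc

lemma boxdist_le (hc : T.Connected) (x y : Fin 2 × V) :
    (pathGraph 2 □ T).dist x y ≤ dd T x y := by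
  obtain ⟨i, u⟩ := x
  obtain ⟨j, v⟩ := y
  obtain ⟨p, hp⟩ := hc.exists_walk_length_eq_dist u v
  rcases eq_or_ne i j with h | h
  · subst h
    have hle : (pathGraph 2 □ T).dist (i, u) (i, v) ≤ p.length := by
      calc (pathGraph 2 □ T).dist (i, u) (i, v)
          ≤ (Walk.boxProdRight (pathGraph 2) i p).length := SimpleGraph.dist_le _
        _ = p.length := Walk.length_map _ _
    rw [dd_mk, L_self]
    omega
  · have hadj : (pathGraph 2 □ T).Adj (i, v) (j, v) := by
      apply boxProd_adj.mpr
      left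
      exact ⟨by rw [pathGraph_two_eq_top]; exact h, rfl⟩
    have hle : (pathGraph 2 □ T).dist (i, u) (j, v) ≤ p.length + 1 := by
      calc (pathGraph 2 □ T).dist (i, u) (j, v)
          ≤ ((Walk.boxProdRight (pathGraph 2) i p).concat hadj).length := SimpleGraph.dist_le _
        _ = (Walk.boxProdRight (pathGraph 2) i p).length + 1 := Walk.length_concat _ _
        _ = p.length + 1 := congrArg (· + 1) (Walk.length_map _ _)
    rw [dd_mk]
    have : L i j = 1 := by simp [L, h]
    omega

lemma dd_le_walk (hc : T.Connected) {x y : Fin 2 × V} (w : (pathGraph 2 □ T).Walk x y) :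
    dd T x y ≤ w.length := by
  induction w with
  | nil => simp [dd, L]
  | @cons a b yy h p ih =>
    rw [Walk.length_cons]
    rcases boxProd_adj.mp h with ⟨h1, h2⟩ | ⟨h1, h2⟩
    · have hL : ∀ i j k : Fin 2, L i k ≤ 1 + L j k := by decide
      have h3 : dd T a yy ≤ 1 + dd T b yy := by
        simp only [dd, ← h2]
        have := hL a.1 b.1 yy.1
        omega
      omega
    · have hadj : T.dist a.2 b.2 = 1 := dist_eq_one_iff_adj.mpr h1
      have htri := hc.dist_triangle (u := a.2) (v := b.2) (w := yy.2)
      have h3 : dd T a yy ≤ 1 + dd T b yy := by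
        simp only [dd, ← h2]
        omega
      omega

lemma boxdist_eq (hc : T.Connected) (x y : Fin 2 × V) :
    (pathGraph 2 □ T).dist x y = dd T x y := by
  refine le_antisymm (boxdist_le hc x y) ?_
  obtain ⟨w, hw⟩ := (boxConnected hc).exists_walk_length_eq_dist x y
  have := dd_le_walk hc w
  omega

end BoxDist

section Tree

variable {T : SimpleGraph V}

lemma exists_geodesic_path (hT : T.IsTree) (u v : V) :
    ∃ p : T.Walk u v, p.IsPath ∧ p.length = T.dist u v := by
  letI := Classical.decEq V
  obtain ⟨p, hp⟩ := hT.isConnected.exists_walk_length_eq_dist u v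
  exact ⟨p.bypass, p.bypass_isPath,
    le_antisymm (p.length_bypass_le.trans hp.le) (SimpleGraph.dist_le _)⟩

lemma dist_split (hT : T.IsTree) {a b y : V} (p : T.Walk a b) (hp : p.length = T.dist a b)
    (hy : y ∈ p.support) : T.dist a y + T.dist y b = T.dist a b := by
  letI := Classical.decEq V
  have h1 : T.dist a y ≤ (p.takeUntil y hy).length := SimpleGraph.dist_le _
  have h2 : T.dist y b ≤ (p.dropUntil y hy).length := SimpleGraph.dist_le _
  have h3 : (p.takeUntil y hy).length + (p.dropUntil y hy).length = p.length := by
    have := congrArg Walk.length (p.take_spec hy)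
    rwa [Walk.length_append] at this
  have h4 := hT.isConnected.dist_triangle (u := a) (v := y) (w := b)
  omega

lemma adj_dist_ne (hT : T.IsTree) {x y : V} (hxy : T.Adj x y) (a : V) :
    T.dist a x ≠ T.dist a y := by
  classical
  intro hEq
  obtain ⟨P, hP, hPl⟩ := exists_geodesic_path hT a x
  obtain ⟨Q, hQ, hQl⟩ := exists_geodesic_path hT a y
  have hyx : T.dist y x = 1 := dist_eq_one_iff_adj.mpr hxy.symm
  have hy : y ∉ P.support := by
    intro hy
    have := dist_split hT P hPl hy
    omega
  have hR : (P.concat hxy).IsPath := by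
    rw [← Walk.isPath_reverse_iff, Walk.reverse_concat]
    exact Walk.IsPath.cons ((Walk.isPath_reverse_iff P).mpr hP)
      (by rwa [Walk.support_reverse, List.mem_reverse])
  have hEq2 := hT.IsAcyclic.path_unique ⟨Q, hQ⟩ ⟨P.concat hxy, hR⟩
  have hlen := congrArg (fun r : T.Path a y => (r : T.Walk a y).length) hEq2
  simp only [Walk.length_concat] at hlen
  omega

lemma adj_step (hT : T.IsTree) {x y : V} (hxy : T.Adj x y) (a : V) :
    T.dist a y = T.dist a x + 1 ∨ T.dist a x = T.dist a y + 1 := by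
  have h1 := adj_dist_ne hT hxy a
  have hd : T.dist x y = 1 := dist_eq_one_iff_adj.mpr hxy
  have h2 := hT.isConnected.dist_triangle (u := a) (v := x) (w := y)
  have h3 := hT.isConnected.dist_triangle (u := a) (v := y) (w := x)
  have hd' : T.dist y x = 1 := by rwa [SimpleGraph.dist_comm] at hd
  omega

lemma parity3 (hT : T.IsTree) (a b c : V) :
    (T.dist a b + T.dist b c + T.dist a c) % 2 = 0 := by
  suffices h : ∀ n (c : V), T.dist b c = n → (T.dist a b + T.dist b c + T.dist a c) % 2 = 0 by
    exact h _ c rfl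
  intro n
  induction n with
  | zero =>
    intro c h
    have : b = c := (hT.isConnected.dist_eq_zero_iff).mp h
    subst this
    omega
  | succ n ih =>
    intro c h
    obtain ⟨p, hp⟩ := hT.isConnected.exists_walk_length_eq_dist b c
    have hpl : p.length = n + 1 := by rw [hp, h]
    have h1 : T.dist b (p.getVert n) = n := by
      have := geodesic_getVert hT.isConnected p hp (show 0 ≤ n by omega) (by omega)
      simpa using this
    have h2 : T.dist (p.getVert n) c = 1 := by
      have := geodesic_getVert hT.isConnected p hp (show n ≤ n+1 by omega) (by omega)
      rw [show p.getVert (n+1) = c by rw [← hpl]; exact p.getVert_length] at this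
      simpa using this
    have hadj : T.Adj (p.getVert n) c := dist_eq_one_iff_adj.mp h2
    have h3 := ih (p.getVert n) h1
    rcases adj_step hT hadj a with h4 | h4 <;> omega

lemma no_local_max (hT : T.IsTree) {a x y z : V} (hxy : T.Adj x y) (hyz : T.Adj y z)
    (hxz : x ≠ z) (h1 : T.dist a y = T.dist a x + 1) (h2 : T.dist a y = T.dist a z + 1) :
    False := by
  classical
  obtain ⟨P, hP, hPl⟩ := exists_geodesic_path hT a x
  obtain ⟨Q, hQ, hQl⟩ := exists_geodesic_path hT a z
  have hyP : y ∉ P.support := by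
    intro hy
    have hs := dist_split hT P hPl hy
    have : T.dist y x = 1 := dist_eq_one_iff_adj.mpr hxy.symm
    omega
  have hyQ : y ∉ Q.support := by
    intro hy
    have hs := dist_split hT Q hQl hy
    have : T.dist y z = 1 := dist_eq_one_iff_adj.mpr hyz
    omega
  have hR1 : (P.concat hxy).IsPath := by
    rw [← Walk.isPath_reverse_iff, Walk.reverse_concat]
    exact Walk.IsPath.cons ((Walk.isPath_reverse_iff P).mpr hP)
      (by rwa [Walk.support_reverse, List.mem_reverse])
  have hR2 : (Q.concat hyz.symm).IsPath := by
    rw [← Walk.isPath_reverse_iff, Walk.reverse_concat]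
    exact Walk.IsPath.cons ((Walk.isPath_reverse_iff Q).mpr hQ)
      (by rwa [Walk.support_reverse, List.mem_reverse])
  have hEq := hT.IsAcyclic.path_unique ⟨P.concat hxy, hR1⟩ ⟨Q.concat hyz.symm, hR2⟩
  have hgv := congrArg (fun r : T.Path a y => (r : T.Walk a y).getVert (T.dist a x)) hEq
  simp only at hgv
  have e1 : (P.concat hxy).getVert (T.dist a x) = x := by
    rw [Walk.concat_eq_append, Walk.getVert_append]
    rw [if_neg (by omega : ¬ T.dist a x < P.length)]
    rw [hPl, Nat.sub_self]
    rfl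
  have e2 : (Q.concat hyz.symm).getVert (T.dist a x) = z := by
    rw [Walk.concat_eq_append, Walk.getVert_append]
    rw [if_neg (by omega : ¬ T.dist a x < Q.length)]
    rw [hQl, show T.dist a x - T.dist a z = 0 by omega]
    rfl
  rw [e1, e2] at hgv
  exact hxz hgv

lemma vshape (hT : T.IsTree) {u v : V} (p : T.Walk u v) (hp : p.length = T.dist u v) (a : V) :
    ∃ μ h0, μ ≤ p.length ∧ ∀ j, j ≤ p.length →
      T.dist a (p.getVert j) = h0 + (μ - j) + (j - μ) := by
  classical
  set n := p.length with hn
  set g : ℕ → ℕ := fun j => T.dist a (p.getVert j) with hg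
  obtain ⟨μ, hμmem, hμmin⟩ := Finset.exists_min_image (Finset.range (n+1)) g ⟨0, by simp⟩
  have hμn : μ ≤ n := by have := Finset.mem_range.mp hμmem; omega
  refine ⟨μ, g μ, hμn, ?_⟩
  have hstep : ∀ j, j < n → g (j+1) = g j + 1 ∨ g j = g (j+1) + 1 := fun j hj =>
    adj_step hT (p.adj_getVert_succ hj) a
  have hne2 : ∀ j, j + 2 ≤ n → p.getVert j ≠ p.getVert (j+2) := by
    intro j hj hEq
    have h2 := geodesic_getVert hT.isConnected p hp (show j ≤ j+2 by omega) hj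
    rw [hEq, SimpleGraph.dist_self] at h2
    omega
  have hlocal : ∀ j, 1 ≤ j → j + 1 ≤ n → g j = g (j-1) + 1 → g j = g (j+1) + 1 → False := by
    intro j hj1 hj2 e1 e2
    have hadj1 : T.Adj (p.getVert (j-1)) (p.getVert j) := by
      have := p.adj_getVert_succ (i := j-1) (by omega)
      rwa [show j - 1 + 1 = j by omega] at this
    have hadj2 := p.adj_getVert_succ (i := j) (by omega)
    have hne : p.getVert (j-1) ≠ p.getVert (j+1) := by
      have := hne2 (j-1) (by omega)
      rwa [show j-1+2 = j+1 by omega] at this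
    exact no_local_max hT hadj1 hadj2 hne e1 e2
  have hright : ∀ k, μ + k ≤ n → g (μ + k) = g μ + k := by
    intro k
    induction k using Nat.strong_induction_on with
    | _ k ih =>
      intro hk
      rcases k with _ | k
      · simp
      · have h1 := ih k (by omega) (by omega)
        rcases hstep (μ + k) (by omega) with h | h
        · rw [show μ + (k+1) = μ + k + 1 by omega, h, h1]
          omega
        · exfalso
          rcases Nat.eq_zero_or_pos k with rfl | hk0
          · have hm := hμmin (μ+1) (Finset.mem_range.mpr (by omega))
            simp only [Nat.add_zero] at h
            omega
          · have h0 := ih (k-1) (by omega) (by omega)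
            refine hlocal (μ + k) (by omega) (by omega) ?_ h
            rw [show μ + k - 1 = μ + (k-1) by omega, h0, h1]
            omega
  have hleft : ∀ k, k ≤ μ → g (μ - k) = g μ + k := by
    intro k
    induction k using Nat.strong_induction_on with
    | _ k ih =>
      intro hk
      rcases k with _ | k
      · simp
      · have h1 := ih k (by omega) (by omega)
        have hj : μ - (k+1) < n := by omega
        rcases hstep (μ - (k+1)) hj with h | h
        · exfalso
          rw [show μ - (k+1) + 1 = μ - k by omega] at h
          rcases Nat.eq_zero_or_pos k with rfl | hk0
          · have hm := hμmin (μ-1) (Finset.mem_range.mpr (by omega))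
            simp only [Nat.sub_zero] at h
            rw [show μ - (0+1) = μ - 1 by omega] at h
            omega
          · have h0 := ih (k-1) (by omega) (by omega)
            refine hlocal (μ - k) (by omega) (by omega) ?_ ?_
            · rw [show μ - k - 1 = μ - (k+1) by omega]
              omega
            · rw [show μ - k + 1 = μ - (k-1) by omega, h0, h1]
              omega
        · rw [show μ - (k+1) + 1 = μ - k by omega] at h
          rw [h, h1]
          omega
  intro j hj
  rcases le_or_gt μ j with hcase | hcase
  · have h2 := hright (j - μ) (by omega)
    rw [show μ + (j - μ) = j by omega] at h2
    show g j = g μ + (μ - j) + (j - μ)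
    omega
  · have h2 := hleft (μ - j) (by omega)
    rw [show μ - (μ - j) = j by omega] at h2
    show g j = g μ + (μ - j) + (j - μ)
    omega

end Tree

section Main

variable [Fintype V] {T : SimpleGraph V} {c : Fin 2 × V → Fin 3}

/-- Rainbow-free hypothesis, center version. -/
lemma NR3 (NR : ∀ x y z, dd T x y = dd T y z → c x ≠ c y → c y ≠ c z → c x = c z)
    {x y z : Fin 2 × V} (h : dd T x y = dd T y z) (h1 : c x ≠ c z) :
    c y = c x ∨ c y = c z := by
  by_contra h2
  push_neg at h2
  exact h1 (NR x y z h (Ne.symm h2.1) h2.2)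

/-- Rainbow-free hypothesis, arm version. -/
lemma NR3' (NR : ∀ x y z, dd T x y = dd T y z → c x ≠ c y → c y ≠ c z → c x = c z)
    {x y z : Fin 2 × V} (h : dd T x y = dd T y z) (h1 : c y ≠ c z) :
    c x = c y ∨ c x = c z := by
  by_contra h2
  push_neg at h2
  exact h2.2 (NR x y z h h2.1 h1)

lemma exists_min_pair (a b : Fin 3) (ha : ∃ x, c x = a) (hb : ∃ y, c y = b) :
    ∃ x y, c x = a ∧ c y = b ∧
      ∀ x' y', c x' = a → c y' = b → dd T x y ≤ dd T x' y' := by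
  classical
  obtain ⟨x0, hx0⟩ := ha
  obtain ⟨y0, hy0⟩ := hb
  obtain ⟨z, hz, hzmin⟩ := Finset.exists_min_image
    (Finset.univ.filter (fun z : (Fin 2 × V) × (Fin 2 × V) => c z.1 = a ∧ c z.2 = b))
    (fun z => dd T z.1 z.2)
    ⟨(x0, y0), by simp [hx0, hy0]⟩
  simp only [Finset.mem_filter, Finset.mem_univ, true_and] at hz
  refine ⟨z.1, z.2, hz.1, hz.2, fun x' y' hx' hy' => ?_⟩
  exact hzmin (x', y') (by simp [hx', hy'])

lemma dd_eq_zero (hT : T.IsTree) {x y : Fin 2 × V} (h : dd T x y = 0) : x = y := by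
  obtain ⟨i, u⟩ := x
  obtain ⟨j, v⟩ := y
  rw [dd_mk] at h
  have h1 : L i j = 0 := by omega
  have h2 : T.dist u v = 0 := by omega
  have hij : i = j := by by_contra hne; simp [L, hne] at h1
  have huv : u = v := (hT.isConnected.dist_eq_zero_iff).mp h2
  rw [hij, huv]

lemma exists_midpoint (hT : T.IsTree) {x y : Fin 2 × V} {m : ℕ} (hm : 1 ≤ m)
    (h : dd T x y = 2*m) : ∃ z, dd T x z = m ∧ dd T z y = m := by
  obtain ⟨i, u⟩ := x
  obtain ⟨j, v⟩ := y
  obtain ⟨p, hp⟩ := hT.isConnected.exists_walk_length_eq_dist u v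
  rw [dd_mk] at h
  rcases eq_or_ne i j with rfl | hij
  · rw [L_self] at h
    have hpl : p.length = 2*m := by omega
    have h1 : T.dist u (p.getVert m) = m := by
      have := geodesic_getVert hT.isConnected p hp (show 0 ≤ m by omega) (by omega)
      simpa using this
    have h2 : T.dist (p.getVert m) v = m := by
      have := geodesic_getVert hT.isConnected p hp (show m ≤ 2*m by omega) (by omega)
      rw [show p.getVert (2*m) = v by rw [← hpl]; exact p.getVert_length] at this
      rw [this]
      omega
    exact ⟨(i, p.getVert m), by rw [dd_mk, L_self, h1]; omega, by rw [dd_mk, L_self, h2]; omega⟩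
  · have hL : L i j = 1 := by simp [L, hij]
    rw [hL] at h
    have hpl : p.length = 2*m - 1 := by omega
    have h1 : T.dist u (p.getVert m) = m := by
      have := geodesic_getVert hT.isConnected p hp (show 0 ≤ m by omega) (by omega)
      simpa using this
    have h2 : T.dist (p.getVert m) v = m - 1 := by
      have := geodesic_getVert hT.isConnected p hp (show m ≤ 2*m-1 by omega) (by omega)
      rw [show p.getVert (2*m-1) = v by rw [← hpl]; exact p.getVert_length] at this
      rw [this]
      omega
    refine ⟨(i, p.getVert m), by rw [dd_mk, L_self, h1]; omega, ?_⟩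
    rw [dd_mk, hL, h2]
    omega

lemma min_odd (hT : T.IsTree)
    (NR : ∀ x y z, dd T x y = dd T y z → c x ≠ c y → c y ≠ c z → c x = c z)
    {a b : Fin 3} {x y : Fin 2 × V} (hab : a ≠ b) (hx : c x = a) (hy : c y = b)
    (hmin : ∀ x' y', c x' = a → c y' = b → dd T x y ≤ dd T x' y') :
    dd T x y % 2 = 1 := by
  by_contra hodd
  have hne : dd T x y ≠ 0 := by
    intro h0
    exact hab (hx ▸ hy ▸ congrArg c (dd_eq_zero hT h0))
  set m := dd T x y / 2 with hmdef
  have hm : dd T x y = 2*m := by omega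
  have hm1 : 1 ≤ m := by omega
  obtain ⟨z, hz1, hz2⟩ := exists_midpoint hT hm1 hm
  have hcz := NR3 NR (hz1.trans hz2.symm) (by rw [hx, hy]; exact hab)
  rcases hcz with h | h
  · have := hmin z y (h.trans hx) hy
    omega
  · have := hmin x z hx (h.trans hy)
    omega

/-- Same-layer minimal pair at distance ≥ 3 is impossible. -/
lemma SL (hT : T.IsTree)
    (NR : ∀ x y z, dd T x y = dd T y z → c x ≠ c y → c y ≠ c z → c x = c z)
    {a b : Fin 3} {i : Fin 2} {u v : V} (hab : a ≠ b)
    (hx : c (i,u) = a) (hy : c (i,v) = b)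
    (hmin : ∀ x' y', c x' = a → c y' = b → dd T (i,u) (i,v) ≤ dd T x' y')
    (h3 : 3 ≤ dd T (i,u) (i,v)) : False := by
  have hdt : T.dist u v = dd T (i,u) (i,v) := by rw [dd_mk, L_self]; omega
  set δ := dd T (i,u) (i,v) with hδdef
  obtain ⟨p, hp⟩ := hT.isConnected.exists_walk_length_eq_dist u v
  have hpl : p.length = δ := by omega
  have hgv : ∀ j1 j2, j1 ≤ j2 → j2 ≤ δ → T.dist (p.getVert j1) (p.getVert j2) = j2 - j1 := by
    intro j1 j2 hj hj2
    exact geodesic_getVert hT.isConnected p hp hj (by omega)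
  have hd1 : T.dist u (p.getVert (δ-1)) = δ-1 := by
    have := hgv 0 (δ-1) (by omega) (by omega); simpa using this
  have hd2 : T.dist (p.getVert (δ-1)) v = 1 := by
    have := hgv (δ-1) δ (by omega) (by omega)
    rw [show p.getVert δ = v by rw [← hpl]; exact p.getVert_length] at this
    omega
  have hd3 : T.dist u (p.getVert 1) = 1 := by
    have := hgv 0 1 (by omega) (by omega); simpa using this
  have hd4 : T.dist (p.getVert 1) v = δ-1 := by
    have := hgv 1 δ (by omega) (by omega)
    rw [show p.getVert δ = v by rw [← hpl]; exact p.getVert_length] at this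
    omega
  have hd5 : T.dist (p.getVert 1) (p.getVert (δ-1)) = δ-2 := by
    have := hgv 1 (δ-1) (by omega) (by omega); omega
  -- r := (fl i, getVert (δ-1))
  have hr1 : dd T (fl i, p.getVert (δ-1)) (i,u) = δ := by
    rw [dd_mk, L_fl', SimpleGraph.dist_comm, hd1]; omega
  have hcr := NR3' NR (x := (fl i, p.getVert (δ-1))) (y := (i,u)) (z := (i,v))
    (by rw [hr1]) (by rw [hx, hy]; exact hab)
  have hcrb : c (fl i, p.getVert (δ-1)) = b := by
    rcases hcr with h | h
    · exfalso
      have := hmin (fl i, p.getVert (δ-1)) (i,v) (h.trans hx) hy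
      rw [dd_mk, L_fl', hd2] at this
      omega
    · exact h.trans hy
  -- r' := (fl i, getVert 1)
  have hr2 : dd T (fl i, p.getVert 1) (i,v) = δ := by
    rw [dd_mk, L_fl', hd4]; omega
  have hcr' := NR3' NR (x := (fl i, p.getVert 1)) (y := (i,v)) (z := (i,u))
    (by rw [hr2, dd_comm]) (by rw [hx, hy]; exact hab.symm)
  have hcra : c (fl i, p.getVert 1) = a := by
    rcases hcr' with h | h
    · exfalso
      have := hmin (i,u) (fl i, p.getVert 1) hx (h.trans hy)
      rw [dd_mk, L_fl, hd3] at this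
      omega
    · exact h.trans hx
  have := hmin (fl i, p.getVert 1) (fl i, p.getVert (δ-1)) hcra hcrb
  rw [dd_mk, L_self, hd5] at this
  omega

/-- Cross-layer minimal pair: no vertex at tree-distance `δ` from `u`. -/
lemma CROSS_noext (hT : T.IsTree)
    (NR : ∀ x y z, dd T x y = dd T y z → c x ≠ c y → c y ≠ c z → c x = c z)
    {a b : Fin 3} {i j : Fin 2} {u v : V} (hij : i ≠ j) (hab : a ≠ b)
    (hx : c (i,u) = a) (hy : c (j,v) = b)
    (hmin : ∀ x' y', c x' = a → c y' = b → dd T (i,u) (j,v) ≤ dd T x' y')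
    (h3 : 3 ≤ dd T (i,u) (j,v)) (w : V) : T.dist u w ≠ dd T (i,u) (j,v) := by
  set δ := dd T (i,u) (j,v) with hδdef
  have hLij : L i j = 1 := by simp [L, hij]
  have hdt : T.dist u v = δ - 1 := by
    rw [hδdef, dd_mk, hLij]; omega
  intro hw
  have hr1 : dd T (i,w) (i,u) = δ := by
    rw [dd_mk, L_self, SimpleGraph.dist_comm, hw]; omega
  rcases NR3' NR (x := (i,w)) (y := (i,u)) (z := (j,v)) (by rw [hr1])
      (by rw [hx, hy]; exact hab) with hA | hB
  case inr =>
    -- c (i,w) = b : same-layer minimal pair, contradiction via SL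
    have hval : dd T (i,u) (i,w) = δ := by rw [dd_mk, L_self, hw]; omega
    refine SL hT NR hab hx (hB.trans hy) (fun x' y' hx' hy' => ?_) (by omega)
    rw [hval]; exact hmin x' y' hx' hy'
  case inl =>
    have hA' : c (i,w) = a := hA.trans hx
    set J := T.dist w v with hJdef
    have hpar := parity3 hT u w v
    have hJ0 : J ≠ 0 := by
      intro h0
      have : w = v := (hT.isConnected.dist_eq_zero_iff).mp h0
      rw [this] at hw
      omega
    have hJodd : J % 2 = 1 := by
      rw [hw, hdt] at hpar
      omega
    have hrv : dd T (i,w) (j,v) = 1 + J := by rw [dd_mk, hLij]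
    set m := (1 + J) / 2 with hmdef
    have hm2 : 1 + J = 2 * m := by omega
    obtain ⟨z, hz1, hz2⟩ := exists_midpoint hT (show 1 ≤ m by omega) (by rw [hrv]; omega)
    have hJub : J ≤ 2*δ - 1 := by
      have htr := hT.isConnected.dist_triangle (u := w) (v := u) (w := v)
      rw [SimpleGraph.dist_comm] at hw
      omega
    have hmδ : δ ≤ m := by
      rcases NR3 NR (y := z) (hz1.trans hz2.symm) (by rw [hA', hy]; exact hab) with h | h
      · have := hmin z (j,v) (h.trans hA') hy
        omega
      · have := hmin (i,w) z hA' (h.trans hy)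
        omega
    have hJval : J = 2*δ - 1 := by omega
    -- b₁ on geodesic w → u at distance δ-1 from w
    have hwu : T.dist w u = δ := by rwa [SimpleGraph.dist_comm] at hw
    obtain ⟨q, hq⟩ := hT.isConnected.exists_walk_length_eq_dist w u
    have hql : q.length = δ := by omega
    have hb1 : T.dist w (q.getVert (δ-1)) = δ-1 := by
      have := geodesic_getVert hT.isConnected q hq (show 0 ≤ δ-1 by omega) (by omega)
      simpa using this
    have hb2 : T.dist (q.getVert (δ-1)) u = 1 := by
      have := geodesic_getVert hT.isConnected q hq (show δ-1 ≤ δ by omega) (by omega)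
      rw [show q.getVert δ = u by rw [← hql]; exact q.getVert_length] at this
      omega
    have hb3 : T.dist (q.getVert (δ-1)) v = δ := by
      have htr1 := hT.isConnected.dist_triangle (u := q.getVert (δ-1)) (v := u) (w := v)
      have htr2 := hT.isConnected.dist_triangle (u := w) (v := q.getVert (δ-1)) (w := v)
      omega
    have hm1 : dd T (i,w) (j, q.getVert (δ-1)) = δ := by
      rw [dd_mk, hLij, hb1]; omega
    have hm2' : dd T (j, q.getVert (δ-1)) (j,v) = δ := by
      rw [dd_mk, L_self, hb3]; omega
    rcases NR3 NR (x := (i,w)) (y := (j, q.getVert (δ-1))) (z := (j,v))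
        (by rw [hm1, hm2']) (by rw [hA', hy]; exact hab) with h | h
    · -- c m' = a : same-layer minimal pair (m', (j,v))
      refine SL hT NR hab (h.trans hA') hy (fun x' y' hx' hy' => ?_) (by omega)
      rw [hm2']; exact hmin x' y' hx' hy'
    · -- c m' = b
      have := hmin (i,u) (j, q.getVert (δ-1)) hx (h.trans hy)
      rw [dd_mk, hLij, SimpleGraph.dist_comm, hb2] at this
      omega

/-- Cross-layer minimal pair at distance ≥ 3 is impossible (odd diameter). -/
lemma CROSS (hT : T.IsTree)
    (NR : ∀ x y z, dd T x y = dd T y z → c x ≠ c y → c y ≠ c z → c x = c z)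
    (hodd : Odd T.diam)
    {a b : Fin 3} {i j : Fin 2} {u v : V} (hij : i ≠ j) (hab : a ≠ b)
    (hx : c (i,u) = a) (hy : c (j,v) = b)
    (hmin : ∀ x' y', c x' = a → c y' = b → dd T (i,u) (j,v) ≤ dd T x' y')
    (h3 : 3 ≤ dd T (i,u) (j,v)) : False := by
  set δ := dd T (i,u) (j,v) with hδdef
  have hLij : L i j = 1 := by simp [L, hij]
  have hdt : T.dist u v = δ - 1 := by rw [hδdef, dd_mk, hLij]; omega
  have hmin' : ∀ x' y', c x' = b → c y' = a → dd T (j,v) (i,u) ≤ dd T x' y' := by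
    intro x' y' hx' hy'
    rw [dd_comm (j,v) (i,u), dd_comm x' y']
    exact hmin y' x' hy' hx'
  have h3' : 3 ≤ dd T (j,v) (i,u) := by rw [dd_comm]; omega
  have hnoe1 := CROSS_noext hT NR hij hab hx hy hmin h3
  have hnoe2 : ∀ w, T.dist v w ≠ δ := by
    intro w
    have := CROSS_noext hT NR hij.symm hab.symm hy hx hmin' h3' w
    rwa [dd_comm] at this
  have hecc1 : ∀ w, T.dist u w ≤ δ - 1 := by
    intro w
    by_contra hgt
    push_neg at hgt
    obtain ⟨q, hq⟩ := hT.isConnected.exists_walk_length_eq_dist u w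
    have := geodesic_getVert hT.isConnected q hq (show 0 ≤ δ by omega) (by omega)
    rw [q.getVert_zero] at this
    exact hnoe1 _ this
  have hecc2 : ∀ w, T.dist v w ≤ δ - 1 := by
    intro w
    by_contra hgt
    push_neg at hgt
    obtain ⟨q, hq⟩ := hT.isConnected.exists_walk_length_eq_dist v w
    have := geodesic_getVert hT.isConnected q hq (show 0 ≤ δ by omega) (by omega)
    rw [q.getVert_zero] at this
    exact hnoe2 _ this
  have hD0 : T.diam ≠ 0 := by
    rcases hodd with ⟨k, hk⟩; omega
  have hDub : ∀ x y : V, T.dist x y ≤ T.diam := fun x y =>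
    SimpleGraph.dist_le_diam (SimpleGraph.ediam_ne_top_of_diam_ne_zero hD0)
  haveI := hT.isConnected.nonempty
  obtain ⟨as, bs, habs⟩ := SimpleGraph.exists_dist_eq_diam (G := T)
  have hδodd : δ % 2 = 1 := min_odd hT NR hab hx hy hmin
  have hDodd : T.diam % 2 = 1 := Nat.odd_iff.mp hodd
  have hDge : δ ≤ T.diam := by
    have := hDub u v
    omega
  obtain ⟨W, hW⟩ := hT.isConnected.exists_walk_length_eq_dist as bs
  have hWD : W.length = T.diam := by rw [hW, habs]
  obtain ⟨μ0, h0, hμ0, hvs0⟩ := vshape hT W hW u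
  obtain ⟨μ1, h1, hμ1, hvs1⟩ := vshape hT W hW v
  have e1 := hvs0 0 (by omega)
  rw [W.getVert_zero] at e1
  have e2 := hvs0 W.length le_rfl
  rw [W.getVert_length] at e2
  have e3 := hvs1 0 (by omega)
  rw [W.getVert_zero] at e3
  have e4 := hvs1 W.length le_rfl
  rw [W.getVert_length] at e4
  have e5 := hvs0 μ1 hμ1
  have e6 := hvs1 μ1 hμ1
  have tri := hT.isConnected.dist_triangle (u := u) (v := W.getVert μ1) (w := v)
  have b1 := hecc1 as
  have b2 := hecc1 bs
  have b3 := hecc2 as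
  have b4 := hecc2 bs
  have e6' : T.dist (W.getVert μ1) v = h1 := by
    rw [SimpleGraph.dist_comm]
    rw [e6]; omega
  rw [hWD] at hμ0 hμ1 e2 e4
  omega

lemma ALLMIN1 (hT : T.IsTree)
    (NR : ∀ x y z, dd T x y = dd T y z → c x ≠ c y → c y ≠ c z → c x = c z)
    (hodd : Odd T.diam)
    {a b : Fin 3} (hab : a ≠ b) (ha : ∃ x, c x = a) (hb : ∃ y, c y = b) :
    ∃ x y, c x = a ∧ c y = b ∧ dd T x y = 1 ∧
      (∀ x' y', c x' = a → c y' = b → dd T x y ≤ dd T x' y') := by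
  obtain ⟨x, y, hx, hy, hmin⟩ := exists_min_pair a b ha hb
  refine ⟨x, y, hx, hy, ?_, hmin⟩
  have hoddm := min_odd hT NR hab hx hy hmin
  by_contra hne
  have h3 : 3 ≤ dd T x y := by omega
  obtain ⟨i, u⟩ := x
  obtain ⟨j, v⟩ := y
  rcases eq_or_ne i j with rfl | hij
  · exact SL hT NR hab hx hy hmin h3
  · exact CROSS hT NR hodd hij hab hx hy hmin h3

lemma mirror_exists (hT : T.IsTree)
    (NR : ∀ x y z, dd T x y = dd T y z → c x ≠ c y → c y ≠ c z → c x = c z)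
    (hodd : Odd T.diam)
    {a b e : Fin 3} (hab : a ≠ b) (hae : a ≠ e) (hbe : b ≠ e)
    (ha : ∃ x, c x = a) (hb : ∃ y, c y = b) (he : ∃ o, c o = e) :
    ∃ (K : V) (l : Fin 2), c (l, K) = a ∧ c (fl l, K) = b := by
  obtain ⟨x, y, hx, hy, h1, hmin⟩ := ALLMIN1 hT NR hodd hab ha hb
  obtain ⟨i, u⟩ := x
  obtain ⟨j, v⟩ := y
  rcases eq_or_ne i j with rfl | hij
  · -- same layer
    have hduv : T.dist u v = 1 := by rw [dd_mk, L_self] at h1; omega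
    have hadj : T.Adj u v := dist_eq_one_iff_adj.mp hduv
    have hx'1 : dd T (fl i, u) (i, u) = 1 := by
      rw [dd_mk, L_fl', SimpleGraph.dist_self]
    rcases NR3' NR (x := (fl i, u)) (y := (i,u)) (z := (i,v))
        (by rw [hx'1, h1]) (by rw [hx, hy]; exact hab) with hA | hB
    case inr => exact ⟨u, i, hx, hB.trans hy⟩
    case inl =>
      have hA' : c (fl i, u) = a := hA.trans hx
      have hy'1 : dd T (fl i, v) (i, v) = 1 := by
        rw [dd_mk, L_fl', SimpleGraph.dist_self]
      rcases NR3' NR (x := (fl i, v)) (y := (i,v)) (z := (i,u))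
          (by rw [hy'1, dd_comm, h1]) (by rw [hx, hy]; exact hab.symm) with hC | hD
      case inr =>
        refine ⟨v, fl i, hD.trans hx, ?_⟩
        rw [fl_fl]
        exact hy
      case inl =>
        exfalso
        have hC' : c (fl i, v) = b := hC.trans hy
        obtain ⟨⟨k, g⟩, ho⟩ := he
        have hcolu : ∀ l', c (l', u) = a := by
          intro l'
          rcases fin2_cases l' i with rfl | rfl
          · exact hx
          · exact hA'
        have hcolv : ∀ l', c (l', v) = b := by
          intro l'
          rcases fin2_cases l' i with rfl | rfl
          · exact hy
          · exact hC'
        rcases adj_step hT hadj g with hs | hs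
        · -- dist g v = dist g u + 1
          have hdd1 : dd T (fl k, u) (k, g) = 1 + T.dist g u := by
            rw [dd_mk, L_fl', SimpleGraph.dist_comm]
          have hdd2 : dd T (k, g) (k, v) = T.dist g v := by
            rw [dd_mk, L_self]; omega
          have := NR (fl k, u) (k, g) (k, v)
            (by rw [hdd1, hdd2]; omega)
            (by rw [hcolu, ho]; exact hae)
            (by rw [hcolv, ho]; exact hbe.symm)
          rw [hcolu, hcolv] at this
          exact hab this
        · -- dist g u = dist g v + 1
          have hdd1 : dd T (k, u) (k, g) = T.dist g u := by
            rw [dd_mk, L_self, SimpleGraph.dist_comm]; omega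
          have hdd2 : dd T (k, g) (fl k, v) = 1 + T.dist g v := by
            rw [dd_mk, L_fl]
          have := NR (k, u) (k, g) (fl k, v)
            (by rw [hdd1, hdd2]; omega)
            (by rw [hcolu, ho]; exact hae)
            (by rw [hcolv, ho]; exact hbe.symm)
          rw [hcolu, hcolv] at this
          exact hab this
  · -- cross layer : columns coincide
    have hL : L i j = 1 := by simp [L, hij]
    have hduv : T.dist u v = 0 := by rw [dd_mk, hL] at h1; omega
    have huv : u = v := (hT.isConnected.dist_eq_zero_iff).mp hduv
    have hj : j = fl i := eq_fl_of_ne hij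
    refine ⟨u, i, hx, ?_⟩
    rw [← hj, huv]
    exact hy

lemma mirror_nbr
    (NR : ∀ x y z, dd T x y = dd T y z → c x ≠ c y → c y ≠ c z → c x = c z)
    {K N : V} {l : Fin 2} {a b : Fin 3} (hK : c (l,K) = a) (hK2 : c (fl l,K) = b)
    (hab : a ≠ b) (hadj : T.Adj K N) (l' : Fin 2) : c (l', N) = a ∨ c (l', N) = b := by
  have hd : T.dist N K = 1 := by
    rw [SimpleGraph.dist_comm]; exact dist_eq_one_iff_adj.mpr hadj
  have h1 : dd T (l',N) (l',K) = 1 := by rw [dd_mk, L_self, hd]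
  have h2 : dd T (l',K) (fl l', K) = 1 := by
    rw [dd_mk, L_fl, SimpleGraph.dist_self]
  have hcc : c (l',K) ≠ c (fl l',K) := by
    rcases fin2_cases l' l with rfl | rfl
    · rw [hK, hK2]; exact hab
    · rw [fl_fl, hK2, hK]; exact hab.symm
  rcases NR3' NR (h1.trans h2.symm) hcc with h | h
  · rcases fin2_cases l' l with rfl | rfl
    · left; exact h.trans hK
    · right; exact h.trans hK2
  · rcases fin2_cases l' l with rfl | rfl
    · right; exact h.trans hK2
    · left
      rw [fl_fl] at h
      exact h.trans hK

lemma fl_zero : fl (0 : Fin 2) = 1 := rfl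
lemma fl_one : fl (1 : Fin 2) = 0 := rfl

lemma col_cases {K : V} {l : Fin 2} {a b : Fin 3} (h1 : c (l,K) = a) (h2 : c (fl l, K) = b)
    (l' : Fin 2) : c (l', K) = a ∨ c (l', K) = b := by
  rcases fin2_cases l' l with rfl | rfl
  · exact Or.inl h1
  · exact Or.inr h2

lemma partII (hT : T.IsTree)
    (NR : ∀ x y z, dd T x y = dd T y z → c x ≠ c y → c y ≠ c z → c x = c z)
    (hodd : Odd T.diam)
    (hc0 : ∃ x, c x = 0) (hc1 : ∃ x, c x = 1) (hc2 : ∃ x, c x = 2) : False := by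
  classical
  obtain ⟨K1, l1, hK1a, hK1b⟩ := mirror_exists hT NR hodd
    (show (0:Fin 3) ≠ 1 by decide) (show (0:Fin 3) ≠ 2 by decide)
    (show (1:Fin 3) ≠ 2 by decide) hc0 hc1 hc2
  obtain ⟨K3, l3, hK3a, hK3b⟩ := mirror_exists hT NR hodd
    (show (1:Fin 3) ≠ 2 by decide) (show (1:Fin 3) ≠ 0 by decide)
    (show (2:Fin 3) ≠ 0 by decide) hc1 hc2 hc0
  have mix_of : ∀ {K : V} {l : Fin 2} {a b : Fin 3}, c (l,K) = a → c (fl l,K) = b → a ≠ b →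
      c (0,K) ≠ c (1,K) := by
    intro K l a b h1 h2 hab
    rcases fin2_cases l 0 with rfl | rfl
    · rw [fl_zero] at h2
      rw [h1, h2]
      exact hab
    · rw [fl_fl] at h2
      rw [fl_zero] at h1
      rw [h2, h1]
      exact hab.symm
  have hmixK1 : c (0, K1) ≠ c (1, K1) := mix_of hK1a hK1b (by decide)
  have hmixK3 : c (0, K3) ≠ c (1, K3) := mix_of hK3a hK3b (by decide)
  -- the pair (K3, K1) is differently typed: color 2 of K3 is not in K1
  have hTDex : ∃ l, ∀ l', c (l, K3) ≠ c (l', K1) := by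
    refine ⟨fl l3, fun l' => ?_⟩
    rw [hK3b]
    rcases col_cases hK1a hK1b l' with h | h <;> rw [h] <;> decide
  obtain ⟨z, hzmem, hzmin⟩ := Finset.exists_min_image
    (Finset.univ.filter (fun z : V × V =>
      (c (0, z.1) ≠ c (1, z.1)) ∧ (c (0, z.2) ≠ c (1, z.2)) ∧
      ∃ l, ∀ l', c (l, z.1) ≠ c (l', z.2)))
    (fun z => T.dist z.1 z.2)
    ⟨(K3, K1), by simp only [Finset.mem_filter, Finset.mem_univ, true_and]; exact ⟨hmixK3, hmixK1, hTDex⟩⟩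
  simp only [Finset.mem_filter, Finset.mem_univ, true_and] at hzmem
  obtain ⟨A, B⟩ := z
  obtain ⟨mixA, mixB, lstar, hlstar⟩ := hzmem
  have hmin : ∀ K K' : V, (c (0,K) ≠ c (1,K)) → (c (0,K') ≠ c (1,K')) →
      (∃ l, ∀ l', c (l, K) ≠ c (l', K')) → T.dist A B ≤ T.dist K K' := by
    intro K K' m1 m2 m3
    exact hzmin (K, K') (by simp only [Finset.mem_filter, Finset.mem_univ, true_and]; exact ⟨m1, m2, m3⟩)
  -- common color e1 and the other colors
  have hcommon : ∃ x : Fin 3, (x = c (0,A) ∨ x = c (1,A)) ∧ (x = c (0,B) ∨ x = c (1,B)) := by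
    have fact : ∀ p q r s : Fin 3, p ≠ q → r ≠ s →
        ∃ x, (x = p ∨ x = q) ∧ (x = r ∨ x = s) := by decide
    exact fact _ _ _ _ mixA mixB
  obtain ⟨e1, hA1, hB1⟩ := hcommon
  have hαex : ∃ _α : Fin 2, c (_α, A) = e1 := by
    rcases hA1 with h | h
    · exact ⟨0, h.symm⟩
    · exact ⟨1, h.symm⟩
  obtain ⟨α, hα⟩ := hαex
  have hβ1ex : ∃ _β : Fin 2, c (_β, B) = e1 := by
    rcases hB1 with h | h
    · exact ⟨0, h.symm⟩
    · exact ⟨1, h.symm⟩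
  obtain ⟨β1, hβ1l⟩ := hβ1ex
  set e2 := c (fl α, A) with he2def
  set e0 := c (fl β1, B) with he0def
  set β := fl β1 with hβdef
  have hβ0 : c (β, B) = e0 := rfl
  have hβ1 : c (fl β, B) = e1 := by rw [hβdef, fl_fl]; exact hβ1l
  have hmixne : ∀ {K : V} (l : Fin 2), c (0,K) ≠ c (1,K) → c (l, K) ≠ c (fl l, K) := by
    intro K l hK
    rcases fin2_cases l 0 with rfl | rfl
    · rw [fl_zero]; exact hK
    · rw [fl_fl, fl_zero]; exact hK.symm
  have he12 : e1 ≠ e2 := by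
    rw [he2def, ← hα]
    exact hmixne α mixA
  have he10 : e1 ≠ e0 := by
    rw [he0def, ← hβ1l]
    exact hmixne β1 mixB
  have he02 : e0 ≠ e2 := by
    intro heq
    rcases col_cases hα (show c (fl α, A) = e2 from rfl) lstar with h | h
    · exact hlstar β1 (by rw [h, hβ1l])
    · exact hlstar β (by rw [h, hβ0, heq])
  have he01 : e0 ≠ e1 := he10.symm
  have he21 : e2 ≠ e1 := he12.symm
  set p := T.dist A B with hpdef
  -- p ≥ 2
  have hp2 : 2 ≤ p := by
    rcases Nat.lt_or_ge p 2 with hlt | hge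
    · exfalso
      interval_cases p
      · have hAB : A = B := (hT.isConnected.dist_eq_zero_iff).mp hpdef.symm
        subst hAB
        exact hlstar lstar rfl
      · have hadj : T.Adj A B := dist_eq_one_iff_adj.mp hpdef.symm
        rcases mirror_nbr NR hα (show c (fl α, A) = e2 from rfl) he12 hadj β with h | h
        · exact he01 (hβ0 ▸ h)
        · exact he02 (hβ0 ▸ h)
    · exact hge
  obtain ⟨W, hW⟩ := hT.isConnected.exists_walk_length_eq_dist A B
  have hWp : W.length = p := hW
  have hP0 : W.getVert 0 = A := W.getVert_zero
  have hPp : W.getVert p = B := by rw [← hWp]; exact W.getVert_length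
  have hPd : ∀ j1 j2, j1 ≤ j2 → j2 ≤ p → T.dist (W.getVert j1) (W.getVert j2) = j2 - j1 := by
    intro j1 j2 h12 h2
    exact geodesic_getVert hT.isConnected W hW h12 (by omega)
  have hdPA : ∀ j, j ≤ p → T.dist A (W.getVert j) = j := by
    intro j hj
    have := hPd 0 j (by omega) hj
    rw [hP0] at this
    omega
  have hdPB : ∀ j, j ≤ p → T.dist (W.getVert j) B = p - j := by
    intro j hj
    have := hPd j p hj le_rfl
    rw [hPp] at this
    exact this
  -- interior columns are pure
  have hnomix : ∀ j, 1 ≤ j → j ≤ p - 1 → ¬ (c (0, W.getVert j) ≠ c (1, W.getVert j)) := by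
    intro j hj1 hj2 hmix
    by_cases hcase : ∃ l, ∀ l', c (l, W.getVert j) ≠ c (l', A)
    · have hle := hmin (W.getVert j) A hmix mixA hcase
      have hdj : T.dist (W.getVert j) A = j := by
        rw [SimpleGraph.dist_comm]; exact hdPA j (by omega)
      omega
    · push_neg at hcase
      have hsub : ∀ l, c (l, W.getVert j) = e1 ∨ c (l, W.getVert j) = e2 := by
        intro l
        obtain ⟨l', hl'⟩ := hcase l
        rcases col_cases hα (show c (fl α, A) = e2 from rfl) l' with h | h
        · left; rw [hl', h]
        · right; rw [hl', h]
      have he2mem : ∃ l, c (l, W.getVert j) = e2 := by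
        rcases hsub 0 with h | h
        · rcases hsub 1 with h' | h'
          · exact absurd (h.trans h'.symm) hmix
          · exact ⟨1, h'⟩
        · exact ⟨0, h⟩
      obtain ⟨lx, hlx⟩ := he2mem
      have hTD : ∃ l, ∀ l', c (l, W.getVert j) ≠ c (l', B) := by
        refine ⟨lx, fun l' => ?_⟩
        rw [hlx]
        rcases col_cases hβ0 hβ1 l' with h | h <;> rw [h]
        · exact he02.symm
        · exact he21
      have hle := hmin (W.getVert j) B hmix mixB hTD
      have hdj := hdPB j (by omega)
      omega
  have hpure : ∀ j, 1 ≤ j → j ≤ p - 1 → ∀ l, c (l, W.getVert j) = c (0, W.getVert j) := by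
    intro j hj1 hj2 l
    have := hnomix j hj1 hj2
    push_neg at this
    rcases fin2_cases l 0 with rfl | rfl
    · rfl
    · rw [fl_zero, this]
  -- interior constancy
  have hchain : ∀ j, 1 ≤ j → j + 1 ≤ p - 1 → c (0, W.getVert j) = c (0, W.getVert (j+1)) := by
    intro j hj1 hj2
    by_contra hne
    have hdist : ∀ e' : Fin 3, e' ≠ c (0, W.getVert j) → e' ≠ c (0, W.getVert (j+1)) →
        (∃ lw Kw, c (lw, Kw) = e' ∧
          dd T (fl lw, Kw) (lw, Kw) = 1) → True := fun _ _ _ _ => trivial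
    have fact : ∀ x y p q r : Fin 3, x ≠ y → p ≠ q → p ≠ r → q ≠ r →
        (p ≠ x ∧ p ≠ y) ∨ (q ≠ x ∧ q ≠ y) ∨ (r ≠ x ∧ r ≠ y) := by decide
    rcases fact (c (0, W.getVert j)) (c (0, W.getVert (j+1))) e0 e1 e2 hne he01.symm.symm
        (by exact fun h => he02 h) he12 with ⟨hh1, hh2⟩ | ⟨hh1, hh2⟩ | ⟨hh1, hh2⟩
    · -- e0 case : use (β, B)
      have d1 : dd T (β, W.getVert j) (β, B) = p - j := by
        rw [dd_mk, L_self, hdPB j (by omega)]; omega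
      have d2 : dd T (β, B) (fl β, W.getVert (j+1)) = p - j := by
        rw [dd_mk, L_fl, SimpleGraph.dist_comm, hdPB (j+1) (by omega)]; omega
      have := NR (β, W.getVert j) (β, B) (fl β, W.getVert (j+1))
        (by rw [d1, d2])
        (by rw [hpure j hj1 (by omega) β, hβ0]; exact hh1.symm)
        (by rw [hβ0, hpure (j+1) (by omega) (by omega) (fl β)]; exact hh2)
      rw [hpure j hj1 (by omega) β, hpure (j+1) (by omega) (by omega) (fl β)] at this
      exact hne this
    · -- e1 case : use (α, A)
      have d1 : dd T (fl α, W.getVert j) (α, A) = 1 + j := by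
        rw [dd_mk, L_fl', SimpleGraph.dist_comm, hdPA j (by omega)]
      have d2 : dd T (α, A) (α, W.getVert (j+1)) = 1 + j := by
        rw [dd_mk, L_self, hdPA (j+1) (by omega)]; omega
      have := NR (fl α, W.getVert j) (α, A) (α, W.getVert (j+1))
        (by rw [d1, d2])
        (by rw [hpure j hj1 (by omega) (fl α), hα]; exact hh1.symm)
        (by rw [hα, hpure (j+1) (by omega) (by omega) α]; exact hh2)
      rw [hpure j hj1 (by omega) (fl α), hpure (j+1) (by omega) (by omega) α] at this
      exact hne this
    · -- e2 case : use (fl α, A)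
      have d1 : dd T (α, W.getVert j) (fl α, A) = 1 + j := by
        rw [dd_mk, L_fl, SimpleGraph.dist_comm, hdPA j (by omega)]
      have d2 : dd T (fl α, A) (fl α, W.getVert (j+1)) = 1 + j := by
        rw [dd_mk, L_self, hdPA (j+1) (by omega)]; omega
      have := NR (α, W.getVert j) (fl α, A) (fl α, W.getVert (j+1))
        (by rw [d1, d2])
        (by rw [hpure j hj1 (by omega) α]; exact hh1.symm)
        (by rw [hpure (j+1) (by omega) (by omega) (fl α)]; exact hh2)
      rw [hpure j hj1 (by omega) α, hpure (j+1) (by omega) (by omega) (fl α)] at this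
      exact hne this
  have hall1 : ∀ j, 1 ≤ j → j ≤ p - 1 → c (0, W.getVert j) = c (0, W.getVert 1) := by
    intro j
    induction j with
    | zero => omega
    | succ j ih =>
      intro hj1 hj2
      rcases Nat.eq_zero_or_pos j with rfl | hj0
      · rfl
      · exact (hchain j hj0 (by omega)).symm.trans (ih hj0 (by omega))
  -- endpoint memberships
  have hadjA : T.Adj A (W.getVert 1) := by
    have := W.adj_getVert_succ (i := 0) (by omega)
    rwa [hP0] at this
  have hadjB : T.Adj B (W.getVert (p-1)) := by
    have := W.adj_getVert_succ (i := p-1) (by omega)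
    rw [show p - 1 + 1 = p by omega, hPp] at this
    exact this.symm
  have hmem1 := mirror_nbr NR hα (show c (fl α, A) = e2 from rfl) he12 hadjA 0
  have hmem2 := mirror_nbr NR hβ0 hβ1 he01 hadjB 0
  have hχ1 : c (0, W.getVert 1) = e1 := by
    have heq := hall1 (p-1) (by omega) le_rfl
    rcases hmem1 with h | h
    · exact h
    · exfalso
      rw [heq] at hmem2
      rcases hmem2 with h' | h'
      · exact he02 (h'.symm.trans h)
      · exact he21 (h ▸ h')
  have hχ : ∀ j, 1 ≤ j → j ≤ p - 1 → ∀ l, c (l, W.getVert j) = e1 := by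
    intro j hj1 hj2 l
    rw [hpure j hj1 hj2 l, hall1 j hj1 hj2, hχ1]
  -- p is even
  have hpeven : p % 2 = 0 := by
    by_contra hpo
    have hpodd : p % 2 = 1 := by omega
    rcases fin2_cases β α with hβα | hβα
    · have hj1 : 1 ≤ (p-1)/2 := by omega
      have hj2 : (p-1)/2 ≤ p - 1 := by omega
      have d1 : dd T (β, B) (β, W.getVert ((p-1)/2)) = p - (p-1)/2 := by
        rw [dd_mk, L_self, SimpleGraph.dist_comm, hdPB _ (by omega)]; omega
      have d2 : dd T (β, W.getVert ((p-1)/2)) (fl α, A) = 1 + (p-1)/2 := by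
        rw [dd_mk, hβα, L_fl, SimpleGraph.dist_comm, hdPA _ (by omega)]
      have hcc := NR (β, B) (β, W.getVert ((p-1)/2)) (fl α, A)
        (by rw [d1, d2]; omega)
        (by rw [hβ0, hχ _ hj1 hj2 β]; exact he01)
        (by rw [hχ _ hj1 hj2 β]; exact he12)
      rw [hβ0] at hcc
      exact he02 hcc
    · have d1 : dd T (β, B) (fl α, A) = p := by
        rw [dd_mk, hβα, L_self, SimpleGraph.dist_comm, ← hpdef]; omega
      have d2 : dd T (fl α, A) (α, W.getVert (p-1)) = p := by
        rw [dd_mk, L_fl', hdPA _ (by omega)]; omega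
      have hcc := NR (β, B) (fl α, A) (α, W.getVert (p-1))
        (by rw [d1, d2])
        (by rw [hβ0]; exact he02)
        (by rw [hχ _ (by omega) le_rfl α]; exact he21)
      rw [hβ0, hχ _ (by omega) le_rfl α] at hcc
      exact he01 hcc
  -- β = α
  have hβα : β = α := by
    by_contra hne'
    have hβfl : β = fl α := by
      rcases fin2_cases β α with h | h
      · exact absurd h hne'
      · exact h
    have hj1 : 1 ≤ p/2 := by omega
    have hj2 : p/2 ≤ p - 1 := by omega
    have d1 : dd T (β, B) (β, W.getVert (p/2)) = p - p/2 := by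
      rw [dd_mk, L_self, SimpleGraph.dist_comm, hdPB _ (by omega)]; omega
    have d2 : dd T (β, W.getVert (p/2)) (fl α, A) = p/2 := by
      rw [dd_mk, hβfl, L_self, SimpleGraph.dist_comm, hdPA _ (by omega)]; omega
    have hcc := NR (β, B) (β, W.getVert (p/2)) (fl α, A)
      (by rw [d1, d2]; omega)
      (by rw [hβ0, hχ _ hj1 hj2 β]; exact he01)
      (by rw [hχ _ hj1 hj2 β]; exact he12)
    rw [hβ0] at hcc
    exact he02 hcc
  have hβ0' : c (α, B) = e0 := by rw [← hβα]
  have hβ1' : c (fl α, B) = e1 := by rw [← hβα]; exact hβ1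
  -- the third-type column C
  obtain ⟨C, γ, hγ0, hγ2⟩ := mirror_exists hT NR hodd he02 he01 he21
    ⟨(β,B), hβ0⟩ ⟨(fl α,A), rfl⟩ ⟨(α,A), hα⟩
  obtain ⟨μ, hC, hμW, hvsC⟩ := vshape hT W hW C
  rw [hWp] at hμW
  have hvs : ∀ j, j ≤ p → T.dist C (W.getVert j) = hC + (μ - j) + (j - μ) := by
    intro j hj
    exact hvsC j (by omega)
  have hCA : T.dist C A = hC + μ := by
    have h5 := hvs 0 (by omega)
    rw [hP0] at h5
    omega
  have hCB : T.dist C B = hC + (p - μ) := by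
    have h5 := hvs p le_rfl
    rw [hPp] at h5
    omega
  have hC1 : 1 ≤ hC := by
    by_contra h0'
    have hd0 : T.dist C (W.getVert μ) = 0 := by
      have h5 := hvs μ (by omega)
      omega
    have hCP := (hT.isConnected.dist_eq_zero_iff).mp hd0
    rcases Nat.eq_zero_or_pos μ with rfl | hμ1
    · rw [hP0] at hCP
      rcases col_cases hα (show c (fl α, A) = e2 from rfl) γ with h | h
      · rw [hCP, h] at hγ0
        exact he01 hγ0.symm
      · rw [hCP, h] at hγ0
        exact he02 hγ0.symm
    · rcases Nat.lt_or_ge μ p with hμp | hμp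
      · have := hχ μ hμ1 (by omega) γ
        rw [← hCP] at this
        rw [this] at hγ0
        exact he01 hγ0.symm
      · have hμeq : μ = p := by omega
        rw [hμeq, hPp] at hCP
        rcases col_cases hβ0 hβ1 (fl γ) with h | h
        · rw [hCP, h] at hγ2
          exact he02 hγ2
        · rw [hCP, h] at hγ2
          exact he21 hγ2.symm
  -- the kills
  rcases fin2_cases γ α with hγα | hγfl
  · -- γ = α
    have hγ2' : c (fl α, C) = e2 := by rw [← hγα]; exact hγ2
    have hγ0' : c (α, C) = e0 := by rw [← hγα]; exact hγ0
    rcases lt_trichotomy (2*μ) p with hlt | heq2 | hgt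
    · -- 2μ < p
      have hj2 : 2*μ+1 ≤ p - 1 := by omega
      have h5 := hvs (2*μ+1) (by omega)
      have d1 : dd T (fl α, A) (α, C) = 1 + (hC + μ) := by
        rw [dd_mk, L_fl', SimpleGraph.dist_comm, hCA]
      have d2 : dd T (α, C) (α, W.getVert (2*μ+1)) = 1 + (hC + μ) := by
        rw [dd_mk, L_self]; omega
      have hcc := NR (fl α, A) (α, C) (α, W.getVert (2*μ+1))
        (by rw [d1, d2])
        (by rw [hγ0']; exact he02.symm)
        (by rw [hγ0', hχ _ (by omega) hj2 α]; exact he01)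
      rw [hχ _ (by omega) hj2 α] at hcc
      exact he21 hcc
    · -- 2μ = p
      have d1 : dd T (fl α, A) (α, C) = 1 + (hC + μ) := by
        rw [dd_mk, L_fl', SimpleGraph.dist_comm, hCA]
      have d2 : dd T (α, C) (fl α, B) = 1 + (hC + (p - μ)) := by
        rw [dd_mk, L_fl, hCB]
      have hcc := NR (fl α, A) (α, C) (fl α, B)
        (by rw [d1, d2]; omega)
        (by rw [hγ0']; exact he02.symm)
        (by rw [hγ0', hβ1']; exact he01)
      rw [hβ1'] at hcc
      exact he21 hcc
    · -- 2μ > p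
      rcases Nat.lt_or_ge μ p with hμp | hμp
      · -- μ ≤ p-1 : j' = 2μ-p
        have hj1 : 1 ≤ 2*μ - p := by omega
        have hj2 : 2*μ - p ≤ p - 1 := by omega
        have h5 := hvs (2*μ - p) (by omega)
        have d1 : dd T (α, B) (fl α, C) = 1 + (hC + (p - μ)) := by
          rw [dd_mk, L_fl, SimpleGraph.dist_comm, hCB]
        have d2 : dd T (fl α, C) (α, W.getVert (2*μ - p)) = 1 + (hC + (p - μ)) := by
          rw [dd_mk, L_fl']; omega
        have hcc := NR (α, B) (fl α, C) (α, W.getVert (2*μ - p))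
          (by rw [d1, d2])
          (by rw [hβ0', hγ2']; exact he02)
          (by rw [hγ2', hχ _ hj1 hj2 α]; exact he21)
        rw [hβ0', hχ _ hj1 hj2 α] at hcc
        exact he01 hcc
      · -- μ = p
        have hμeq : μ = p := by omega
        have h5 := hvs (p-1) (by omega)
        have d1 : dd T (α, B) (fl α, C) = 1 + hC := by
          rw [dd_mk, L_fl, SimpleGraph.dist_comm, hCB, hμeq]
          omega
        have d2 : dd T (fl α, C) (fl α, W.getVert (p-1)) = 1 + hC := by
          rw [dd_mk, L_self]
          omega
        have hcc := NR (α, B) (fl α, C) (fl α, W.getVert (p-1))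
          (by rw [d1, d2])
          (by rw [hβ0', hγ2']; exact he02)
          (by rw [hγ2', hχ _ (by omega) le_rfl (fl α)]; exact he21)
        rw [hβ0', hχ _ (by omega) le_rfl (fl α)] at hcc
        exact he01 hcc
  · -- γ = fl α
    have hγ0' : c (fl α, C) = e0 := by rw [← hγfl]; exact hγ0
    have hγ2' : c (α, C) = e2 := by
      have := hγ2
      rw [hγfl, fl_fl] at this
      exact this
    rcases Nat.eq_zero_or_pos μ with hμ0 | hμ1
    · -- μ = 0
      have h5 := hvs (p-1) (by omega)
      have d1 : dd T (α, B) (α, C) = hC + p := by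
        rw [dd_mk, L_self, SimpleGraph.dist_comm, hCB, hμ0]
        omega
      have d2 : dd T (α, C) (fl α, W.getVert (p-1)) = hC + p := by
        rw [dd_mk, L_fl]
        omega
      have hcc := NR (α, B) (α, C) (fl α, W.getVert (p-1))
        (by rw [d1, d2])
        (by rw [hβ0', hγ2']; exact he02)
        (by rw [hγ2', hχ _ (by omega) le_rfl (fl α)]; exact he21)
      rw [hβ0', hχ _ (by omega) le_rfl (fl α)] at hcc
      exact he01 hcc
    · -- μ ≥ 1
      have h5 := hvs 1 (by omega)
      have d1 : dd T (α, W.getVert 1) (fl α, C) = hC + μ := by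
        rw [dd_mk, L_fl, SimpleGraph.dist_comm]
        omega
      have d2 : dd T (fl α, C) (fl α, A) = hC + μ := by
        rw [dd_mk, L_self, hCA]
        omega
      have hcc := NR (α, W.getVert 1) (fl α, C) (fl α, A)
        (by rw [d1, d2])
        (by rw [hχ _ (by omega) (by omega) α, hγ0']; exact he10)
        (by rw [hγ0']; exact he02)
      rw [hχ _ (by omega) (by omega) α] at hcc
      exact he12 hcc

end Main

end AwAux


open AwAux in
/-- If `T` is a tree with odd diameter, then `aw(P₂ □ T, 3) = 3`: every surjective
3-coloring of `P₂ □ T` contains a rainbow 3-term arithmetic progression, and some surjective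
2-coloring contains none. -/
theorem aw_P2_boxProd_tree {V : Type*} [Fintype V]
    (T : SimpleGraph V) (hT : T.IsTree) (hodd : Odd T.diam) :
    (∀ c : Fin 2 × V → Fin 3, Function.Surjective c →
      ∃ x y z : Fin 2 × V, (pathGraph 2 □ T).dist x y = (pathGraph 2 □ T).dist y z ∧
        c x ≠ c y ∧ c y ≠ c z ∧ c x ≠ c z) ∧
    (∃ c : Fin 2 × V → Fin 2, Function.Surjective c ∧
      ¬ ∃ x y z : Fin 2 × V, (pathGraph 2 □ T).dist x y = (pathGraph 2 □ T).dist y z ∧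
        c x ≠ c y ∧ c y ≠ c z ∧ c x ≠ c z) := by
  have hc := hT.isConnected
  constructor
  · intro c hsurj
    by_contra hno
    have NR : ∀ x y z : Fin 2 × V, dd T x y = dd T y z → c x ≠ c y → c y ≠ c z → c x = c z := by
      intro x y z hd h1 h2
      by_contra h3
      exact hno ⟨x, y, z, by rw [boxdist_eq hc, boxdist_eq hc]; exact hd, h1, h2, h3⟩
    exact (partII hT NR hodd (hsurj 0) (hsurj 1) (hsurj 2)).elim
  · haveI : Nonempty V := hc.nonempty
    refine ⟨fun x => x.1, fun i => ⟨(i, Classical.arbitrary V), rfl⟩, ?_⟩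
    rintro ⟨x, y, z, -, h1, h2, h3⟩
    have key : ∀ a b c : Fin 2, a ≠ b → b ≠ c → a ≠ c → False := by decide
    exact key _ _ _ h1 h2 h3
end

section
/- Let T and T' be nontrivial non-3-peripheral trees with diam(T □ T') even, and suppose v_{1,1} = (u₁,w₁) and v_{j,k} = (u_j,w_k) realize the diameter of T □ T', where T_{u₁⁻} and T'_{w₁⁻} are non-3-peripheral. Color a vertex x of T □ T' blue if d(x, v_{1,1}) = diam(T □ T') − 1, red if d(x, v_{j,k}) = diam(T □ T'), and green otherwise. Then this coloring is well-defined (no vertex satisfies both the red and blue conditions). -/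
open SimpleGraph

/-- In a tree, distances from a fixed vertex to two adjacent vertices differ. -/
private lemma tree_dist_ne_of_adj {V : Type*} {G : SimpleGraph V} (hG : G.IsTree)
    (r : V) {a b : V} (hab : G.Adj a b) : G.dist r a ≠ G.dist r b := by
  classical
  intro h
  obtain ⟨p', hp'⟩ := hG.isConnected.exists_walk_length_eq_dist r a
  obtain ⟨q', hq'⟩ := hG.isConnected.exists_walk_length_eq_dist r b
  set p := p'.bypass with hpdef
  have hp : p.IsPath := p'.bypass_isPath
  have hpl : p.length = G.dist r a :=
    le_antisymm (hp' ▸ p'.length_bypass_le) (G.dist_le _)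
  have hq : q'.bypass.IsPath := q'.bypass_isPath
  have hql : q'.bypass.length = G.dist r b :=
    le_antisymm (hq' ▸ q'.length_bypass_le) (G.dist_le _)
  by_cases hb : b ∈ p.support
  · have ht : (p.takeUntil b hb).IsPath := hp.takeUntil hb
    have heq := (hG.existsUnique_path r b).unique ht hq
    have hlen : (p.takeUntil b hb).length = G.dist r b := by rw [heq, hql]
    have hsplit : (p.takeUntil b hb).length + (p.dropUntil b hb).length = p.length := by
      rw [← Walk.length_append, p.take_spec hb]
    have h0 : (p.dropUntil b hb).length = 0 := by omega
    exact hab.ne' (Walk.eq_of_length_eq_zero h0)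
  · have hc : (Walk.cons hab.symm p.reverse).IsPath := by
      rw [Walk.cons_isPath_iff]
      exact ⟨hp.reverse, by rwa [Walk.support_reverse, List.mem_reverse]⟩
    have heq := (hG.existsUnique_path b r).unique hc hq.reverse
    have := congrArg Walk.length heq
    simp only [Walk.length_cons, Walk.length_reverse, hpl, hql] at this
    omega

/-- In a tree, distances from a fixed vertex to adjacent vertices differ by exactly one. -/
private lemma tree_dist_adj {V : Type*} {G : SimpleGraph V} (hG : G.IsTree)
    (r : V) {a b : V} (hab : G.Adj a b) :
    G.dist r b = G.dist r a + 1 ∨ G.dist r a = G.dist r b + 1 := by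
  have h1 : G.dist r b ≤ G.dist r a + 1 := by
    calc G.dist r b ≤ G.dist r a + G.dist a b := hG.isConnected.dist_triangle
    _ ≤ G.dist r a + 1 := by
        have h : G.dist a b ≤ 1 := by simpa using G.dist_le hab.toWalk
        omega
  have h2 : G.dist r a ≤ G.dist r b + 1 := by
    calc G.dist r a ≤ G.dist r b + G.dist b a := hG.isConnected.dist_triangle
    _ ≤ G.dist r b + 1 := by
        have h : G.dist b a ≤ 1 := by simpa using G.dist_le hab.symm.toWalk
        omega
  have := tree_dist_ne_of_adj hG r hab
  omega

section parity

variable {α β : Type*} {T : SimpleGraph α} {T' : SimpleGraph β}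

/-- Parity of a walk in the box product of two trees. -/
private lemma boxProd_walk_parity (hT : T.IsTree) (hT' : T'.IsTree) (u₁ : α) (w₁ : β) :
    ∀ {x y : α × β} (w : (T □ T').Walk x y),
      (T.dist u₁ x.1 + T'.dist w₁ x.2 + w.length) % 2
        = (T.dist u₁ y.1 + T'.dist w₁ y.2) % 2 := by
  intro x y w
  induction w with
  | nil => simp
  | @cons x z y h w ih =>
    rw [Walk.length_cons]
    rcases h with ⟨h1, h2⟩ | ⟨h1, h2⟩
    · have := tree_dist_adj hT u₁ h1
      rw [← h2] at ih
      omega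
    · have := tree_dist_adj hT' w₁ h1
      rw [← h2] at ih
      omega

private lemma boxProd_dist_parity (hT : T.IsTree) (hT' : T'.IsTree) (u₁ : α) (w₁ : β)
    (x y : α × β) :
    ((T □ T').dist x y) % 2
      = (T.dist u₁ x.1 + T'.dist w₁ x.2 + (T.dist u₁ y.1 + T'.dist w₁ y.2)) % 2 := by
  have hconn : (T □ T').Connected := hT.isConnected.boxProd hT'.isConnected
  obtain ⟨w, hw⟩ := hconn.exists_walk_length_eq_dist x y
  have := boxProd_walk_parity hT hT' u₁ w₁ w
  rw [hw] at this
  omega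

end parity

/-- Under the hypotheses of the rainbow-free coloring lemma (nontrivial non-3-peripheral
trees `T`, `T'` with `diam(T □ T')` even, `v₁₁ = (u₁,w₁)` and `v_{jk} = (u_j,w_k)` realizing
the diameter, and `T_{u₁⁻}`, `T'_{w₁⁻}` non-3-peripheral), no vertex satisfies both the
blue condition (distance `diam - 1` from `v₁₁`) and the red condition (distance `diam` from
`v_{jk}`); hence the red/blue/green coloring is well-defined. -/
theorem coloring_well_defined {α β : Type*} [Fintype α] [Fintype β]
    (T : SimpleGraph α) (T' : SimpleGraph β) (hT : T.IsTree) (hT' : T'.IsTree)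
    (hα : 2 ≤ Fintype.card α) (hβ : 2 ≤ Fintype.card β)
    (hnp : ¬ ThreePeripheral T) (hnp' : ¬ ThreePeripheral T')
    (heven : Even ((T □ T').diam))
    (u₁ uj : α) (w₁ wk : β)
    (hdiam : (T □ T').dist (u₁, w₁) (uj, wk) = (T □ T').diam)
    (hmin : ¬ ThreePeripheral (T.induce {x : α | T.dist u₁ x < T.diam}))
    (hmin' : ¬ ThreePeripheral (T'.induce {x : β | T'.dist w₁ x < T'.diam})) :
    ∀ x : α × β, ¬ ((T □ T').dist x (u₁, w₁) = (T □ T').diam - 1 ∧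
      (T □ T').dist x (uj, wk) = (T □ T').diam) := by
  have hconn : (T □ T').Connected := hT.isConnected.boxProd hT'.isConnected
  -- the diameter is positive
  have hnt : Nontrivial α := Fintype.one_lt_card_iff_nontrivial.mp hα
  obtain ⟨a, b, hab⟩ := hnt
  have _ : Nonempty (α × β) := hconn.nonempty
  have hentop : (T □ T').ediam ≠ ⊤ := by
    obtain ⟨u, v, huv⟩ := exists_edist_eq_ediam_of_finite (G := T □ T')
    rw [← huv]
    intro htop
    exact (hconn u v).elim fun w => by
      have := edist_le (G := T □ T') w
      rw [htop] at this
      simp at this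
  have hDpos : 0 < (T □ T').diam := by
    have h1 : 1 ≤ (T □ T').dist (a, w₁) (b, w₁) := by
      have hne : (a, w₁) ≠ (b, w₁) := fun h => hab (congrArg Prod.fst h)
      exact hconn.pos_dist_of_ne hne
    exact lt_of_lt_of_le h1 (dist_le_diam hentop)
  rintro x ⟨hx1, hx2⟩
  set D := (T □ T').diam with hD
  have p1 := boxProd_dist_parity hT hT' u₁ w₁ x (u₁, w₁)
  have p2 := boxProd_dist_parity hT hT' u₁ w₁ x (uj, wk)
  have p3 := boxProd_dist_parity hT hT' u₁ w₁ (u₁, w₁) (uj, wk)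
  rw [hx1] at p1
  rw [hx2] at p2
  rw [hdiam] at p3
  have hparity : D % 2 = 0 := Nat.even_iff.mp heven
  omega
end
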